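/- arXiv:1304.0032 — 11 statements merged into one kernel-verified Lean document; each statement's English description precedes it below -/
import Mathlib

section
/- If γ : [0, x₀) → ℝ is a C² solution of γ''/(1+(γ')²) = (x/2 - 1/x)·γ' - γ/2 on (0, x₀) with γ(0) = b > 0, γ'(0) = 0, and γ''(0) = -b/4, then γ''(x) < 0 for all x ∈ [0, x₀). -/
open Set Real Filter
open Topology

theorem stmt_0 (γ : ℝ → ℝ) (x₀ b : ℝ) (hb : 0 < b) (hx₀ : 0 < x₀)
    (hreg : ContDiffOn ℝ 2 γ (Ico 0 x₀))
    (hode : ∀ x ∈ Ioo 0 x₀,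
      deriv (deriv γ) x / (1 + (deriv γ x) ^ 2) = (x / 2 - 1 / x) * deriv γ x - γ x / 2)
    (h0 : γ 0 = b) (h0' : deriv γ 0 = 0) (h0'' : deriv (deriv γ) 0 = -b / 4) :
    ∀ x ∈ Ico 0 x₀, deriv (deriv γ) x < 0 := by
  set s := Ico (0:ℝ) x₀ with hs
  set T := Ioo (0:ℝ) x₀ with hT
  have hTs : T ⊆ s := Ioo_subset_Ico_self
  have hTopen : IsOpen T := isOpen_Ioo
  have hu : UniqueDiffOn ℝ s := uniqueDiffOn_Ico 0 x₀
  have hregT : ContDiffOn ℝ 2 γ T := hreg.mono hTs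
  have hd1 : ∀ y ∈ T, HasDerivAt γ (deriv γ y) y := fun y hy =>
    ((hregT.differentiableOn (by norm_num)).differentiableAt (hTopen.mem_nhds hy)).hasDerivAt
  have hc1reg : ContDiffOn ℝ 1 (deriv γ) T := hregT.deriv_of_isOpen hTopen (by norm_num)
  have hc1 : ContinuousOn (deriv γ) T := hc1reg.continuousOn
  have hd2 : ∀ y ∈ T, HasDerivAt (deriv γ) (deriv (deriv γ) y) y := fun y hy =>
    ((hc1reg.differentiableOn (by norm_num)).differentiableAt (hTopen.mem_nhds hy)).hasDerivAt
  have hc2 : ContinuousOn (deriv (deriv γ)) T :=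
    hc1reg.continuousOn_deriv_of_isOpen hTopen le_rfl
  set q : ℝ → ℝ := fun y => (y / 2 - 1 / y) * deriv γ y - γ y / 2 with hq
  have hqode : ∀ y ∈ T, deriv (deriv γ) y / (1 + (deriv γ y) ^ 2) = q y := fun y hy => hode y hy
  -- facts about derivWithin on s
  set g := derivWithin γ s with hgdef
  have hgc : ContinuousOn g s := hreg.continuousOn_derivWithin hu one_le_two
  have hg1 : ContDiffOn ℝ 1 g s := hreg.derivWithin hu (by norm_num)
  set h2 := derivWithin g s with hh2def
  have hhc : ContinuousOn h2 s := hg1.continuousOn_derivWithin hu le_rfl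
  have hgeq : ∀ y ∈ T, g y = deriv γ y := fun y hy =>
    derivWithin_of_mem_nhds (mem_of_superset (hTopen.mem_nhds hy) hTs)
  have hh2eq : ∀ y ∈ T, h2 y = deriv (deriv γ) y := by
    intro y hy
    have h1 : h2 y = deriv g y := derivWithin_of_mem_nhds (mem_of_superset (hTopen.mem_nhds hy) hTs)
    have h2' : g =ᶠ[nhds y] deriv γ := eventuallyEq_of_mem (hTopen.mem_nhds hy) hgeq
    rw [h1, h2'.deriv_eq]
  have mem0s : (0:ℝ) ∈ s := ⟨le_rfl, hx₀⟩
  set l := nhdsWithin (0:ℝ) T with hldef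
  have hne : l.NeBot := by
    refine mem_closure_iff_nhdsWithin_neBot.mp ?_
    rw [hT, closure_Ioo hx₀.ne]
    exact ⟨le_rfl, hx₀.le⟩
  have t0 : Tendsto (fun y : ℝ => y) l (𝓝 0) := Filter.tendsto_id.mono_left nhdsWithin_le_nhds
  have tγ : Tendsto γ l (𝓝 b) := by
    have := ((hreg.continuousOn 0 mem0s).mono hTs)
    rwa [ContinuousWithinAt, h0] at this
  have tgg : Tendsto g l (𝓝 (g 0)) := (hgc 0 mem0s).mono hTs
  have tg : Tendsto (deriv γ) l (𝓝 (g 0)) :=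
    tgg.congr' (eventuallyEq_of_mem self_mem_nhdsWithin hgeq)
  have th2 : Tendsto h2 l (𝓝 (h2 0)) := (hhc 0 mem0s).mono hTs
  have th : Tendsto (deriv (deriv γ)) l (𝓝 (h2 0)) :=
    th2.congr' (eventuallyEq_of_mem self_mem_nhdsWithin hh2eq)
  have hdenpos : (0:ℝ) < 1 + (g 0) ^ 2 := by positivity
  set A : ℝ := h2 0 / (1 + (g 0) ^ 2) with hA
  have tq : Tendsto q l (𝓝 A) := by
    have tden : Tendsto (fun y => 1 + (deriv γ y) ^ 2) l (𝓝 (1 + (g 0) ^ 2)) :=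
      tendsto_const_nhds.add (tg.pow 2)
    have := th.div tden hdenpos.ne'
    exact this.congr' (eventuallyEq_of_mem self_mem_nhdsWithin fun y hy => hqode y hy)
  set L₁ : ℝ := 0 * g 0 / 2 - A - b / 2 with hL₁
  have tslope : Tendsto (fun y => deriv γ y / y) l (𝓝 L₁) := by
    have hmain : Tendsto (fun y => y * deriv γ y / 2 - q y - γ y / 2) l (𝓝 L₁) :=
      (((t0.mul tg).div_const 2).sub tq).sub (tγ.div_const 2)
    refine hmain.congr' (eventuallyEq_of_mem self_mem_nhdsWithin fun y hy => ?_)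
    have hy0 : y ≠ 0 := ne_of_gt hy.1
    simp only [hq]
    field_simp
    ring
  have hg0 : g 0 = 0 := by
    have t1 : Tendsto (deriv γ) l (𝓝 (0 * L₁)) := by
      refine (t0.mul tslope).congr' (eventuallyEq_of_mem self_mem_nhdsWithin fun y hy => ?_)
      field_simp [ne_of_gt hy.1]
    have := tendsto_nhds_unique tg t1
    simpa using this
  have hM : h2 0 = -b / 4 := by
    have hgd : HasDerivWithinAt g (h2 0) s 0 :=
      ((hg1.differentiableOn (by norm_num)) 0 mem0s).hasDerivWithinAt
    rw [hasDerivWithinAt_iff_tendsto_slope] at hgd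
    have hsd : s \ {(0:ℝ)} = T := by rw [hs, hT, Ico_diff_left]
    rw [hsd] at hgd
    have hslopeq : Tendsto (fun y => deriv γ y / y) l (𝓝 (h2 0)) := by
      refine hgd.congr' (eventuallyEq_of_mem self_mem_nhdsWithin fun y hy => ?_)
      rw [slope_def_field, hg0, hgeq y hy]
      simp
    have huniq : h2 0 = L₁ := tendsto_nhds_unique hslopeq tslope
    rw [hL₁, hA, hg0] at huniq
    norm_num at huniq
    linarith
  have th' : Tendsto (deriv (deriv γ)) l (𝓝 (-b / 4)) := hM ▸ th
  have hlt : ∀ᶠ y in l, deriv (deriv γ) y < 0 :=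
    th'.eventually_lt_const (by linarith)
  obtain ⟨ε, hεpos, hεsub⟩ := Metric.mem_nhdsWithin_iff.mp hlt
  have hε : ∀ y : ℝ, 0 < y → y < ε → y < x₀ → deriv (deriv γ) y < 0 := by
    intro y hy1 hy2 hy3
    refine hεsub ⟨?_, hy1, hy3⟩
    simp only [Metric.mem_ball, Real.dist_eq, sub_zero, abs_of_pos hy1]
    exact hy2
  -- main argument
  intro x hx
  rcases eq_or_lt_of_le hx.1 with h | hxpos
  · rw [← h, h0'']; linarith
  by_contra hcon
  push_neg at hcon
  set Z : Set ℝ := {y | y ∈ T ∧ 0 ≤ deriv (deriv γ) y} with hZ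
  have hxZ : x ∈ Z := ⟨⟨hxpos, hx.2⟩, hcon⟩
  have hZb : ∀ z ∈ Z, ε ≤ z := by
    intro z hz
    by_contra hzε
    push_neg at hzε
    exact absurd (hε z hz.1.1 hzε hz.1.2) (not_lt.mpr hz.2)
  have hbdd : BddBelow Z := ⟨ε, hZb⟩
  have hZne : Z.Nonempty := ⟨x, hxZ⟩
  set x₁ := sInf Z with hx₁def
  have hx₁l : ε ≤ x₁ := le_csInf hZne hZb
  have hx₁u : x₁ ≤ x := csInf_le hbdd hxZ
  have hx₁pos : 0 < x₁ := lt_of_lt_of_le hεpos hx₁l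
  have hx₁T : x₁ ∈ T := ⟨hx₁pos, lt_of_le_of_lt hx₁u hx.2⟩
  have hneg : ∀ y : ℝ, 0 < y → y < x₁ → deriv (deriv γ) y < 0 := by
    intro y hy1 hy2
    by_contra hy3
    push_neg at hy3
    have : y ∈ Z := ⟨⟨hy1, lt_trans hy2 hx₁T.2⟩, hy3⟩
    exact absurd (csInf_le hbdd this) (not_le.mpr hy2)
  have hcontx₁ : ContinuousAt (deriv (deriv γ)) x₁ :=
    hc2.continuousAt (hTopen.mem_nhds hx₁T)
  have hge0 : 0 ≤ deriv (deriv γ) x₁ := by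
    have hcl : x₁ ∈ closure Z := csInf_mem_closure hZne hbdd
    haveI hneZ : (nhdsWithin x₁ Z).NeBot := mem_closure_iff_nhdsWithin_neBot.mp hcl
    have htz : Tendsto (deriv (deriv γ)) (nhdsWithin x₁ Z) (𝓝 (deriv (deriv γ) x₁)) :=
      hcontx₁.tendsto.mono_left nhdsWithin_le_nhds
    refine ge_of_tendsto htz ?_
    exact eventually_nhdsWithin_of_forall fun y hy => hy.2
  have hle0 : deriv (deriv γ) x₁ ≤ 0 := by
    have htl : Tendsto (deriv (deriv γ)) (nhdsWithin x₁ (Iio x₁)) (𝓝 (deriv (deriv γ) x₁)) :=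
      hcontx₁.continuousWithinAt.tendsto
    refine le_of_tendsto htl ?_
    filter_upwards [Ioo_mem_nhdsLT_of_mem (⟨hx₁pos, le_rfl⟩ : x₁ ∈ Ioc 0 x₁)] with y hy
    exact (hneg y hy.1 hy.2).le
  have hx₁'' : deriv (deriv γ) x₁ = 0 := le_antisymm hle0 hge0
  -- γ'(x₁) < 0
  have hanti : ∀ t u : ℝ, 0 < t → t < u → u ≤ x₁ → deriv γ u < deriv γ t := by
    intro t u ht htu hux₁
    have hsub : Icc t u ⊆ T := fun y hy =>
      ⟨lt_of_lt_of_le ht hy.1, lt_of_le_of_lt (le_trans hy.2 hux₁) hx₁T.2⟩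
    have hstrict : StrictAntiOn (deriv γ) (Icc t u) := by
      refine strictAntiOn_of_deriv_neg (convex_Icc t u) (hc1.mono hsub) ?_
      intro y hy
      rw [interior_Icc] at hy
      exact hneg y (lt_trans ht hy.1) (lt_of_lt_of_le hy.2 hux₁)
    exact hstrict ⟨le_rfl, htu.le⟩ ⟨htu.le, le_rfl⟩ htu
  have hγ'x₁ : deriv γ x₁ < 0 := by
    have h1 : deriv γ x₁ < deriv γ (x₁ / 2) :=
      hanti (x₁ / 2) x₁ (by linarith) (by linarith) le_rfl
    have h2' : deriv γ (x₁ / 2) ≤ 0 := by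
      have tg0 : Tendsto (deriv γ) l (𝓝 0) := hg0 ▸ tg
      refine ge_of_tendsto tg0 ?_
      have hmem : Iio (x₁ / 2) ∩ T ∈ l :=
        inter_mem (nhdsWithin_le_nhds (Iio_mem_nhds (by linarith))) self_mem_nhdsWithin
      filter_upwards [hmem] with t ht
      exact (hanti t (x₁ / 2) ht.2.1 ht.1 (by linarith)).le
    linarith
  -- q(x₁) = 0, q < 0 on (0, x₁)
  have hq0 : q x₁ = 0 := by
    have := hqode x₁ hx₁T
    rw [hx₁''] at this
    simpa using this.symm
  have hqneg : ∀ y ∈ T, y < x₁ → q y < 0 := by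
    intro y hy hyx₁
    rw [← hqode y hy]
    exact div_neg_of_neg_of_pos (hneg y hy.1 hyx₁) (by positivity)
  -- derivative of q at x₁
  have hu1 : HasDerivAt (fun y : ℝ => y / 2 - 1 / y) (1 / 2 + 1 / x₁ ^ 2) x₁ := by
    have ha : HasDerivAt (fun y : ℝ => y / 2) (1 / 2) x₁ := by
      simpa using (hasDerivAt_id x₁).div_const 2
    have hb' : HasDerivAt (fun y : ℝ => 1 / y) (-(1 / x₁ ^ 2)) x₁ := by
      simpa [one_div] using hasDerivAt_inv hx₁pos.ne'
    have : HasDerivAt (fun y : ℝ => y / 2 - 1 / y) (1 / 2 - -(1 / x₁ ^ 2)) x₁ := ha.sub hb'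
    convert this using 1
    ring
  have hγ'd : HasDerivAt (deriv γ) 0 x₁ := by
    have := hd2 x₁ hx₁T
    rwa [hx₁''] at this
  have hγd : HasDerivAt γ (deriv γ x₁) x₁ := hd1 x₁ hx₁T
  have hFq : HasDerivAt q ((1 / 2 + 1 / x₁ ^ 2) * deriv γ x₁ + (x₁ / 2 - 1 / x₁) * 0
      - deriv γ x₁ / 2) x₁ := (hu1.mul hγ'd).sub (hγd.div_const 2)
  have hcval : (1 / 2 + 1 / x₁ ^ 2) * deriv γ x₁ + (x₁ / 2 - 1 / x₁) * 0 - deriv γ x₁ / 2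
      = deriv γ x₁ / x₁ ^ 2 := by field_simp; ring
  rw [hcval] at hFq
  have hclt : deriv γ x₁ / x₁ ^ 2 < 0 := div_neg_of_neg_of_pos hγ'x₁ (by positivity)
  rw [hasDerivAt_iff_tendsto_slope] at hFq
  have hev : ∀ᶠ y in nhdsWithin x₁ {x₁}ᶜ, slope q x₁ y < 0 := hFq.eventually_lt_const hclt
  have hev' : ∀ᶠ y in nhdsWithin x₁ (Iio x₁), slope q x₁ y < 0 :=
    hev.filter_mono (nhdsWithin_mono x₁ fun y hy => ne_of_lt hy)
  have hmem2 : Ioo (x₁ / 2) x₁ ∈ nhdsWithin x₁ (Iio x₁) :=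
    Ioo_mem_nhdsLT_of_mem (⟨by linarith, le_rfl⟩ : x₁ ∈ Ioc (x₁ / 2) x₁)
  obtain ⟨y, hy1, hy2⟩ := (hev'.and (eventually_of_mem hmem2 fun y hy => hy)).exists
  have hyT : y ∈ T := ⟨by linarith [hy2.1], lt_trans hy2.2 hx₁T.2⟩
  have hqy : q y < 0 := hqneg y hyT hy2.2
  rw [slope_def_field, hq0, sub_zero] at hy1
  rcases div_neg_iff.mp hy1 with ⟨hp, _⟩ | ⟨_, hp⟩
  · linarith
  · linarith [hy2.2]
end

section
/- Let γ be a solution of γ''/(1+(γ')²) = (x/2 - 1/x)·γ' - γ/2 on (0, x₀) with γ(0) = b > 0, γ'(0) = 0. Then any point x₀ at which γ blows up (i.e., the maximal interval of existence is [0, x₀) with x₀ < ∞ and lim_{x→x₀} γ'(x) = -∞) satisfies x₀ > √2. -/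
open Set Real Filter

theorem stmt_1 (γ : ℝ → ℝ) (x₀ b : ℝ) (hb : 0 < b) (hx₀ : 0 < x₀)
    (hreg : ContDiffOn ℝ 2 γ (Ico 0 x₀))
    (hode : ∀ x ∈ Ioo 0 x₀,
      deriv (deriv γ) x / (1 + (deriv γ x) ^ 2) = (x / 2 - 1 / x) * deriv γ x - γ x / 2)
    (h0 : γ 0 = b) (h0' : deriv γ 0 = 0)
    (hdec : ∀ x ∈ Ioo 0 x₀, deriv γ x < 0)
    (hconc : ∀ x ∈ Ioo 0 x₀, deriv (deriv γ) x < 0)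
    (hblow : Tendsto (deriv γ) (nhdsWithin x₀ (Iio x₀)) atBot) :
    Real.sqrt 2 < x₀ := by
  by_contra hcon
  push_neg at hcon
  -- hcon : x₀ ≤ √2
  have hopen : IsOpen (Ioo (0:ℝ) x₀) := isOpen_Ioo
  have hsub : Ioo (0:ℝ) x₀ ⊆ Ico 0 x₀ := Ioo_subset_Ico_self
  have hreg' : ContDiffOn ℝ 2 γ (Ioo 0 x₀) := hreg.mono hsub
  have hdiff : ∀ t ∈ Ioo (0:ℝ) x₀, DifferentiableAt ℝ γ t := fun t ht =>
    (hreg'.differentiableOn (by norm_num)).differentiableAt (hopen.mem_nhds ht)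
  have hderiv_reg : ContDiffOn ℝ 1 (deriv γ) (Ioo 0 x₀) := by
    have h := hreg'.deriv_of_isOpen hopen (m := 1) (by norm_num)
    exact h
  have hdiff2 : ∀ t ∈ Ioo (0:ℝ) x₀, DifferentiableAt ℝ (deriv γ) t := fun t ht =>
    (hderiv_reg.differentiableOn (by norm_num)).differentiableAt (hopen.mem_nhds ht)
  have hderiv_cont : ContinuousOn (deriv γ) (Ioo 0 x₀) := hderiv_reg.continuousOn
  have hden : ∀ t : ℝ, (0:ℝ) < 1 + (deriv γ t) ^ 2 := fun t => by positivity
  -- the coefficient t/2 - 1/t is nonpositive on (0, x₀)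
  have hw : ∀ t ∈ Ioo (0:ℝ) x₀, t / 2 - 1 / t ≤ 0 := by
    intro t ht
    have ht2 : t ≤ Real.sqrt 2 := le_of_lt (lt_of_lt_of_le ht.2 hcon)
    have hsq : t ^ 2 ≤ 2 := by
      have := Real.sq_sqrt (by norm_num : (2:ℝ) ≥ 0)
      nlinarith [ht.1, Real.sqrt_nonneg 2]
    have : t / 2 ≤ 1 / t := by
      rw [div_le_div_iff₀ (by norm_num) ht.1]
      nlinarith
    linarith
  -- the first-order term is nonnegative
  have hwpos : ∀ t ∈ Ioo (0:ℝ) x₀, 0 ≤ (t / 2 - 1 / t) * deriv γ t := by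
    intro t ht
    have h1 := mul_nonneg (neg_nonneg.mpr (hw t ht)) (neg_nonneg.mpr (le_of_lt (hdec t ht)))
    nlinarith
  -- RHS of the ODE is negative
  have hrhs : ∀ t ∈ Ioo (0:ℝ) x₀, (t / 2 - 1 / t) * deriv γ t - γ t / 2 < 0 := by
    intro t ht
    rw [← hode t ht]
    exact div_neg_of_neg_of_pos (hconc t ht) (hden t)
  -- positivity of γ on (0, x₀)
  have hpos : ∀ t ∈ Ioo (0:ℝ) x₀, 0 < γ t := by
    intro t ht
    have h1 := hrhs t ht
    have h2 := hwpos t ht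
    linarith
  -- γ is antitone on [0, x₀)
  have hanti : AntitoneOn γ (Ico 0 x₀) := by
    apply antitoneOn_of_deriv_nonpos (convex_Ico 0 x₀) hreg.continuousOn
    · rw [interior_Ico]
      exact fun t ht => (hdiff t ht).differentiableWithinAt
    · rw [interior_Ico]
      exact fun t ht => le_of_lt (hdec t ht)
  have hle_b : ∀ t ∈ Ico (0:ℝ) x₀, γ t ≤ b := by
    intro t ht
    have := hanti (left_mem_Ico.mpr hx₀) ht ht.1
    rw [h0] at this; exact this
  -- derivative of arctan ∘ γ'
  have hu : ∀ t ∈ Ioo (0:ℝ) x₀,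
      HasDerivAt (fun s => Real.arctan (deriv γ s))
        ((t / 2 - 1 / t) * deriv γ t - γ t / 2) t := by
    intro t ht
    have h1 : HasDerivAt (fun s => Real.arctan (deriv γ s))
        ((1 / (1 + (deriv γ t) ^ 2)) * deriv (deriv γ) t) t :=
      (Real.hasDerivAt_arctan (deriv γ t)).comp t ((hdiff2 t ht).hasDerivAt)
    have h2 : (1 / (1 + (deriv γ t) ^ 2)) * deriv (deriv γ) t
        = (t / 2 - 1 / t) * deriv γ t - γ t / 2 := by
      rw [← hode t ht]; ring
    rw [h2] at h1; exact h1
  -- key integrated inequality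
  have hkey : ∀ x ∈ Ioo (0:ℝ) x₀,
      Real.arctan (deriv γ x) ≤ -(π / 2) + γ x * (x₀ - x) / 2 := by
    intro x hx
    set c := γ x with hc
    have hsub2 : Ico x x₀ ⊆ Ioo 0 x₀ := fun t ht => ⟨lt_of_lt_of_le hx.1 ht.1, ht.2⟩
    have hmono : MonotoneOn (fun t => Real.arctan (deriv γ t) + c / 2 * t) (Ico x x₀) := by
      apply monotoneOn_of_deriv_nonneg (convex_Ico x x₀)
      · exact (Real.continuous_arctan.comp_continuousOn (hderiv_cont.mono hsub2)).add
          (continuous_const.mul continuous_id).continuousOn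
      · rw [interior_Ico]
        intro t ht
        exact (((hu t (hsub2 (Ioo_subset_Ico_self ht))).add
          (((hasDerivAt_id t).const_mul (c / 2)))).differentiableAt).differentiableWithinAt
      · rw [interior_Ico]
        intro t ht
        have ht' : t ∈ Ioo (0:ℝ) x₀ := hsub2 (Ioo_subset_Ico_self ht)
        have hd : HasDerivAt (fun t => Real.arctan (deriv γ t) + c / 2 * t)
            (((t / 2 - 1 / t) * deriv γ t - γ t / 2) + c / 2 * 1) t :=
          (hu t ht').add ((hasDerivAt_id t).const_mul (c / 2))
        rw [hd.deriv]
        have h1 := hwpos t ht'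
        have h2 : γ t ≤ c := hanti (hsub hx) (hsub ht') (le_of_lt ht.1)
        linarith
    have htend : Tendsto (fun t => Real.arctan (deriv γ t) + c / 2 * t)
        (nhdsWithin x₀ (Iio x₀)) (nhds (-(π / 2) + c / 2 * x₀)) := by
      apply Tendsto.add
      · exact (Real.tendsto_arctan_atBot.mono_right nhdsWithin_le_nhds).comp hblow
      · exact ((continuous_const.mul continuous_id).tendsto x₀).mono_left nhdsWithin_le_nhds
    have hev : ∀ᶠ y in nhdsWithin x₀ (Iio x₀),
        Real.arctan (deriv γ x) + c / 2 * x ≤ Real.arctan (deriv γ y) + c / 2 * y := by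
      filter_upwards [Ioo_mem_nhdsLT_of_mem (right_mem_Ioc.mpr hx.2)] with y hy
      exact hmono (left_mem_Ico.mpr hx.2) ⟨le_of_lt hy.1, hy.2⟩ (le_of_lt hy.1)
    have := ge_of_tendsto htend hev
    linarith
  -- pick x₁ near x₀
  set x₁ : ℝ := max (x₀ / 2) (x₀ - 1 / (b + 1)) with hx₁def
  have hx₁pos : 0 < x₁ := lt_of_lt_of_le (half_pos hx₀) (le_max_left _ _)
  have hx₁lt : x₁ < x₀ := by
    apply max_lt (half_lt_self hx₀)
    have : (0:ℝ) < 1 / (b + 1) := by positivity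
    linarith
  have hx₁gap : x₀ - x₁ ≤ 1 / (b + 1) := by
    have := le_max_right (x₀ / 2) (x₀ - 1 / (b + 1))
    linarith
  have hcos1 : 0 < Real.cos 1 := by
    apply Real.cos_pos_of_mem_Ioo
    constructor <;> nlinarith [Real.pi_gt_three]
  set K : ℝ := 2 * Real.cos 1 / b with hKdef
  have hK : 0 < K := by positivity
  -- the derivative bound near x₀
  have hgrad : ∀ x ∈ Ico x₁ x₀, deriv γ x ≤ -(K / (x₀ - x)) := by
    intro x hx
    have hxI : x ∈ Ioo (0:ℝ) x₀ := ⟨lt_of_lt_of_le hx₁pos hx.1, hx.2⟩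
    set θ : ℝ := γ x * (x₀ - x) / 2 with hθdef
    have hθpos : 0 < θ := by
      have := hpos x hxI
      have : 0 < x₀ - x := by linarith [hx.2]
      positivity
    have hθ1 : θ ≤ 1 / 2 := by
      have h1 : γ x ≤ b := hle_b x (hsub hxI)
      have h2 : x₀ - x ≤ 1 / (b + 1) := by linarith [hx.1, hx₁gap]
      have h3 : 0 < x₀ - x := by linarith [hx.2]
      have h4 : γ x * (x₀ - x) ≤ b * (1 / (b + 1)) := by
        apply mul_le_mul h1 h2 (le_of_lt h3) (le_of_lt hb)
      have h5 : b * (1 / (b + 1)) ≤ 1 := by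
        rw [mul_one_div, div_le_one (by linarith)]; linarith
      rw [hθdef]; linarith
    have hθlt : θ < π / 2 := by nlinarith [Real.pi_gt_three]
    -- arctan (γ' x) ≤ θ - π/2
    have h1 : Real.arctan (deriv γ x) ≤ θ - π / 2 := by
      have := hkey x hxI
      rw [hθdef]; linarith
    -- apply tan
    have h2 : deriv γ x ≤ Real.tan (θ - π / 2) := by
      have hm := Real.strictMonoOn_tan.monotoneOn
      have ha : Real.arctan (deriv γ x) ∈ Ioo (-(π/2)) (π/2) :=
        ⟨Real.neg_pi_div_two_lt_arctan _, Real.arctan_lt_pi_div_two _⟩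
      have hb' : θ - π / 2 ∈ Ioo (-(π/2)) (π/2) := by
        constructor <;> [linarith; linarith [Real.pi_pos]]
      have := hm ha hb' h1
      rwa [Real.tan_arctan] at this
    have h3 : Real.tan (θ - π / 2) = -(Real.tan θ)⁻¹ := by
      have : θ - π / 2 = -(π / 2 - θ) := by ring
      rw [this, Real.tan_neg, Real.tan_pi_div_two_sub]
    rw [h3] at h2
    -- (tan θ)⁻¹ ≥ cos 1 / θ
    have hsinθ : 0 < Real.sin θ := Real.sin_pos_of_pos_of_lt_pi hθpos
      (by nlinarith [Real.pi_gt_three])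
    have hcosθ : Real.cos 1 ≤ Real.cos θ :=
      Real.cos_le_cos_of_nonneg_of_le_pi (le_of_lt hθpos) (by nlinarith [Real.pi_gt_three])
        (by linarith)
    have hsinle : Real.sin θ ≤ θ := Real.sin_le (le_of_lt hθpos)
    have h4 : Real.cos 1 / θ ≤ (Real.tan θ)⁻¹ := by
      rw [Real.tan_eq_sin_div_cos, inv_div]
      rw [div_le_div_iff₀ hθpos hsinθ]
      nlinarith
    have h5 : K / (x₀ - x) ≤ Real.cos 1 / θ := by
      have hg : 0 < γ x := hpos x hxI
      have hgb : γ x ≤ b := hle_b x (hsub hxI)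
      have hxx : 0 < x₀ - x := by linarith [hx.2]
      rw [hKdef, hθdef, div_le_div_iff₀ hxx (by positivity)]
      have : 2 * Real.cos 1 * (γ x * (x₀ - x)) ≤ 2 * Real.cos 1 * (b * (x₀ - x)) := by
        apply mul_le_mul_of_nonneg_left _ (by positivity)
        exact mul_le_mul_of_nonneg_right hgb (le_of_lt hxx)
      calc 2 * Real.cos 1 / b * (γ x * (x₀ - x) / 2)
          = (2 * Real.cos 1 * (γ x * (x₀ - x))) / (2 * b) := by ring
        _ ≤ (2 * Real.cos 1 * (b * (x₀ - x))) / (2 * b) := by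
            apply div_le_div_of_nonneg_right this (by positivity) |>.trans_eq rfl
        _ = Real.cos 1 * (x₀ - x) := by field_simp
    linarith
  -- integrate the bound: contradiction
  set M : ℝ := γ x₁ - K * Real.log (x₀ - x₁) with hMdef
  have hGanti : AntitoneOn (fun t => γ t - K * Real.log (x₀ - t)) (Ico x₁ x₀) := by
    have hsub3 : Ico x₁ x₀ ⊆ Ico 0 x₀ := fun t ht => ⟨le_of_lt (lt_of_lt_of_le hx₁pos ht.1), ht.2⟩
    apply antitoneOn_of_deriv_nonpos (convex_Ico x₁ x₀)
    · apply (hreg.continuousOn.mono hsub3).sub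
      apply ContinuousOn.mul continuousOn_const
      apply ContinuousOn.log
      · exact (continuous_const.sub continuous_id).continuousOn
      · intro t ht
        exact sub_ne_zero.mpr (ne_of_gt ht.2)
    · rw [interior_Ico]
      intro t ht
      have htI : t ∈ Ioo (0:ℝ) x₀ := ⟨lt_of_lt_of_le hx₁pos (le_of_lt ht.1), ht.2⟩
      have hne : x₀ - t ≠ 0 := by have := ht.2; intro h; linarith [sub_eq_zero.mp h]
      have hlog : HasDerivAt (fun s => Real.log (x₀ - s)) ((x₀ - t)⁻¹ * (0 - 1)) t :=
        (Real.hasDerivAt_log hne).comp t ((hasDerivAt_const t x₀).sub (hasDerivAt_id t))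
      exact (((hdiff t htI).hasDerivAt.sub (hlog.const_mul K)).differentiableAt).differentiableWithinAt
    · rw [interior_Ico]
      intro t ht
      have htI : t ∈ Ioo (0:ℝ) x₀ := ⟨lt_of_lt_of_le hx₁pos (le_of_lt ht.1), ht.2⟩
      have htpos : 0 < x₀ - t := by linarith [ht.2]
      have hne : x₀ - t ≠ 0 := ne_of_gt htpos
      have hlog : HasDerivAt (fun s => Real.log (x₀ - s)) ((x₀ - t)⁻¹ * (0 - 1)) t :=
        (Real.hasDerivAt_log hne).comp t ((hasDerivAt_const t x₀).sub (hasDerivAt_id t))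
      have hG : HasDerivAt (fun s => γ s - K * Real.log (x₀ - s))
          (deriv γ t - K * ((x₀ - t)⁻¹ * (0 - 1))) t :=
        (hdiff t htI).hasDerivAt.sub (hlog.const_mul K)
      rw [hG.deriv]
      have := hgrad t ⟨le_of_lt ht.1, ht.2⟩
      have h1 : K * ((x₀ - t)⁻¹ * (0 - 1)) = -(K / (x₀ - t)) := by
        field_simp
        norm_num
      rw [h1]
      linarith
  -- choose y close to x₀
  set δ : ℝ := min (Real.exp (-M / K)) ((x₀ - x₁) / 2) with hδdef
  have hδpos : 0 < δ := lt_min (Real.exp_pos _) (by linarith)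
  set y : ℝ := x₀ - δ with hydef
  have hy1 : x₁ ≤ y := by
    have : δ ≤ (x₀ - x₁) / 2 := min_le_right _ _
    rw [hydef]; linarith
  have hy2 : y < x₀ := by rw [hydef]; linarith
  have hyI : y ∈ Ico x₁ x₀ := ⟨hy1, hy2⟩
  have hx₁I : x₁ ∈ Ico x₁ x₀ := ⟨le_refl _, hx₁lt⟩
  have hGy : γ y - K * Real.log (x₀ - y) ≤ M := by
    have := hGanti hx₁I hyI hy1
    rw [hMdef]; exact this
  have hlogy : Real.log (x₀ - y) ≤ -M / K := by
    have h1 : x₀ - y = δ := by rw [hydef]; ring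
    rw [h1]
    have h2 : δ ≤ Real.exp (-M / K) := min_le_left _ _
    calc Real.log δ ≤ Real.log (Real.exp (-M / K)) :=
          Real.log_le_log hδpos h2
      _ = -M / K := Real.log_exp _
  have hKlog : K * Real.log (x₀ - y) ≤ -M := by
    have h3 := mul_le_mul_of_nonneg_left hlogy (le_of_lt hK)
    have h2 : K * (-M / K) = -M := by field_simp
    linarith
  have hγy : 0 < γ y := hpos y ⟨lt_of_lt_of_le hx₁pos hy1, hy2⟩
  linarith
end

section
/- Let γ solve γ''/(1+(γ')²) = (x/2 - 1/x)·γ' - γ/2 on (0, x₀) with γ(0) = b > 0, γ'(0) = 0, γ'' < 0, and suppose γ blows up at x₀ ∈ (√2, ∞) with lim_{x→x₀} γ'(x) = -∞. Then lim_{x→x₀} γ(x) > -∞, i.e., γ remains bounded below near the blow-up point. -/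
open Set Real Filter

/-- If `f` has nonnegative derivative on `Ico a x₀`, it is at least `f a` there. -/
lemma mono_from_base' {f f' : ℝ → ℝ} {a x₀ : ℝ}
    (hd : ∀ y ∈ Ico a x₀, HasDerivAt f (f' y) y)
    (h0 : ∀ y ∈ Ico a x₀, 0 ≤ f' y) :
    ∀ x ∈ Ico a x₀, f a ≤ f x := by
  intro x hx
  rcases eq_or_lt_of_le hx.1 with h | h
  · rw [← h]
  · have hsub : Icc a x ⊆ Ico a x₀ := fun y hy => ⟨hy.1, lt_of_le_of_lt hy.2 hx.2⟩
    have hmono : MonotoneOn f (Icc a x) := by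
      apply monotoneOn_of_deriv_nonneg (convex_Icc a x)
      · exact fun y hy => (hd y (hsub hy)).continuousAt.continuousWithinAt
      · intro y hy
        rw [interior_Icc] at hy
        exact (hd y (hsub (Ioo_subset_Icc_self hy))).differentiableAt.differentiableWithinAt
      · intro y hy
        rw [interior_Icc] at hy
        rw [(hd y (hsub (Ioo_subset_Icc_self hy))).deriv]
        exact h0 y (hsub (Ioo_subset_Icc_self hy))
    exact hmono ⟨le_refl a, h.le⟩ ⟨hx.1, le_refl x⟩ hx.1

/-- If `f` has nonpositive derivative on `Ico a x₀`, it is at most `f a` there. -/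
lemma anti_from_base' {f f' : ℝ → ℝ} {a x₀ : ℝ}
    (hd : ∀ y ∈ Ico a x₀, HasDerivAt f (f' y) y)
    (h0 : ∀ y ∈ Ico a x₀, f' y ≤ 0) :
    ∀ x ∈ Ico a x₀, f x ≤ f a := by
  intro x hx
  have := mono_from_base' (f := fun y => -f y) (f' := fun y => -f' y)
    (fun y hy => (hd y hy).neg) (fun y hy => neg_nonneg.2 (h0 y hy)) x hx
  simpa using this

set_option maxHeartbeats 1000000 in
theorem stmt_3 (γ : ℝ → ℝ) (x₀ b : ℝ) (hb : 0 < b) (hx₀ : Real.sqrt 2 < x₀)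
    (hreg : ContDiffOn ℝ 2 γ (Ico 0 x₀))
    (hode : ∀ x ∈ Ioo 0 x₀,
      deriv (deriv γ) x / (1 + (deriv γ x) ^ 2) = (x / 2 - 1 / x) * deriv γ x - γ x / 2)
    (h0 : γ 0 = b) (h0' : deriv γ 0 = 0)
    (hconc : ∀ x ∈ Ioo 0 x₀, deriv (deriv γ) x < 0)
    (hblow : Tendsto (deriv γ) (nhdsWithin x₀ (Iio x₀)) atBot) :
    ∃ C : ℝ, ∀ x ∈ Ico 0 x₀, C ≤ γ x := by
  have hsqrt2 : (0:ℝ) < Real.sqrt 2 := Real.sqrt_pos.2 (by norm_num)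
  have hx₀0 : (0:ℝ) < x₀ := hsqrt2.trans hx₀
  have hIoo : IsOpen (Ioo (0:ℝ) x₀) := isOpen_Ioo
  have h2 : ContDiffOn ℝ 2 γ (Ioo 0 x₀) := hreg.mono Ioo_subset_Ico_self
  have hγd : ∀ x ∈ Ioo 0 x₀, DifferentiableAt ℝ γ x := fun x hx =>
    (h2.differentiableOn (by norm_num)).differentiableAt (hIoo.mem_nhds hx)
  have hu1 : ContDiffOn ℝ 1 (deriv γ) (Ioo 0 x₀) := h2.deriv_of_isOpen hIoo (by norm_num)
  have hud : ∀ x ∈ Ioo 0 x₀, DifferentiableAt ℝ (deriv γ) x := fun x hx =>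
    (hu1.differentiableOn (by norm_num)).differentiableAt (hIoo.mem_nhds hx)
  -- rewrite the ODE
  have hveq : ∀ x ∈ Ioo 0 x₀, deriv (deriv γ) x
      = (1 + deriv γ x ^ 2) * ((x / 2 - 1 / x) * deriv γ x - γ x / 2) := by
    intro x hx
    have hpos : (0:ℝ) < 1 + deriv γ x ^ 2 := by positivity
    have h := hode x hx
    rw [div_eq_iff hpos.ne'] at h
    rw [h]; ring
  -- derivative of the second derivative
  have hvd : ∀ x ∈ Ioo 0 x₀, HasDerivAt (deriv (deriv γ))
      (2 * deriv γ x * deriv (deriv γ) x * ((x / 2 - 1 / x) * deriv γ x - γ x / 2)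
        + (1 + deriv γ x ^ 2) * (deriv γ x / x ^ 2 + (x / 2 - 1 / x) * deriv (deriv γ) x)) x := by
    intro x hx
    have hx0 : x ≠ 0 := ne_of_gt hx.1
    have hu' : HasDerivAt (deriv γ) (deriv (deriv γ) x) x := (hud x hx).hasDerivAt
    have hg' : HasDerivAt γ (deriv γ x) x := (hγd x hx).hasDerivAt
    have hq : HasDerivAt (fun y : ℝ => y / 2 - 1 / y) (1 / 2 + 1 / x ^ 2) x := by
      have ha : HasDerivAt (fun y : ℝ => y / 2) (1 / 2) x := by
        simpa using (hasDerivAt_id x).div_const 2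
      have hb : HasDerivAt (fun y : ℝ => 1 / y) (-(x ^ 2)⁻¹) x := by
        simpa only [one_div] using hasDerivAt_inv hx0
      have hab := ha.sub hb
      refine hab.congr_deriv ?_
      field_simp
      ring
    have h1 : HasDerivAt (fun y => 1 + deriv γ y ^ 2) (2 * deriv γ x * deriv (deriv γ) x) x := by
      have := (hu'.pow 2).const_add 1
      refine this.congr_deriv ?_
      push_cast
      ring
    have h3 : HasDerivAt (fun y => (y / 2 - 1 / y) * deriv γ y - γ y / 2)
        ((1 / 2 + 1 / x ^ 2) * deriv γ x + (x / 2 - 1 / x) * deriv (deriv γ) x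
          - deriv γ x / 2) x := (hq.mul hu').sub (hg'.div_const 2)
    have hF := h1.mul h3
    have hEq : deriv (deriv γ)
        =ᶠ[nhds x] fun y => (1 + deriv γ y ^ 2) * ((y / 2 - 1 / y) * deriv γ y - γ y / 2) :=
      eventually_of_mem (hIoo.mem_nhds hx) fun y hy => hveq y hy
    have hfinal := hF.congr_of_eventuallyEq hEq
    refine hfinal.congr_deriv ?_
    field_simp
    ring
  -- monotonicity of the first derivative
  have huanti : ∀ a ∈ Ioo 0 x₀, ∀ x ∈ Ico a x₀, deriv γ x ≤ deriv γ a := by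
    intro a ha
    apply anti_from_base' (f' := deriv (deriv γ))
    · exact fun y hy => (hud y ⟨lt_of_lt_of_le ha.1 hy.1, hy.2⟩).hasDerivAt
    · exact fun y hy => (hconc y ⟨lt_of_lt_of_le ha.1 hy.1, hy.2⟩).le
  -- pick x₁ past √2 where the derivative is ≤ -1
  obtain ⟨x₁, hx₁u, hx₁mem⟩ := ((hblow.eventually (eventually_le_atBot (-1))).and
    (eventually_of_mem (Ioo_mem_nhdsLT_of_mem ⟨hx₀, le_refl x₀⟩) fun y hy => hy)).exists
  have hx₁s : Real.sqrt 2 < x₁ := hx₁mem.1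
  have hx₁lt : x₁ < x₀ := hx₁mem.2
  have hx₁0 : (0:ℝ) < x₁ := hsqrt2.trans hx₁s
  have hx₁sq : (2:ℝ) < x₁ ^ 2 := (Real.sqrt_lt' hx₁0).1 hx₁s
  have hx₁Ioo : x₁ ∈ Ioo 0 x₀ := ⟨hx₁0, hx₁lt⟩
  set c := x₁ / 2 - 1 / x₁ with hcdef
  clear_value c
  have hc : 0 < c := by
    rw [hcdef, sub_pos, div_lt_div_iff₀ hx₁0 (by norm_num : (0:ℝ) < 2)]
    nlinarith
  have hcoef : ∀ x, x₁ ≤ x → c ≤ x / 2 - 1 / x := by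
    intro x hx
    have hx0 : (0:ℝ) < x := lt_of_lt_of_le hx₁0 hx
    have h1 : 1 / x ≤ 1 / x₁ := one_div_le_one_div_of_le hx₁0 hx
    rw [hcdef]; linarith
  have hmem1 : ∀ x ∈ Ico x₁ x₀, x ∈ Ioo 0 x₀ := fun x hx =>
    ⟨lt_of_lt_of_le hx₁0 hx.1, hx.2⟩
  set K := deriv (deriv γ) x₁ - c / 3 * deriv γ x₁ ^ 3 with hKdef
  clear_value K
  -- integrated inequality v ≤ K + c/3 u³
  have hW : ∀ x ∈ Ico x₁ x₀, deriv (deriv γ) x ≤ K + c / 3 * deriv γ x ^ 3 := by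
    have hd : ∀ y ∈ Ico x₁ x₀,
        HasDerivAt (fun y => deriv (deriv γ) y - c / 3 * deriv γ y ^ 3)
          ((2 * deriv γ y * deriv (deriv γ) y * ((y / 2 - 1 / y) * deriv γ y - γ y / 2)
            + (1 + deriv γ y ^ 2) * (deriv γ y / y ^ 2 + (y / 2 - 1 / y) * deriv (deriv γ) y))
            - c / 3 * (3 * deriv γ y ^ 2 * deriv (deriv γ) y)) y := by
      intro y hy
      have hyI := hmem1 y hy
      have hder := (hvd y hyI).sub (((hud y hyI).hasDerivAt.pow 3).const_mul (c / 3))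
      refine hder.congr_deriv ?_
      all_goals push_cast; ring
    have hle : ∀ y ∈ Ico x₁ x₀,
        (2 * deriv γ y * deriv (deriv γ) y * ((y / 2 - 1 / y) * deriv γ y - γ y / 2)
          + (1 + deriv γ y ^ 2) * (deriv γ y / y ^ 2 + (y / 2 - 1 / y) * deriv (deriv γ) y))
          - c / 3 * (3 * deriv γ y ^ 2 * deriv (deriv γ) y) ≤ 0 := by
      intro y hy
      have hyI := hmem1 y hy
      have hUneg : deriv γ y ≤ -1 := le_trans (huanti x₁ hx₁Ioo y hy) hx₁u
      have hVneg : deriv (deriv γ) y < 0 := hconc y hyI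
      set U := deriv γ y with hU
      set V := deriv (deriv γ) y with hV
      clear_value U V
      have h1p : (0:ℝ) < 1 + U ^ 2 := by positivity
      have hGle : (1 + U ^ 2) * ((y / 2 - 1 / y) * U - γ y / 2) = V := by
        rw [hU, hV]; exact (hveq y hyI).symm
      have hG : (y / 2 - 1 / y) * U - γ y / 2 < 0 := by
        by_contra h
        push_neg at h
        have := mul_nonneg h1p.le h
        rw [hGle] at this
        linarith
      have hyc : c ≤ y / 2 - 1 / y := hcoef y hy.1
      have hy0 : (0:ℝ) < y := hyI.1
      have hUV : 0 < U * V := mul_pos_of_neg_of_neg (by linarith) hVneg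
      have ha : 2 * U * V * ((y / 2 - 1 / y) * U - γ y / 2) ≤ 0 := by
        have := mul_neg_of_pos_of_neg hUV hG
        nlinarith [this]
      have hdiv : U / y ^ 2 ≤ 0 := by
        rw [div_nonpos_iff]
        right
        exact ⟨by linarith, by positivity⟩
      have hb : (1 + U ^ 2) * (U / y ^ 2) ≤ 0 :=
        mul_nonpos_of_nonneg_of_nonpos h1p.le hdiv
      have hcv : c * V < 0 := mul_neg_of_pos_of_neg hc hVneg
      have s1 : (y / 2 - 1 / y) * V ≤ c * V := mul_le_mul_of_nonpos_right hyc hVneg.le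
      have s2 : (1 + U ^ 2) * ((y / 2 - 1 / y) * V) ≤ (1 + U ^ 2) * (c * V) :=
        mul_le_mul_of_nonneg_left s1 h1p.le
      have s3 : (1 + U ^ 2) * (c * V) ≤ U ^ 2 * (c * V) := by
        have hexp2 : (1 + U ^ 2) * (c * V) = U ^ 2 * (c * V) + c * V := by ring
        linarith only [hexp2, hcv]
      have hexp : (1 + U ^ 2) * (U / y ^ 2 + (y / 2 - 1 / y) * V)
          = (1 + U ^ 2) * (U / y ^ 2) + (1 + U ^ 2) * ((y / 2 - 1 / y) * V) := by ring
      have hfin : 2 * U * V * ((y / 2 - 1 / y) * U - γ y / 2)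
            + (1 + U ^ 2) * (U / y ^ 2 + (y / 2 - 1 / y) * V) - c / 3 * (3 * U ^ 2 * V)
          = 2 * U * V * ((y / 2 - 1 / y) * U - γ y / 2) + (1 + U ^ 2) * (U / y ^ 2)
            + (1 + U ^ 2) * ((y / 2 - 1 / y) * V) - U ^ 2 * (c * V) := by ring
      rw [hfin]
      linarith only [ha, hb, s2, s3]
    intro x hx
    have := anti_from_base' hd hle x hx
    simp only [hKdef]
    linarith [this]
  -- pick x₂ where u is very negative
  obtain ⟨x₂, hx₂u, hx₂mem⟩ :=
    ((hblow.eventually (eventually_le_atBot (-(1 + 6 * (1 + |K|) / c)))).and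
      (eventually_of_mem (Ioo_mem_nhdsLT_of_mem ⟨hx₁lt, le_refl x₀⟩) fun y hy => hy)).exists
  have hx₂Ioo : x₂ ∈ Ioo 0 x₀ := ⟨hx₁0.trans hx₂mem.1, hx₂mem.2⟩
  have hKabs : K ≤ |K| := le_abs_self K
  have habs0 : (0:ℝ) ≤ |K| := abs_nonneg K
  have hu2 : ∀ x ∈ Ico x₂ x₀, deriv γ x ≤ -(1 + 6 * (1 + |K|) / c) := fun x hx =>
    le_trans (huanti x₂ hx₂Ioo x hx) hx₂u
  have hU1 : ∀ x ∈ Ico x₂ x₀, deriv γ x ≤ -1 := by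
    intro x hx
    have hpos : 0 < 6 * (1 + |K|) / c := by positivity
    linarith [hu2 x hx]
  have hmem2 : ∀ x ∈ Ico x₂ x₀, x ∈ Ioo 0 x₀ := fun x hx =>
    ⟨hx₂Ioo.1.trans_le hx.1, hx.2⟩
  -- refined inequality v ≤ c/6 u³
  have hv6 : ∀ x ∈ Ico x₂ x₀, deriv (deriv γ) x ≤ c / 6 * deriv γ x ^ 3 := by
    intro x hx
    have hxI : x ∈ Ico x₁ x₀ := ⟨le_trans hx₂mem.1.le hx.1, hx.2⟩
    have h1 := hW x hxI
    have h2 := hu2 x hx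
    have hU1' : deriv γ x ≤ -1 := hU1 x hx
    set U := deriv γ x with hU
    clear_value U
    have hU3 : U ^ 3 ≤ U := by nlinarith [sq_nonneg (U + 1), sq_nonneg (U - 1)]
    have hUb : U ≤ -(6 * (1 + |K|) / c) := by linarith
    have h3 : c / 6 * U ≤ -(1 + |K|) := by
      have hstep : c / 6 * U ≤ c / 6 * (-(6 * (1 + |K|) / c)) :=
        mul_le_mul_of_nonneg_left hUb (by positivity)
      have heq : c / 6 * (-(6 * (1 + |K|) / c)) = -(1 + |K|) := by
        field_simp
      linarith only [hstep, heq.le, heq.ge]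
    have h4 : c / 6 * U ^ 3 ≤ c / 6 * U := mul_le_mul_of_nonneg_left hU3 (by positivity)
    linarith only [h1, h3, h4, hKabs]
  -- bound on the reciprocal of the square of the derivative
  have hM : ∀ x ∈ Ico x₂ x₀, c / 3 * (x₀ - x) ≤ (deriv γ x ^ 2)⁻¹ := by
    intro x hx
    have hq : ∀ y ∈ Ico x x₀,
        (deriv γ y ^ 2)⁻¹ + c / 3 * y ≤ (deriv γ x ^ 2)⁻¹ + c / 3 * x := by
      have hd : ∀ y ∈ Ico x x₀,
          HasDerivAt (fun y => (deriv γ y ^ 2)⁻¹ + c / 3 * y)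
            (-(2 * deriv γ y ^ 1 * deriv (deriv γ) y) / (deriv γ y ^ 2) ^ 2 + c / 3) y := by
        intro y hy
        have hyIco : y ∈ Ico x₂ x₀ := ⟨le_trans hx.1 hy.1, hy.2⟩
        have hyI := hmem2 y hyIco
        have hUne : deriv γ y ^ 2 ≠ 0 := by
          have h1 := hU1 y hyIco
          have h2 : deriv γ y ≠ 0 := by intro h; rw [h] at h1; linarith
          exact pow_ne_zero 2 h2
        have hder := (((hud y hyI).hasDerivAt.pow 2).inv hUne).add
          ((hasDerivAt_id y).const_mul (c / 3))
        refine hder.congr_deriv ?_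
        push_cast [Pi.pow_apply]
        ring
      have hle : ∀ y ∈ Ico x x₀,
          -(2 * deriv γ y ^ 1 * deriv (deriv γ) y) / (deriv γ y ^ 2) ^ 2 + c / 3 ≤ 0 := by
        intro y hy
        have hyIco : y ∈ Ico x₂ x₀ := ⟨le_trans hx.1 hy.1, hy.2⟩
        have h6 := hv6 y hyIco
        have hU1' := hU1 y hyIco
        set U := deriv γ y with hU
        set V := deriv (deriv γ) y with hV
        clear_value U V
        have hU4 : (0:ℝ) < (U ^ 2) ^ 2 :=
          pow_pos (by nlinarith : (0:ℝ) < U ^ 2) 2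
        have key : -(2 * U ^ 1 * V) ≤ -(c / 3) * (U ^ 2) ^ 2 := by
          have hint := mul_le_mul_of_nonneg_left h6 (show (0:ℝ) ≤ -2 * U by linarith)
          linarith only [hint]
        have hdivle : -(2 * U ^ 1 * V) / (U ^ 2) ^ 2 ≤ -(c / 3) :=
          (div_le_iff₀ hU4).mpr (by linarith only [key])
        linarith only [hdivle]
      exact anti_from_base' hd hle
    have hev : ∀ᶠ y in nhdsWithin x₀ (Iio x₀),
        c / 3 * y - c / 3 * x ≤ (deriv γ x ^ 2)⁻¹ := by
      apply eventually_of_mem (Ioo_mem_nhdsLT_of_mem ⟨hx.2, le_refl x₀⟩)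
      intro y hy
      have h1 := hq y ⟨hy.1.le, hy.2⟩
      have h2 : (0:ℝ) ≤ (deriv γ y ^ 2)⁻¹ := by positivity
      linarith only [h1, h2]
    have htend : Tendsto (fun y => c / 3 * y - c / 3 * x) (nhdsWithin x₀ (Iio x₀))
        (nhds (c / 3 * x₀ - c / 3 * x)) := by
      apply Tendsto.mono_left _ nhdsWithin_le_nhds
      exact ((continuous_const.mul continuous_id).sub continuous_const).tendsto x₀
    have := le_of_tendsto htend hev
    linarith only [this]
  -- pointwise bound on the derivative
  have hsqb : ∀ x ∈ Ico x₂ x₀,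
      -Real.sqrt (3 / c) / Real.sqrt (x₀ - x) ≤ deriv γ x := by
    intro x hx
    have h := hM x hx
    have hU1' : deriv γ x ≤ -1 := hU1 x hx
    have hxx : (0:ℝ) < x₀ - x := by linarith [hx.2]
    have hu2pos : (0:ℝ) < deriv γ x ^ 2 := by nlinarith
    have hU2 : deriv γ x ^ 2 ≤ 3 / c / (x₀ - x) := by
      have h1 : deriv γ x ^ 2 * (c / 3 * (x₀ - x)) ≤ 1 := by
        have h2 := mul_le_mul_of_nonneg_left h hu2pos.le
        rwa [mul_inv_cancel₀ hu2pos.ne'] at h2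
      rw [div_div, le_div_iff₀ (mul_pos hc hxx)]
      nlinarith [h1]
    have h2 : -deriv γ x ≤ Real.sqrt (3 / c / (x₀ - x)) := by
      have h3 := Real.sqrt_le_sqrt hU2
      rwa [Real.sqrt_sq_eq_abs, abs_of_neg (by linarith : deriv γ x < 0)] at h3
    rw [Real.sqrt_div (by positivity : (0:ℝ) ≤ 3 / c)] at h2
    rw [neg_div]
    linarith only [h2]
  -- lower bound for γ on [x₂, x₀)
  have hγlow : ∀ x ∈ Ico x₂ x₀,
      γ x₂ - 2 * Real.sqrt (3 / c) * Real.sqrt (x₀ - x₂) ≤ γ x := by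
    have hd : ∀ y ∈ Ico x₂ x₀,
        HasDerivAt (fun y => γ y - 2 * Real.sqrt (3 / c) * Real.sqrt (x₀ - y))
          (deriv γ y + Real.sqrt (3 / c) / Real.sqrt (x₀ - y)) y := by
      intro y hy
      have hyI := hmem2 y hy
      have hy0 : (0:ℝ) < x₀ - y := by linarith [hy.2]
      have hinner : HasDerivAt (fun y : ℝ => x₀ - y) (-1) y := by
        simpa using (hasDerivAt_id y).const_sub x₀
      have hs : HasDerivAt (fun y => Real.sqrt (x₀ - y))
          (1 / (2 * Real.sqrt (x₀ - y)) * (-1)) y :=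
        (Real.hasDerivAt_sqrt hy0.ne').comp y hinner
      have hder := ((hγd y hyI).hasDerivAt).sub (hs.const_mul (2 * Real.sqrt (3 / c)))
      refine hder.congr_deriv ?_
      have hsne : Real.sqrt (x₀ - y) ≠ 0 := by positivity
      field_simp
      ring
    have h0' : ∀ y ∈ Ico x₂ x₀,
        0 ≤ deriv γ y + Real.sqrt (3 / c) / Real.sqrt (x₀ - y) := by
      intro y hy
      have h1 := hsqb y hy
      rw [neg_div] at h1
      linarith only [h1]
    intro x hx
    have h2 := mono_from_base' hd h0' x hx
    have h3 : (0:ℝ) ≤ 2 * Real.sqrt (3 / c) * Real.sqrt (x₀ - x) := by positivity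
    linarith only [h2, h3]
  -- conclude
  have hx₂0 : (0:ℝ) ≤ x₂ := hx₂Ioo.1.le
  have hcont : ContinuousOn γ (Icc 0 x₂) :=
    hreg.continuousOn.mono fun y hy => ⟨hy.1, lt_of_le_of_lt hy.2 hx₂mem.2⟩
  obtain ⟨z, hz, hzmin⟩ := isCompact_Icc.exists_isMinOn (nonempty_Icc.2 hx₂0) hcont
  refine ⟨min (γ z) (γ x₂ - 2 * Real.sqrt (3 / c) * Real.sqrt (x₀ - x₂)), ?_⟩
  intro x hx
  by_cases hcase : x ≤ x₂
  · exact le_trans (min_le_left _ _) (hzmin ⟨hx.1, hcase⟩)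
  · push_neg at hcase
    exact le_trans (min_le_right _ _) (hγlow x ⟨hcase.le, hx.2⟩)
end

section
/- Let γ solve γ''/(1+(γ')²) = (x/2 - 1/x)·γ' - γ/2 with γ(0) = b, γ'(0) = 0, γ'' < 0, where 0 < b < √(2/(3π))·e⁻⁴. Then the first point x' > 0 with γ'(x') = -√3/3 satisfies x' > 2√2. In particular the blow-up point x₀ satisfies x₀ > 2√2 and |γ'(x)| ≤ √3/3 on [0, 2√2]. -/
open Set Real Filter

open Topology MeasureTheory intervalIntegral

set_option maxHeartbeats 1000000 in
theorem stmt_4 (γ : ℝ → ℝ) (x₀ b x' : ℝ)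
    (hb : 0 < b) (hb' : b < Real.sqrt (2 / (3 * π)) * Real.exp (-4))
    (hreg : ContDiffOn ℝ 2 γ (Ico 0 x₀))
    (hode : ∀ x ∈ Ioo 0 x₀,
      deriv (deriv γ) x / (1 + (deriv γ x) ^ 2) = (x / 2 - 1 / x) * deriv γ x - γ x / 2)
    (h0 : γ 0 = b) (h0' : deriv γ 0 = 0)
    (hconc : ∀ x ∈ Ioo 0 x₀, deriv (deriv γ) x < 0)
    (hblow : Tendsto (deriv γ) (nhdsWithin x₀ (Iio x₀)) atBot)
    (hx' : x' ∈ Ioo 0 x₀) (hval : deriv γ x' = -(Real.sqrt 3) / 3)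
    (hfirst : ∀ x ∈ Ioo 0 x', deriv γ x ≠ -(Real.sqrt 3) / 3) :
    2 * Real.sqrt 2 < x' ∧ 2 * Real.sqrt 2 < x₀ ∧
      ∀ x ∈ Icc 0 (2 * Real.sqrt 2), |deriv γ x| ≤ Real.sqrt 3 / 3 := by
  obtain ⟨hx'0, hx'x₀⟩ := hx'
  have hx₀ : (0:ℝ) < x₀ := hx'0.trans hx'x₀
  set S : Set ℝ := Ico 0 x₀ with hSdef
  have hSuniq : UniqueDiffOn ℝ S := uniqueDiffOn_Ico 0 x₀
  set g : ℝ → ℝ := derivWithin γ S with hgdef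
  have hgC1 : ContDiffOn ℝ 1 g S := hreg.derivWithin hSuniq (by norm_num)
  have hgcont : ContinuousOn g S := hgC1.continuousOn
  have hgdiff : DifferentiableOn ℝ g S := hgC1.differentiableOn one_ne_zero
  set f2 : ℝ → ℝ := derivWithin g S with hf2def
  have hf2cont : ContinuousOn f2 S := hgC1.continuousOn_derivWithin hSuniq (le_refl 1)
  have hmemS : ∀ x ∈ Ioo 0 x₀, S ∈ 𝓝 x := fun x hx => Ico_mem_nhds hx.1 hx.2
  have hgu : ∀ x ∈ Ioo 0 x₀, g x = deriv γ x := fun x hx =>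
    derivWithin_of_mem_nhds (hmemS x hx)
  have hueq : ∀ x ∈ Ioo 0 x₀, deriv γ =ᶠ[𝓝 x] g := by
    intro x hx
    filter_upwards [isOpen_Ioo.mem_nhds hx] with y hy
    exact (hgu y hy).symm
  have hf2eq : ∀ x ∈ Ioo 0 x₀, deriv (deriv γ) x = f2 x := by
    intro x hx
    rw [(hueq x hx).deriv_eq, ← derivWithin_of_mem_nhds (hmemS x hx)]
  have hu_hd : ∀ x ∈ Ioo 0 x₀, HasDerivAt (deriv γ) (deriv (deriv γ) x) x := by
    intro x hx
    have hda : DifferentiableAt ℝ g x :=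
      (hgdiff x ⟨hx.1.le, hx.2⟩).differentiableAt (hmemS x hx)
    have h1 : HasDerivAt (deriv γ) (deriv g x) x :=
      hda.hasDerivAt.congr_of_eventuallyEq (hueq x hx)
    rw [(hueq x hx).deriv_eq]
    exact h1
  -- rearranged ODE
  have hod' : ∀ x ∈ Ioo 0 x₀, deriv (deriv γ) x
      = (1 + (deriv γ x)^2) * ((x / 2 - 1 / x) * deriv γ x - γ x / 2) := by
    intro x hx
    have h1 : (0:ℝ) < 1 + (deriv γ x)^2 := by positivity
    have := hode x hx
    rw [div_eq_iff h1.ne'] at this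
    linear_combination this
  -- the right derivative of γ at 0 is 0
  have hg0 : g 0 = 0 := by
    set l : Filter ℝ := 𝓝[Ioo 0 x₀] 0 with hl
    have hne : l.NeBot := by
      refine mem_closure_iff_nhdsWithin_neBot.1 ?_
      rw [closure_Ioo hx₀.ne]
      exact ⟨le_refl 0, hx₀.le⟩
    have hls : l ≤ 𝓝[S] 0 := nhdsWithin_mono _ Ioo_subset_Ico_self
    have h0S : (0:ℝ) ∈ S := ⟨le_refl 0, hx₀⟩
    have hu_t : Tendsto (deriv γ) l (𝓝 (g 0)) := by
      refine Tendsto.congr' ?_ ((hgcont 0 h0S).mono_left hls)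
      filter_upwards [self_mem_nhdsWithin] with y hy using hgu y hy
    have hγ_t : Tendsto γ l (𝓝 b) := by
      have := (hreg.continuousOn 0 h0S).mono_left hls
      rwa [h0] at this
    have hdd_t : Tendsto (deriv (deriv γ)) l (𝓝 (f2 0)) := by
      refine Tendsto.congr' ?_ ((hf2cont 0 h0S).mono_left hls)
      filter_upwards [self_mem_nhdsWithin] with y hy using (hf2eq y hy).symm
    have hdd_eq : (fun x => deriv (deriv γ) x) =ᶠ[l] (fun x =>
        (x / 2 - 1 / x) * ((1 + (deriv γ x)^2) * deriv γ x)
          + (-((1 + (deriv γ x)^2) * γ x / 2))) := by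
      filter_upwards [self_mem_nhdsWithin] with y hy
      rw [hod' y hy]; ring
    have hT1 : Tendsto (fun x : ℝ => x / 2 - 1 / x) l atBot := by
      have h1 : Tendsto (fun x : ℝ => -(1 / x)) l atBot := by
        have : Tendsto (fun x : ℝ => 1 / x) l atTop := by
          simpa [one_div] using
            tendsto_inv_nhdsGT_zero.mono_left (nhdsWithin_mono _ Ioo_subset_Ioi_self : l ≤ 𝓝[>] (0:ℝ))
        exact tendsto_neg_atTop_atBot.comp this
      have h2 : ∀ᶠ x : ℝ in l, x / 2 ≤ 1 := by
        have : Tendsto (fun x : ℝ => x / 2) l (𝓝 0) := by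
          have := ((continuous_id.div_const (2:ℝ)).tendsto 0).mono_left
            (nhdsWithin_le_nhds : l ≤ 𝓝 0)
          simpa using this
        exact this.eventually (eventually_le_nhds (by norm_num))
      simpa [sub_eq_add_neg] using tendsto_atBot_add_left_of_ge' l (1:ℝ) h2 h1
    have hw_t : Tendsto (fun x => (1 + (deriv γ x)^2) * deriv γ x) l
        (𝓝 ((1 + (g 0)^2) * g 0)) := by
      exact ((tendsto_const_nhds.add (hu_t.pow 2)).mul hu_t)
    have hc_t : Tendsto (fun x => -((1 + (deriv γ x)^2) * γ x / 2)) l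
        (𝓝 (-((1 + (g 0)^2) * b / 2))) :=
      (((tendsto_const_nhds.add (hu_t.pow 2)).mul hγ_t).div_const 2).neg
    rcases lt_trichotomy (g 0) 0 with hneg | hzero | hpos
    · exfalso
      have hprod : Tendsto (fun x => (x / 2 - 1 / x) * ((1 + (deriv γ x)^2) * deriv γ x))
          l atTop := by
        refine hT1.atBot_mul_neg ?_ hw_t
        have : (0:ℝ) < 1 + (g 0)^2 := by positivity
        nlinarith
      have hsum : Tendsto (deriv (deriv γ)) l atTop := by
        refine Tendsto.congr' hdd_eq.symm ?_
        refine tendsto_atTop_add_right_of_le' l (-((1 + (g 0)^2) * b / 2) - 1) hprod ?_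
        exact hc_t.eventually (eventually_ge_nhds (by linarith))
      exact hdd_t.not_tendsto (disjoint_nhds_atTop _) hsum
    · exact hzero
    · exfalso
      have hprod : Tendsto (fun x => (x / 2 - 1 / x) * ((1 + (deriv γ x)^2) * deriv γ x))
          l atBot := by
        refine hT1.atBot_mul_pos ?_ hw_t
        have : (0:ℝ) < 1 + (g 0)^2 := by positivity
        nlinarith
      have hsum : Tendsto (deriv (deriv γ)) l atBot := by
        refine Tendsto.congr' hdd_eq.symm ?_
        refine tendsto_atBot_add_right_of_ge' l (-((1 + (g 0)^2) * b / 2) + 1) hprod ?_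
        exact hc_t.eventually (eventually_le_nhds (by linarith))
      exact hdd_t.not_tendsto (disjoint_nhds_atBot _) hsum
  -- deriv γ agrees with g on S, hence is continuous on S
  have hEqOn : EqOn (deriv γ) g S := by
    intro x hx
    rcases eq_or_lt_of_le hx.1 with h | h
    · rw [← h, h0', hg0]
    · exact (hgu x ⟨h, hx.2⟩).symm
  have hucontS : ContinuousOn (deriv γ) S := hgcont.congr hEqOn
  have hIccS : Icc 0 x' ⊆ S := fun y hy => ⟨hy.1, lt_of_le_of_lt hy.2 hx'x₀⟩
  have hucont : ContinuousOn (deriv γ) (Icc 0 x') := hucontS.mono hIccS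
  -- strict antitonicity of deriv γ
  have hanti : StrictAntiOn (deriv γ) (Icc 0 x') := by
    refine strictAntiOn_of_deriv_neg (convex_Icc _ _) hucont ?_
    intro x hx
    rw [interior_Icc] at hx
    exact hconc x ⟨hx.1, hx.2.trans hx'x₀⟩
  have hu_le : ∀ x ∈ Icc 0 x', deriv γ x ≤ 0 := by
    intro x hx
    rcases eq_or_lt_of_le hx.1 with h | h
    · rw [← h, h0']
    · have := hanti (left_mem_Icc.2 hx'0.le) hx h
      rw [h0'] at this; exact this.le
  have hu_ge : ∀ x ∈ Icc 0 x', -(Real.sqrt 3) / 3 ≤ deriv γ x := by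
    intro x hx
    rcases eq_or_lt_of_le hx.2 with h | h
    · rw [h, hval]
    · have := hanti hx (right_mem_Icc.2 hx'0.le) h
      rw [hval] at this; exact this.le
  -- γ ≤ b on [0, x']
  have hγdiff : DifferentiableOn ℝ γ (Ioo 0 x') := by
    intro x hx
    have hxS : x ∈ Ioo 0 x₀ := ⟨hx.1, hx.2.trans hx'x₀⟩
    exact (((hreg.differentiableOn (by norm_num)) x ⟨hx.1.le, hxS.2⟩).differentiableAt
      (hmemS x hxS)).differentiableWithinAt
  have hγanti : AntitoneOn γ (Icc 0 x') := by
    refine antitoneOn_of_deriv_nonpos (convex_Icc _ _) (hreg.continuousOn.mono hIccS) ?_ ?_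
    · rw [interior_Icc]; exact hγdiff
    · intro x hx
      rw [interior_Icc] at hx
      exact hu_le x ⟨hx.1.le, hx.2.le⟩
  have hγ_le : ∀ x ∈ Icc 0 x', γ x ≤ b := by
    intro x hx
    have := hγanti (left_mem_Icc.2 hx'0.le) hx hx.1
    rwa [h0] at this
  -- key differential inequality
  have h3 : Real.sqrt 3 ^ 2 = 3 := Real.sq_sqrt (by norm_num)
  have h3pos : (0:ℝ) < Real.sqrt 3 := Real.sqrt_pos.2 (by norm_num)
  have hkey : ∀ x ∈ Ioo 0 x', 0 ≤ deriv (deriv γ) x - x * deriv γ x + b := by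
    intro x hx
    have hxI : x ∈ Ioo 0 x₀ := ⟨hx.1, hx.2.trans hx'x₀⟩
    have hxc : x ∈ Icc 0 x' := ⟨hx.1.le, hx.2.le⟩
    rw [hod' x hxI]
    set u := deriv γ x with hu
    have hu1 : -(Real.sqrt 3) / 3 ≤ u := hu_ge x hxc
    have hu2 : u ≤ 0 := hu_le x hxc
    have hsq : u ^ 2 ≤ 1 / 3 := by nlinarith
    have hγb : γ x ≤ b := hγ_le x hxc
    have hx0 : 0 < x := hx.1
    have hy0 : 0 < 1 / x := by positivity
    have hxy : x * (1 / x) = 1 := by field_simp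
    have hA : 0 ≤ u * ((1 + u ^ 2) * (x / 2 - 1 / x) - x) := by
      have hbr : (1 + u ^ 2) * (x / 2 - 1 / x) - x ≤ 0 := by nlinarith
      nlinarith [mul_nonneg (neg_nonneg.2 hu2) (neg_nonneg.2 hbr)]
    have hB : 0 ≤ b - (1 + u ^ 2) * (γ x / 2) := by nlinarith
    nlinarith [hA, hB]
  -- monotone quantity F
  set E : ℝ → ℝ := fun t => Real.exp (-(1/2) * t ^ 2) with hEdef
  have hEcont : Continuous E := by fun_prop
  set G : ℝ → ℝ := fun x => ∫ t in (0:ℝ)..x, E t with hGdef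
  have hGd : ∀ x : ℝ, HasDerivAt G (E x) x := by
    intro x
    exact intervalIntegral.integral_hasDerivAt_right
      (hEcont.intervalIntegrable 0 x)
      (hEcont.stronglyMeasurable.stronglyMeasurableAtFilter)
      hEcont.continuousAt
  have hGcont : Continuous G := by
    refine continuous_iff_continuousAt.2 fun x => (hGd x).continuousAt
  set F : ℝ → ℝ := fun x => E x * deriv γ x + b * G x with hFdef
  have hFd : ∀ x ∈ Ioo 0 x', HasDerivAt F
      (E x * (deriv (deriv γ) x - x * deriv γ x + b)) x := by
    intro x hx
    have hxI : x ∈ Ioo 0 x₀ := ⟨hx.1, hx.2.trans hx'x₀⟩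
    have hE' : HasDerivAt E (E x * (-(1/2) * (2 * x ^ 1))) x := by
      exact (((hasDerivAt_pow 2 x).const_mul (-(1/2))).exp)
    have h1 : HasDerivAt (fun y => E y * deriv γ y)
        (E x * (-(1/2) * (2 * x ^ 1)) * deriv γ x + E x * deriv (deriv γ) x) x :=
      hE'.mul (hu_hd x hxI)
    have h2 : HasDerivAt (fun y => b * G y) (b * E x) x := (hGd x).const_mul b
    have := h1.add h2
    refine this.congr_deriv ?_
    ring
  have hFmono : MonotoneOn F (Icc 0 x') := by
    refine monotoneOn_of_deriv_nonneg (convex_Icc _ _) ?_ ?_ ?_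
    · exact ((hEcont.continuousOn).mul hucont).add (continuous_const.mul hGcont).continuousOn
    · rw [interior_Icc]
      exact fun x hx => ((hFd x hx).differentiableAt).differentiableWithinAt
    · intro x hx
      rw [interior_Icc] at hx
      rw [(hFd x hx).deriv]
      exact mul_nonneg (Real.exp_pos _).le (hkey x hx)
  have hF0 : F 0 = 0 := by
    simp [hFdef, hGdef, h0', intervalIntegral.integral_same, hEdef]
  have hFx' : 0 ≤ F x' := by
    rw [← hF0]
    exact hFmono (left_mem_Icc.2 hx'0.le) (right_mem_Icc.2 hx'0.le) hx'0.le
  -- bound on the integral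
  have hG_le : G x' ≤ Real.sqrt (π / (1/2)) / 2 := by
    have hGx : G x' = ∫ t in Ioc (0:ℝ) x', E t := intervalIntegral.integral_of_le hx'0.le
    rw [hGx]
    have hInt : IntegrableOn E (Ioi 0) volume := by
      have := integrable_exp_neg_mul_sq (show (0:ℝ) < 1/2 by norm_num)
      exact this.integrableOn
    have h1 : ∫ t in Ioc (0:ℝ) x', E t ≤ ∫ t in Ioi (0:ℝ), E t := by
      refine setIntegral_mono_set hInt ?_ ?_
      · exact ae_of_all _ fun t => (Real.exp_pos _).le
      · exact HasSubset.Subset.eventuallyLE Ioc_subset_Ioi_self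
    calc ∫ t in Ioc (0:ℝ) x', E t ≤ ∫ t in Ioi (0:ℝ), E t := h1
      _ = Real.sqrt (π / (1/2)) / 2 := integral_gaussian_Ioi (1/2)
  -- extract the exponential bound
  have hbound : Real.sqrt 3 / 3 * E x' ≤ b * (Real.sqrt (π / (1/2)) / 2) := by
    have hFval : F x' = E x' * (-(Real.sqrt 3) / 3) + b * G x' := by
      show E x' * deriv γ x' + b * G x' = _
      rw [hval]
    have h1 : Real.sqrt 3 / 3 * E x' ≤ b * G x' := by
      rw [hFval] at hFx'; nlinarith [Real.exp_pos (-(1/2) * x' ^ 2)]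
    calc Real.sqrt 3 / 3 * E x' ≤ b * G x' := h1
      _ ≤ b * (Real.sqrt (π / (1/2)) / 2) := by
          exact mul_le_mul_of_nonneg_left hG_le hb.le
  -- the identity √(2/(3π)) * (√(π/(1/2))/2) = √3/3
  have hid : Real.sqrt (2 / (3 * π)) * (Real.sqrt (π / (1/2)) / 2) = Real.sqrt 3 / 3 := by
    have hπ : (0:ℝ) < π := Real.pi_pos
    rw [show π / (1/2) = 2 * π by ring]
    rw [← mul_div_assoc, ← Real.sqrt_mul (by positivity) (2 * π)]
    rw [show 2 / (3 * π) * (2 * π) = 4 / 3 by field_simp; ring]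
    rw [show (4:ℝ)/3 = (2 * Real.sqrt 3 / 3)^2 by nlinarith]
    rw [Real.sqrt_sq (by positivity)]
    ring
  have hexp_lt : E x' < Real.exp (-4) := by
    have h2 : Real.sqrt 3 / 3 * E x' < Real.sqrt 3 / 3 * Real.exp (-4) := by
      calc Real.sqrt 3 / 3 * E x' ≤ b * (Real.sqrt (π / (1/2)) / 2) := hbound
        _ < Real.sqrt (2 / (3 * π)) * Real.exp (-4) * (Real.sqrt (π / (1/2)) / 2) := by
            have hpos : (0:ℝ) < Real.sqrt (π / (1/2)) / 2 := by
              have : (0:ℝ) < π / (1/2) := by positivity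
              positivity
            exact mul_lt_mul_of_pos_right hb' hpos
        _ = Real.sqrt 3 / 3 * Real.exp (-4) := by rw [← hid]; ring
    have hpos : (0:ℝ) < Real.sqrt 3 / 3 := by positivity
    exact lt_of_mul_lt_mul_left h2 hpos.le
  have hx'sq : 8 < x' ^ 2 := by
    have := Real.exp_lt_exp.1 hexp_lt
    linarith
  have h2sqrt : (2 * Real.sqrt 2) ^ 2 = 8 := by
    rw [mul_pow, Real.sq_sqrt (by norm_num : (0:ℝ) ≤ 2)]; norm_num
  have hmain : 2 * Real.sqrt 2 < x' := by
    have h8 : (2 * Real.sqrt 2) ^ 2 < x' ^ 2 := by rw [h2sqrt]; exact hx'sq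
    exact lt_of_pow_lt_pow_left₀ 2 hx'0.le h8
  refine ⟨hmain, hmain.trans hx'x₀, ?_⟩
  intro x hx
  have hxc : x ∈ Icc 0 x' := ⟨hx.1, hx.2.trans hmain.le⟩
  rw [abs_le]
  constructor
  · have := hu_ge x hxc
    linarith
  · have := hu_le x hxc
    have : deriv γ x ≤ 0 := this
    have hpos : (0:ℝ) ≤ Real.sqrt 3 / 3 := by positivity
    linarith
end

section
/- Let γ solve γ''/(1+(γ')²) = (x/2 - 1/x)·γ' - γ/2 with γ(0) = b > 0, γ'(0) = 0, γ'' < 0 on (0, x₀), and suppose |γ'(x)| ≤ √3/3 for x ∈ [0, √2]. Then γ'''(x) < 0 for all x ∈ (0, x₀). -/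
open Set Real Filter

lemma keyD1 {γ u v : ℝ → ℝ} {x : ℝ} (hx : x ≠ 0)
    (hγ : HasDerivAt γ (u x) x) (hu : HasDerivAt u (v x) x) :
    HasDerivAt (fun y => (1 + u y ^ 2) * ((y/2 - 1/y) * u y - γ y / 2))
      (2*u x*v x*((x/2-1/x)*u x - γ x/2)
        + (1+u x^2)*((1/2+1/x^2)*u x + (x/2-1/x)*v x - u x/2)) x := by
  have hhalf : HasDerivAt (fun y : ℝ => y/2) (1/2) x := (hasDerivAt_id x).div_const 2
  have hinv : HasDerivAt (fun y : ℝ => 1/y) (-(1/x^2)) x := by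
    simpa [one_div] using hasDerivAt_inv hx
  have hu2 : HasDerivAt (fun y => 1 + u y ^ 2) ((2:ℕ) * u x ^ 1 * v x) x :=
    (hu.pow 2).const_add 1
  have hK : HasDerivAt (fun y => (y/2 - 1/y) * u y - γ y / 2)
      (((1/2 - -(1/x^2)) * u x + (x/2 - 1/x) * v x) - u x / 2) x :=
    ((hhalf.sub hinv).mul hu).sub (hγ.div_const 2)
  have H := hu2.mul hK
  refine H.congr_deriv ?_
  push_cast; ring

lemma keyD2 {γ u v w : ℝ → ℝ} {x : ℝ} (hx : x ≠ 0)
    (hγ : HasDerivAt γ (u x) x) (hu : HasDerivAt u (v x) x) (hv : HasDerivAt v (w x) x) :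
    HasDerivAt (fun y => 2*u y*v y*((y/2-1/y)*u y - γ y/2)
        + (1+u y^2)*((1/2+1/y^2)*u y + (y/2-1/y)*v y - u y/2))
      (2*(v x*v x + u x*w x)*((x/2-1/x)*u x - γ x/2)
        + 2*u x*v x*((1/2+1/x^2)*u x + (x/2-1/x)*v x - u x/2)
        + 2*u x*v x*((1/2+1/x^2)*u x + (x/2-1/x)*v x - u x/2)
        + (1+u x^2)*((-(2/x^3))*u x + (1/2+1/x^2)*v x + (1/2+1/x^2)*v x
            + (x/2-1/x)*w x - v x/2)) x := by
  have hhalf : HasDerivAt (fun y : ℝ => y/2) (1/2) x := (hasDerivAt_id x).div_const 2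
  have hinv : HasDerivAt (fun y : ℝ => 1/y) (-(1/x^2)) x := by
    simpa [one_div] using hasDerivAt_inv hx
  have hinv2 : HasDerivAt (fun y : ℝ => 1/y^2) (-(2/x^3)) x := by
    have h := ((hasDerivAt_const x (1:ℝ)).div (hasDerivAt_pow 2 x) (pow_ne_zero 2 hx))
    refine h.congr_deriv ?_
    field_simp
    ring
  have h2uv : HasDerivAt (fun y => 2*u y*v y) ((2 * v x) * v x + 2 * u x * w x) x := by
    have := (hu.const_mul 2).mul hv
    exact this
  have hK : HasDerivAt (fun y => (y/2 - 1/y) * u y - γ y / 2)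
      (((1/2 - -(1/x^2)) * u x + (x/2 - 1/x) * v x) - u x / 2) x :=
    ((hhalf.sub hinv).mul hu).sub (hγ.div_const 2)
  have hhi : HasDerivAt (fun y : ℝ => 1/2 + 1/y^2) (-(2/x^3)) x := hinv2.const_add (1/2)
  have hB : HasDerivAt (fun y => (1/2+1/y^2)*u y + (y/2-1/y)*v y - u y/2)
      ((-(2/x^3)) * u x + (1/2+1/x^2) * v x
        + ((1/2 - -(1/x^2)) * v x + (x/2-1/x) * w x) - v x/2) x :=
    ((hhi.mul hu).add ((hhalf.sub hinv).mul hv)).sub (hu.div_const 2)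
  have hu2 : HasDerivAt (fun y => 1 + u y ^ 2) ((2:ℕ) * u x ^ 1 * v x) x :=
    (hu.pow 2).const_add 1
  have H := (h2uv.mul hK).add (hu2.mul hB)
  refine H.congr_deriv ?_
  push_cast; ring

set_option maxHeartbeats 2000000 in
theorem stmt_5 (γ : ℝ → ℝ) (x₀ b : ℝ) (hb : 0 < b) (hx₀ : 0 < x₀)
    (hreg : ContDiffOn ℝ 4 γ (Ico 0 x₀))
    (hode : ∀ x ∈ Ioo 0 x₀,
      deriv (deriv γ) x / (1 + (deriv γ x) ^ 2) = (x / 2 - 1 / x) * deriv γ x - γ x / 2)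
    (h0 : γ 0 = b) (h0' : deriv γ 0 = 0)
    (hconc : ∀ x ∈ Ioo 0 x₀, deriv (deriv γ) x < 0)
    (h3 : iteratedDeriv 3 γ 0 = 0) (h4 : iteratedDeriv 4 γ 0 < 0)
    (hsmall : ∀ x ∈ Icc 0 (Real.sqrt 2), |deriv γ x| ≤ Real.sqrt 3 / 3) :
    ∀ x ∈ Ioo 0 x₀, iteratedDeriv 3 γ x < 0 := by
  have hw3 : iteratedDeriv 3 γ = deriv (deriv (deriv γ)) := by
    rw [iteratedDeriv_succ, iteratedDeriv_succ, iteratedDeriv_one]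
  have hw4 : iteratedDeriv 4 γ = deriv (deriv (deriv (deriv γ))) := by
    rw [iteratedDeriv_succ, hw3]
  set u := deriv γ with hu_def
  set v := deriv u with hv_def
  set w := deriv v with hw_def
  set z := deriv w with hz_def
  rw [hw3] at h3
  rw [hw4] at h4
  simp only [hw3]
  have hO : IsOpen (Ioo (0:ℝ) x₀) := isOpen_Ioo
  have hγO : ContDiffOn ℝ 4 γ (Ioo 0 x₀) := hreg.mono Ioo_subset_Ico_self
  have huO : ContDiffOn ℝ 3 u (Ioo 0 x₀) := hγO.deriv_of_isOpen hO (by norm_num)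
  have hvO : ContDiffOn ℝ 2 v (Ioo 0 x₀) := huO.deriv_of_isOpen hO (by norm_num)
  have hwO : ContDiffOn ℝ 1 w (Ioo 0 x₀) := hvO.deriv_of_isOpen hO (by norm_num)
  have hdγ : ∀ x ∈ Ioo 0 x₀, HasDerivAt γ (u x) x := fun x hx =>
    ((hγO.differentiableOn (by norm_num)).differentiableAt (hO.mem_nhds hx)).hasDerivAt
  have hdu : ∀ x ∈ Ioo 0 x₀, HasDerivAt u (v x) x := fun x hx =>
    ((huO.differentiableOn (by norm_num)).differentiableAt (hO.mem_nhds hx)).hasDerivAt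
  have hdv : ∀ x ∈ Ioo 0 x₀, HasDerivAt v (w x) x := fun x hx =>
    ((hvO.differentiableOn (by norm_num)).differentiableAt (hO.mem_nhds hx)).hasDerivAt
  have hdw : ∀ x ∈ Ioo 0 x₀, HasDerivAt w (z x) x := fun x hx =>
    ((hwO.differentiableOn (by norm_num)).differentiableAt (hO.mem_nhds hx)).hasDerivAt
  have hp : ∀ s : ℝ, (0:ℝ) < 1 + s^2 := fun s => by positivity
  -- product form of the ODE
  have hode2 : ∀ y ∈ Ioo 0 x₀, v y = (1 + u y^2) * ((y/2 - 1/y)*u y - γ y/2) := by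
    intro y hy
    have h := hode y hy
    rw [div_eq_iff (ne_of_gt (hp (u y)))] at h
    linear_combination h
  -- formula for w on the open interval
  have hwf : ∀ x ∈ Ioo 0 x₀, w x = 2*u x*v x*((x/2-1/x)*u x - γ x/2)
      + (1+u x^2)*((1/2+1/x^2)*u x + (x/2-1/x)*v x - u x/2) := by
    intro x hx
    have hR := keyD1 (ne_of_gt hx.1) (hdγ x hx) (hdu x hx)
    have heq : v =ᶠ[nhds x] (fun y => (1 + u y ^ 2) * ((y/2 - 1/y) * u y - γ y / 2)) := by
      filter_upwards [hO.mem_nhds hx] with y hy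
      exact hode2 y hy
    exact (hdv x hx).unique (hR.congr_of_eventuallyEq heq)
  -- limits at 0⁺
  have hUD : UniqueDiffOn ℝ (Ico 0 x₀) := uniqueDiffOn_Ico 0 x₀
  set u₁ := derivWithin γ (Ico 0 x₀) with hu1_def
  have hu1O : ContDiffOn ℝ 3 u₁ (Ico 0 x₀) := hreg.derivWithin hUD (by norm_num)
  set v₁ := derivWithin u₁ (Ico 0 x₀) with hv1_def
  have hv1O : ContDiffOn ℝ 2 v₁ (Ico 0 x₀) := hu1O.derivWithin hUD (by norm_num)
  have hmem : ∀ y ∈ Ioo 0 x₀, Ico 0 x₀ ∈ nhds y := fun y hy =>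
    mem_of_superset (hO.mem_nhds hy) Ioo_subset_Ico_self
  have hu1eq : ∀ y ∈ Ioo 0 x₀, u₁ y = u y := fun y hy => derivWithin_of_mem_nhds (hmem y hy)
  have hv1eq : ∀ y ∈ Ioo 0 x₀, v₁ y = v y := by
    intro y hy
    rw [hv1_def, derivWithin_of_mem_nhds (hmem y hy)]
    apply Filter.EventuallyEq.deriv_eq
    filter_upwards [hO.mem_nhds hy] with t ht
    exact hu1eq t ht
  have hIoo_mem : Ioo (0:ℝ) x₀ ∈ nhdsWithin (0:ℝ) (Ioi 0) :=
    Ioo_mem_nhdsGT_of_mem ⟨le_refl 0, hx₀⟩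
  have hle1 : nhdsWithin (0:ℝ) (Ioi 0) ≤ nhdsWithin 0 (Ico 0 x₀) := by
    refine le_trans (nhdsWithin_le_of_mem hIoo_mem) (nhdsWithin_mono _ Ioo_subset_Ico_self)
  have hutend : Tendsto u (nhdsWithin (0:ℝ) (Ioi 0)) (nhds (u₁ 0)) := by
    have h := (hu1O.continuousOn.continuousWithinAt (⟨le_refl 0, hx₀⟩ : (0:ℝ) ∈ Ico 0 x₀))
    refine (h.mono_left hle1).congr' ?_
    filter_upwards [hIoo_mem] with t ht
    exact hu1eq t ht
  have hvtend : Tendsto v (nhdsWithin (0:ℝ) (Ioi 0)) (nhds (v₁ 0)) := by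
    have h := (hv1O.continuousOn.continuousWithinAt (⟨le_refl 0, hx₀⟩ : (0:ℝ) ∈ Ico 0 x₀))
    refine (h.mono_left hle1).congr' ?_
    filter_upwards [hIoo_mem] with t ht
    exact hv1eq t ht
  have hγtend : Tendsto γ (nhdsWithin (0:ℝ) (Ioi 0)) (nhds b) := by
    have h : Tendsto γ (nhdsWithin 0 (Ico 0 x₀)) (nhds (γ 0)) :=
      hreg.continuousOn.continuousWithinAt (⟨le_refl 0, hx₀⟩ : (0:ℝ) ∈ Ico 0 x₀)
    rw [h0] at h
    exact h.mono_left hle1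
  -- u tends to 0
  have hxtend : Tendsto (fun x : ℝ => x/(x^2/2 - 1)) (nhdsWithin (0:ℝ) (Ioi 0)) (nhds 0) := by
    have hc : ContinuousAt (fun x : ℝ => x/(x^2/2 - 1)) 0 := by
      apply ContinuousAt.div
      · exact continuousAt_id
      · fun_prop
      · norm_num
    have h2 : Tendsto (fun x : ℝ => x/(x^2/2 - 1)) (nhdsWithin (0:ℝ) (Ioi 0))
        (nhds ((0:ℝ)/((0:ℝ)^2/2 - 1))) :=
      hc.tendsto.mono_left (nhdsWithin_le_nhds)
    norm_num at h2
    exact h2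
  have hutend0 : Tendsto u (nhdsWithin (0:ℝ) (Ioi 0)) (nhds 0) := by
    have hmain : Tendsto (fun x => (v x/(1+u x^2) + γ x/2) * (x/(x^2/2 - 1)))
        (nhdsWithin (0:ℝ) (Ioi 0)) (nhds ((v₁ 0/(1+u₁ 0^2) + b/2) * 0)) := by
      refine Tendsto.mul ?_ hxtend
      refine Tendsto.add ?_ (hγtend.div_const 2)
      refine Tendsto.div hvtend ?_ (ne_of_gt (hp (u₁ 0)))
      have : Tendsto (fun x => u x ^ 2) (nhdsWithin (0:ℝ) (Ioi 0)) (nhds (u₁ 0 ^ 2)) :=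
        hutend.pow 2
      simpa using this.const_add 1
    rw [mul_zero] at hmain
    have hcongr : ∀ᶠ x in nhdsWithin (0:ℝ) (Ioi 0),
        (v x/(1+u x^2) + γ x/2) * (x/(x^2/2 - 1)) = u x := by
      have h1 : Ioo (0:ℝ) 1 ∈ nhdsWithin (0:ℝ) (Ioi 0) :=
        Ioo_mem_nhdsGT_of_mem ⟨le_refl 0, one_pos⟩
      filter_upwards [hIoo_mem, h1] with x hx hx1
      have hqe := hode x hx
      have hxne : x ≠ 0 := ne_of_gt hx.1
      have hden : x^2/2 - 1 ≠ 0 := by nlinarith [hx1.1, hx1.2]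
      have hone : (x/2 - 1/x) * (x/(x^2/2-1)) = 1 := by
        have hd2 : x^2 - 2 ≠ 0 := by nlinarith [hx1.1, hx1.2]
        field_simp
      rw [hqe]
      linear_combination u x * hone
    exact hmain.congr' hcongr
  have hu10 : u₁ 0 = 0 := tendsto_nhds_unique hutend hutend0
  have hφtend : Tendsto (fun x => x * v x - u x) (nhdsWithin (0:ℝ) (Ioi 0)) (nhds 0) := by
    have hid : Tendsto (fun x : ℝ => x) (nhdsWithin (0:ℝ) (Ioi 0)) (nhds 0) :=
      tendsto_id.mono_left nhdsWithin_le_nhds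
    have := (hid.mul hvtend).sub hutend0
    simpa using this
  -- u is negative on the interval
  have hanti : StrictAntiOn u (Ioo 0 x₀) := by
    apply strictAntiOn_of_deriv_neg (convex_Ioo 0 x₀) huO.continuousOn
    intro t ht
    rw [interior_Ioo] at ht
    exact hconc t ht
  have hule : ∀ x ∈ Ioo 0 x₀, u x ≤ 0 := by
    intro x hx
    refine ge_of_tendsto hutend0 ?_
    filter_upwards [Ioo_mem_nhdsGT_of_mem (⟨le_refl 0, hx.1⟩ : (0:ℝ) ∈ Ico 0 x)] with t ht
    exact le_of_lt (hanti ⟨ht.1, ht.2.trans hx.2⟩ hx ht.2)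
  have hult : ∀ x ∈ Ioo 0 x₀, u x < 0 := by
    intro x hx
    have h2 : x/2 ∈ Ioo 0 x₀ := ⟨by linarith [hx.1], by linarith [hx.1, hx.2]⟩
    exact lt_of_lt_of_le (hanti h2 hx (by linarith [hx.1])) (hule _ h2)
  -- w is negative near 0
  have hwdiff0 : DifferentiableAt ℝ w 0 := by
    by_contra h
    have hz0 : z 0 = 0 := deriv_zero_of_not_differentiableAt h
    linarith
  obtain ⟨δ, hδpos, hδ⟩ : ∃ δ > 0, ∀ t ∈ Ioo (0:ℝ) δ, w t < 0 := by
    have hd : HasDerivAt w (z 0) 0 := hwdiff0.hasDerivAt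
    have hs := hasDerivAt_iff_tendsto_slope.mp hd
    have hmono : nhdsWithin (0:ℝ) (Ioi 0) ≤ nhdsWithin 0 {(0:ℝ)}ᶜ :=
      nhdsWithin_mono _ (fun t ht => ne_of_gt ht)
    have hev : ∀ᶠ t in nhdsWithin (0:ℝ) (Ioi 0), slope w 0 t < 0 :=
      (hs.mono_left hmono).eventually (eventually_lt_nhds h4)
    have hwneg : ∀ᶠ t in nhdsWithin (0:ℝ) (Ioi 0), w t < 0 := by
      filter_upwards [hev, self_mem_nhdsWithin] with t h1 h2
      rw [slope_def_field] at h1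
      rw [h3, sub_zero, sub_zero] at h1
      have := (div_lt_iff₀ h2).mp h1
      linarith
    rw [eventually_iff, mem_nhdsGT_iff_exists_Ioo_subset] at hwneg
    obtain ⟨d, hd1, hd2⟩ := hwneg
    exact ⟨d, hd1, fun t ht => hd2 ht⟩
  -- main contradiction setup
  by_contra hcon
  push_neg at hcon
  obtain ⟨c, hc, hwc⟩ := hcon
  -- step A : w < 0 for x ≥ √2, hence c < √2
  have hclt : c < Real.sqrt 2 := by
    by_contra hge
    push_neg at hge
    have hcpos : 0 < c := hc.1
    have hc2 : 2 ≤ c^2 := by nlinarith [Real.sq_sqrt (by norm_num : (2:ℝ) ≥ 0), Real.sqrt_nonneg 2]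
    have hU := hult c hc
    have hV := hconc c hc
    have hwcf := hwf c hc
    have hKc : (c/2 - 1/c)*u c - γ c/2 = v c/(1+u c^2) := (hode c hc).symm
    rw [hKc] at hwcf
    have hPc : (0:ℝ) < 1 + u c^2 := hp _
    have e : w c = 2*u c*(v c)^2/(1+u c^2)
        + ((1+u c^2)*(u c/c^2) + (1+u c^2)*((c/2-1/c)*v c)) := by
      rw [hwcf]; field_simp; ring
    have t1 : 2*u c*(v c)^2/(1+u c^2) < 0 := by
      apply div_neg_of_neg_of_pos _ hPc
      have h2 : 0 < (v c)^2 := pow_two_pos_of_ne_zero (ne_of_lt hV)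
      nlinarith
    have t2 : (1+u c^2)*(u c/c^2) < 0 :=
      mul_neg_of_pos_of_neg hPc (div_neg_of_neg_of_pos hU (by positivity))
    have t3 : (1+u c^2)*((c/2-1/c)*v c) ≤ 0 := by
      have h1 : 0 ≤ c/2 - 1/c := by
        rw [sub_nonneg, div_le_div_iff₀ hcpos (by norm_num : (0:ℝ) < 2)]
        nlinarith
      exact mul_nonpos_of_nonneg_of_nonpos (le_of_lt hPc)
        (mul_nonpos_of_nonneg_of_nonpos h1 (le_of_lt hV))
    linarith
  -- the first touching point
  set δ' := min δ c with hδ'_def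
  have hδ'pos : 0 < δ' := lt_min hδpos hc.1
  set S := Icc δ' c ∩ w ⁻¹' (Ici 0) with hS_def
  have hSclosed : IsClosed S := by
    apply ContinuousOn.preimage_isClosed_of_isClosed _ isClosed_Icc isClosed_Ici
    exact hwO.continuousOn.mono (fun t ht => ⟨lt_of_lt_of_le hδ'pos ht.1, lt_of_le_of_lt ht.2 hc.2⟩)
  have hSne : S.Nonempty := ⟨c, ⟨⟨min_le_right δ c, le_refl c⟩, hwc⟩⟩
  have hSbdd : BddBelow S := ⟨δ', fun t ht => ht.1.1⟩
  set X := sInf S with hX_def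
  have hXS : X ∈ S := hSclosed.csInf_mem hSne hSbdd
  have hXpos : 0 < X := lt_of_lt_of_le hδ'pos hXS.1.1
  have hXO : X ∈ Ioo 0 x₀ := ⟨hXpos, lt_of_le_of_lt hXS.1.2 hc.2⟩
  have hXsqrt : X < Real.sqrt 2 := lt_of_le_of_lt hXS.1.2 hclt
  -- w < 0 strictly before X
  have hwlt : ∀ t, 0 < t → t < X → w t < 0 := by
    intro t ht1 ht2
    by_cases hcase : t < δ'
    · exact hδ t ⟨ht1, lt_of_lt_of_le hcase (min_le_left δ c)⟩
    · push_neg at hcase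
      by_contra hge
      push_neg at hge
      have : t ∈ S := ⟨⟨hcase, le_of_lt (lt_of_lt_of_le ht2 hXS.1.2)⟩, hge⟩
      exact absurd (csInf_le hSbdd this) (not_le.mpr ht2)
  -- w X = 0
  have hwX : w X = 0 := by
    refine le_antisymm ?_ hXS.2
    have hcont : Tendsto w (nhdsWithin X (Iio X)) (nhds (w X)) :=
      (((hwO.differentiableOn (by norm_num)).differentiableAt
        (hO.mem_nhds hXO)).continuousAt.tendsto).mono_left nhdsWithin_le_nhds
    refine le_of_tendsto hcont ?_
    filter_upwards [Ioo_mem_nhdsLT_of_mem (⟨hXpos, le_refl X⟩ : X ∈ Ioc 0 X)] with t ht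
    exact le_of_lt (hwlt t ht.1 ht.2)
  -- z X ≥ 0
  have hZ : 0 ≤ z X := by
    have hd := hdw X hXO
    have hs := hasDerivAt_iff_tendsto_slope.mp hd
    have hmono : nhdsWithin X (Iio X) ≤ nhdsWithin X {X}ᶜ :=
      nhdsWithin_mono _ (fun t ht => ne_of_lt ht)
    refine ge_of_tendsto (hs.mono_left hmono) ?_
    filter_upwards [Ioo_mem_nhdsLT_of_mem (⟨hXpos, le_refl X⟩ : X ∈ Ioc 0 X)] with t ht
    rw [slope_def_field, hwX, sub_zero]
    have h1 : w t ≤ 0 := le_of_lt (hwlt t ht.1 ht.2)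
    have h2 : t - X < 0 := by linarith [ht.2]
    rw [div_nonneg_iff]
    right
    exact ⟨h1, le_of_lt h2⟩
  -- φ(X) ≤ 0 : X * v X ≤ u X
  have hφX : X * v X - u X ≤ 0 := by
    have hsubset : Ioc 0 X ⊆ Ioo 0 x₀ := fun t ht => ⟨ht.1, lt_of_le_of_lt ht.2 hXO.2⟩
    have hφanti : StrictAntiOn (fun t => t * v t - u t) (Ioc 0 X) := by
      apply strictAntiOn_of_deriv_neg (convex_Ioc 0 X)
      · exact ((continuousOn_id.mul (hvO.continuousOn.mono hsubset)).sub
          (huO.continuousOn.mono hsubset))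
      · intro t ht
        rw [interior_Ioc] at ht
        have htO : t ∈ Ioo 0 x₀ := hsubset ⟨ht.1, le_of_lt ht.2⟩
        have hd : HasDerivAt (fun t => t * v t - u t) (t * w t) t := by
          have := ((hasDerivAt_id t).mul (hdv t htO)).sub (hdu t htO)
          refine this.congr_deriv ?_
          simp [id_eq]
        rw [hd.deriv]
        exact mul_neg_of_pos_of_neg ht.1 (hwlt t ht.1 ht.2)
    refine ge_of_tendsto hφtend ?_
    filter_upwards [Ioo_mem_nhdsGT_of_mem (⟨le_refl 0, hXpos⟩ : (0:ℝ) ∈ Ico 0 X)] with t ht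
    exact le_of_lt (hφanti ⟨ht.1, le_of_lt ht.2⟩ ⟨hXpos, le_refl X⟩ ht.2)
  -- |u X| small
  have hU2 : u X ^ 2 ≤ 1/3 := by
    have habs := hsmall X ⟨le_of_lt hXpos, le_of_lt hXsqrt⟩
    have h := abs_le.mp habs
    have h3s : Real.sqrt 3 ^ 2 = 3 := Real.sq_sqrt (by norm_num)
    nlinarith [h.1, h.2, Real.sqrt_nonneg 3]
  -- the formula for z X
  have hzeq : z X = 2*(v X*v X + u X*w X)*((X/2-1/X)*u X - γ X/2)
      + 2*u X*v X*((1/2+1/X^2)*u X + (X/2-1/X)*v X - u X/2)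
      + 2*u X*v X*((1/2+1/X^2)*u X + (X/2-1/X)*v X - u X/2)
      + (1+u X^2)*((-(2/X^3))*u X + (1/2+1/X^2)*v X + (1/2+1/X^2)*v X
          + (X/2-1/X)*w X - v X/2) := by
    have hQ := keyD2 (ne_of_gt hXpos) (hdγ X hXO) (hdu X hXO) (hdv X hXO)
    have heq : w =ᶠ[nhds X] (fun y => 2*u y*v y*((y/2-1/y)*u y - γ y/2)
        + (1+u y^2)*((1/2+1/y^2)*u y + (y/2-1/y)*v y - u y/2)) := by
      filter_upwards [hO.mem_nhds hXO] with y hy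
      exact hwf y hy
    exact (hdw X hXO).unique (hQ.congr_of_eventuallyEq heq)
  -- final contradiction
  have hU := hult X hXO
  have hV := hconc X hXO
  have hP : (0:ℝ) < 1 + u X^2 := hp _
  have hKode : (X/2-1/X)*u X - γ X/2 = v X/(1+u X^2) := (hode X hXO).symm
  have hw0eq : (0:ℝ) = 2*u X*v X*(v X/(1+u X^2))
      + (1+u X^2)*((1/2+1/X^2)*u X + (X/2-1/X)*v X - u X/2) := by
    rw [← hKode, ← hwf X hXO]
    exact hwX.symm
  have hB0 : (1/2+1/X^2)*u X + (X/2-1/X)*v X - u X/2 = -(2*u X*(v X)^2)/(1+u X^2)^2 := by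
    have h := hw0eq
    field_simp at h ⊢
    nlinarith [h]
  rw [hwX, hKode, hB0] at hzeq
  have hfinal : z X = 2*(v X)^3*(1-3*(u X)^2)/(1+(u X)^2)^2
      + (1+(u X)^2)*(v X/2 + 2*v X/X^2 - 2*u X/X^3) := by
    rw [hzeq]
    field_simp
    ring
  have key1 : 2*(v X)^3*(1-3*(u X)^2)/(1+(u X)^2)^2 ≤ 0 := by
    apply div_nonpos_of_nonpos_of_nonneg _ (by positivity)
    have hV3 : (v X)^3 < 0 := Odd.pow_neg (by decide) hV
    nlinarith [hU2]
  have key2 : (1+(u X)^2)*(v X/2 + 2*v X/X^2 - 2*u X/X^3) < 0 := by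
    apply mul_neg_of_pos_of_neg (by positivity)
    have h5 : 2*v X/X^2 ≤ 2*u X/X^3 := by
      rw [div_le_div_iff₀ (by positivity) (by positivity)]
      nlinarith [hφX, sq_nonneg X, hXpos]
    linarith
  linarith [hfinal, key1, key2, hZ]
end

section
/- Let γ solve γ''/(1+(γ')²) = (x/2 - 1/x)·γ' - γ/2 with γ(0) = b ∈ (0, 1/2), γ'(0) = 0, and suppose |γ'(x)| ≤ √3/3 on [0, 2√2]. Then the function x ↦ (x·γ'(x) - γ(x))/√(1+γ'(x)²) is non-increasing on [0, 2√2]. -/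
open Set Real Filter Topology

set_option maxHeartbeats 1000000

theorem stmt_6 (γ : ℝ → ℝ) (b : ℝ) (hb : 0 < b) (hb' : b < 1 / 2)
    (hreg : ContDiffOn ℝ 2 γ (Icc 0 (2 * Real.sqrt 2)))
    (hode : ∀ x ∈ Ioc 0 (2 * Real.sqrt 2),
      deriv (deriv γ) x / (1 + (deriv γ x) ^ 2) = (x / 2 - 1 / x) * deriv γ x - γ x / 2)
    (h0 : γ 0 = b) (h0' : deriv γ 0 = 0)
    (hconc : ∀ x ∈ Ioc 0 (2 * Real.sqrt 2), deriv (deriv γ) x < 0)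
    (hsmall : ∀ x ∈ Icc 0 (2 * Real.sqrt 2), |deriv γ x| ≤ Real.sqrt 3 / 3) :
    AntitoneOn (fun x => (x * deriv γ x - γ x) / Real.sqrt (1 + (deriv γ x) ^ 2))
      (Icc 0 (2 * Real.sqrt 2)) := by
  set A : ℝ := 2 * Real.sqrt 2 with hAdef
  have hA : 0 < A := by positivity
  set φ : ℝ → ℝ := deriv γ with hφdef
  have hsqrt3 : Real.sqrt 3 ≤ 3 := by
    nlinarith [Real.sq_sqrt (by norm_num : (0:ℝ) ≤ 3), Real.sqrt_nonneg 3]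
  have hφ1 : ∀ x ∈ Icc 0 A, |φ x| ≤ 1 := by
    intro x hx
    have := hsmall x hx
    linarith
  have hφ2 : ∀ x ∈ Icc 0 A, φ x ^ 2 ≤ 1 / 3 := by
    intro x hx
    have h := hsmall x hx
    have h3 : Real.sqrt 3 ^ 2 = 3 := Real.sq_sqrt (by norm_num)
    have : φ x ^ 2 = |φ x| ^ 2 := (sq_abs _).symm
    nlinarith [abs_nonneg (φ x)]
  have hγcont : ContinuousOn γ (Icc 0 A) := hreg.continuousOn
  have hγdiff : ∀ x ∈ Ioo 0 A, DifferentiableAt ℝ γ x := by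
    intro x hx
    exact (hreg.contDiffAt (Icc_mem_nhds hx.1 hx.2)).differentiableAt two_ne_zero
  have hφdiff : ∀ x ∈ Ioc 0 A, DifferentiableAt ℝ φ x := by
    intro x hx
    by_contra h
    have h2 := hconc x hx
    rw [deriv_zero_of_not_differentiableAt h] at h2
    exact lt_irrefl 0 h2
  have hφcont : ContinuousOn φ (Ioc 0 A) :=
    fun x hx => (hφdiff x hx).continuousAt.continuousWithinAt
  have hpos : ∀ x, (0:ℝ) < 1 + φ x ^ 2 := fun x => by positivity
  have hconc' : ∀ x ∈ Ioc 0 A, deriv φ x < 0 := hconc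
  have hode' : ∀ x ∈ Ioc 0 A,
      deriv φ x = (1 + φ x ^ 2) * ((x / 2 - 1 / x) * φ x - γ x / 2) := by
    intro x hx
    have h := hode x hx
    rw [div_eq_iff (ne_of_gt (hpos x))] at h
    rw [h]; ring
  have hBneg : ∀ x ∈ Ioc 0 A, (x / 2 - 1 / x) * φ x - γ x / 2 < 0 := by
    intro x hx
    have h := hode x hx
    rw [← h]
    exact div_neg_of_neg_of_pos (hconc' x hx) (hpos x)
  -- the limit L of φ at 0⁺
  set L : ℝ := derivWithin γ (Icc 0 A) 0 with hLdef
  have hTIoi : Tendsto φ (𝓝[Ioi 0] 0) (𝓝 L) := by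
    have hdw : ContinuousWithinAt (derivWithin γ (Icc 0 A)) (Icc 0 A) 0 :=
      (hreg.continuousOn_derivWithin (uniqueDiffOn_Icc hA) one_le_two) 0 ⟨le_refl 0, hA.le⟩
    have h1 : Tendsto (derivWithin γ (Icc 0 A)) (𝓝[Ioo 0 A] 0) (𝓝 L) :=
      hdw.tendsto.mono_left (nhdsWithin_mono 0 Ioo_subset_Icc_self)
    have heq : (derivWithin γ (Icc 0 A)) =ᶠ[𝓝[Ioo 0 A] 0] φ :=
      eventually_nhdsWithin_of_forall
        (fun x hx => derivWithin_of_mem_nhds (Icc_mem_nhds hx.1 hx.2))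
    have h2 : Tendsto φ (𝓝[Ioo 0 A] 0) (𝓝 L) := h1.congr' heq
    rwa [nhdsWithin_Ioo_eq_nhdsGT hA] at h2
  have hL0 : 0 ≤ L := by
    have hR : Tendsto (fun x => (x ^ 2 / 2 - 1) * φ x - x * γ x / 2) (𝓝[Ioi 0] 0)
        (𝓝 ((0 ^ 2 / 2 - 1) * L - 0 * b / 2)) := by
      have hid : Tendsto (fun x : ℝ => x) (𝓝[Ioi 0] 0) (𝓝 0) :=
        (continuous_id.tendsto 0).mono_left nhdsWithin_le_nhds
      have hγt : Tendsto γ (𝓝[Ioi 0] 0) (𝓝 b) := by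
        have h1 : Tendsto γ (𝓝[Icc 0 A] 0) (𝓝 (γ 0)) := hγcont 0 ⟨le_refl 0, hA.le⟩
        rw [h0] at h1
        refine h1.mono_left ?_
        rw [← nhdsWithin_Ioo_eq_nhdsGT hA]
        exact nhdsWithin_mono 0 Ioo_subset_Icc_self
      exact (((((hid.pow 2).div_const 2).sub_const 1).mul hTIoi).sub
        ((hid.mul hγt).div_const 2))
    have hev : ∀ᶠ x in 𝓝[Ioi 0] 0, (x ^ 2 / 2 - 1) * φ x - x * γ x / 2 ≤ 0 := by
      rw [← nhdsWithin_Ioo_eq_nhdsGT hA]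
      refine eventually_nhdsWithin_of_forall (fun x hx => ?_)
      have hxI : x ∈ Ioc 0 A := ⟨hx.1, hx.2.le⟩
      have h := hode x hxI
      have hxne : x ≠ 0 := ne_of_gt hx.1
      have he : (x ^ 2 / 2 - 1) * φ x - x * γ x / 2
          = x * ((x / 2 - 1 / x) * φ x - γ x / 2) := by
        field_simp
      rw [he]
      exact mul_nonpos_of_nonneg_of_nonpos hx.1.le (hBneg x hxI).le
    have := le_of_tendsto hR hev
    simp at this
    linarith
  -- rule out L > 0 via logarithmic blow-up
  have hLle : L ≤ 0 := by
    by_contra hcon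
    push_neg at hcon
    have hev : ∀ᶠ x in 𝓝[Ioi 0] 0, L / 2 < φ x :=
      hTIoi.eventually (eventually_gt_nhds (by linarith))
    obtain ⟨u, hu, hsub⟩ := mem_nhdsGT_iff_exists_Ioc_subset.mp hev
    set δ : ℝ := min u A with hδdef
    have hδpos : 0 < δ := lt_min hu hA
    have hδA : δ ≤ A := min_le_right _ _
    have hδφ : ∀ x ∈ Ioc 0 δ, L / 2 < φ x := by
      intro x hx
      exact hsub ⟨hx.1, hx.2.trans (min_le_left _ _)⟩
    obtain ⟨M, hM⟩ := isCompact_Icc.exists_bound_of_continuousOn hγcont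
    have hMx : ∀ x ∈ Icc 0 A, |γ x| ≤ M := by
      intro x hx; have := hM x hx; rwa [Real.norm_eq_abs] at this
    have hM0 : 0 ≤ M := le_trans (abs_nonneg _) (hMx 0 ⟨le_refl 0, hA.le⟩)
    set C₀ : ℝ := A / 2 + M / 2 with hC₀def
    have hC₀ : 0 ≤ C₀ := by positivity
    have claim : ∀ x ∈ Ioc 0 δ, deriv φ x ≤ C₀ - L / 2 / x := by
      intro x hx
      have hxA : x ∈ Ioc 0 A := ⟨hx.1, hx.2.trans hδA⟩
      have hxIcc : x ∈ Icc 0 A := ⟨hx.1.le, hxA.2⟩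
      have hB := hBneg x hxA
      have h1 : deriv φ x ≤ (x / 2 - 1 / x) * φ x - γ x / 2 := by
        rw [hode' x hxA]
        nlinarith [sq_nonneg (φ x)]
      have h2 : (x / 2 - 1 / x) * φ x - γ x / 2 ≤ C₀ - L / 2 / x := by
        have hx0 : 0 < x := hx.1
        have key : x * ((x / 2 - 1 / x) * φ x - γ x / 2) ≤ x * (C₀ - L / 2 / x) := by
          have e1 : x * ((x / 2 - 1 / x) * φ x - γ x / 2)
              = (x ^ 2 / 2 - 1) * φ x - x * γ x / 2 := by field_simp
          have e2 : x * (C₀ - L / 2 / x) = x * C₀ - L / 2 := by field_simp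
          rw [e1, e2]
          have hφu : φ x ≤ 1 := le_of_abs_le (hφ1 x hxIcc)
          have hφl : L / 2 < φ x := hδφ x hx
          have hγl : -M ≤ γ x := neg_le_of_abs_le (hMx x hxIcc)
          have hxA2 : x ≤ A := hxA.2
          rw [hC₀def]
          nlinarith [mul_pos hx0 hx0, sq_nonneg x]
        exact le_of_mul_le_mul_left key hx0
      linarith
    set v : ℝ → ℝ := fun x => φ x + L / 2 * Real.log x - C₀ * x with hvdef
    set x₀ : ℝ := min (δ / 2) (Real.exp (-(2 / L) * (2 + |v δ|))) with hx₀def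
    have hx₀pos : 0 < x₀ := lt_min (by linarith) (Real.exp_pos _)
    have hx₀δ : x₀ < δ := lt_of_le_of_lt (min_le_left _ _) (by linarith)
    have hanti : AntitoneOn v (Icc x₀ δ) := by
      have hIccsub : Icc x₀ δ ⊆ Ioc 0 A :=
        fun y hy => ⟨lt_of_lt_of_le hx₀pos hy.1, hy.2.trans hδA⟩
      apply antitoneOn_of_deriv_nonpos (convex_Icc x₀ δ)
      · apply ContinuousOn.sub
        apply ContinuousOn.add (hφcont.mono hIccsub)
        · exact (continuousOn_const.mul (Real.continuousOn_log.mono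
            (fun y hy => ne_of_gt (lt_of_lt_of_le hx₀pos hy.1))))
        · exact (continuous_const.mul continuous_id).continuousOn
      · intro y hy
        rw [interior_Icc] at hy
        have hyI : y ∈ Ioc 0 A := hIccsub ⟨hy.1.le, hy.2.le⟩
        have hyne : y ≠ 0 := ne_of_gt hyI.1
        exact (((hφdiff y hyI).add
          ((Real.differentiableAt_log hyne).const_mul (L / 2))).sub
          ((differentiableAt_id.const_mul C₀))).differentiableWithinAt
      · intro y hy
        rw [interior_Icc] at hy
        have hyI : y ∈ Ioc 0 A := hIccsub ⟨hy.1.le, hy.2.le⟩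
        have hyδ : y ∈ Ioc 0 δ := ⟨hyI.1, hy.2.le⟩
        have hyne : y ≠ 0 := ne_of_gt hyI.1
        have hder : HasDerivAt v (deriv φ y + L / 2 * y⁻¹ - C₀ * 1) y := by
          exact (((hφdiff y hyI).hasDerivAt).add
            ((Real.hasDerivAt_log hyne).const_mul (L / 2))).sub
            ((hasDerivAt_id y).const_mul C₀)
        rw [hder.deriv]
        have hc := claim y hyδ
        have : L / 2 * y⁻¹ = L / 2 / y := by ring
        rw [this]
        linarith
    have hkey := hanti (left_mem_Icc.mpr hx₀δ.le) (right_mem_Icc.mpr hx₀δ.le) hx₀δ.le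
    -- hkey : v δ ≤ v x₀
    have hlog : Real.log x₀ ≤ -(2 / L) * (2 + |v δ|) := by
      have h1 : x₀ ≤ Real.exp (-(2 / L) * (2 + |v δ|)) := min_le_right _ _
      calc Real.log x₀ ≤ Real.log (Real.exp (-(2 / L) * (2 + |v δ|))) :=
            Real.log_le_log hx₀pos h1
        _ = -(2 / L) * (2 + |v δ|) := Real.log_exp _
    have hlog2 : L / 2 * Real.log x₀ ≤ -(2 + |v δ|) := by
      have h1 : L / 2 * Real.log x₀ ≤ L / 2 * (-(2 / L) * (2 + |v δ|)) :=
        mul_le_mul_of_nonneg_left hlog (by linarith)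
      have h2 : L / 2 * (-(2 / L) * (2 + |v δ|)) = -(2 + |v δ|) := by
        field_simp
      linarith
    have hφx₀ : 2 ≤ φ x₀ := by
      have hvx₀ : v δ ≤ φ x₀ + L / 2 * Real.log x₀ - C₀ * x₀ := hkey
      have habs : -|v δ| ≤ v δ := neg_abs_le _
      have hC : 0 ≤ C₀ * x₀ := mul_nonneg hC₀ hx₀pos.le
      clear_value v x₀ C₀ δ L
      linarith
    have hx₀Icc : x₀ ∈ Icc 0 A := ⟨hx₀pos.le, le_trans hx₀δ.le hδA⟩
    have := le_of_abs_le (hφ1 x₀ hx₀Icc)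
    linarith
  have hLeq : L = 0 := le_antisymm hLle hL0
  -- φ ≤ 0 on Ioc 0 A
  have hφsa : StrictAntiOn φ (Ioc 0 A) := by
    apply strictAntiOn_of_deriv_neg (convex_Ioc 0 A) hφcont
    intro x hx
    rw [interior_Ioc] at hx
    exact hconc' x ⟨hx.1, hx.2.le⟩
  have hφle0 : ∀ x ∈ Ioc 0 A, φ x ≤ 0 := by
    intro x hx
    have hev : ∀ᶠ t in 𝓝[Ioi 0] 0, φ x ≤ φ t := by
      rw [← nhdsWithin_Ioo_eq_nhdsGT hx.1]
      refine eventually_nhdsWithin_of_forall (fun t ht => ?_)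
      exact (hφsa ⟨ht.1, (ht.2.le.trans hx.2)⟩ hx ht.2).le
    have := ge_of_tendsto hTIoi hev
    rwa [hLeq] at this
  have hφle0' : ∀ x ∈ Icc 0 A, φ x ≤ 0 := by
    intro x hx
    rcases eq_or_lt_of_le hx.1 with h | h
    · rw [← h, h0']
    · exact hφle0 x ⟨h, hx.2⟩
  -- γ ≤ b
  have hγanti : AntitoneOn γ (Icc 0 A) := by
    apply antitoneOn_of_deriv_nonpos (convex_Icc 0 A) hγcont
    · intro x hx
      rw [interior_Icc] at hx
      exact (hγdiff x hx).differentiableWithinAt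
    · intro x hx
      rw [interior_Icc] at hx
      exact hφle0 x ⟨hx.1, hx.2.le⟩
  have hγleb : ∀ x ∈ Icc 0 A, γ x ≤ b := by
    intro x hx
    have := hγanti ⟨le_refl 0, hA.le⟩ hx hx.1
    rwa [h0] at this
  -- deriv φ ≥ -2
  have hs2 : Real.sqrt 2 ^ 2 = 2 := Real.sq_sqrt (by norm_num)
  have hs3 : Real.sqrt 3 ^ 2 = 3 := Real.sq_sqrt (by norm_num)
  have hφ'ge : ∀ x ∈ Ioc 0 A, -2 ≤ deriv φ x := by
    intro x hx
    have hxIcc : x ∈ Icc 0 A := ⟨hx.1.le, hx.2⟩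
    have hB := hBneg x hx
    have hφ2x := hφ2 x hxIcc
    have habs := hsmall x hxIcc
    have hlo : -(Real.sqrt 3 / 3) ≤ φ x := neg_le_of_abs_le habs
    have hstep1 : (4 / 3) * ((x / 2 - 1 / x) * φ x - γ x / 2) ≤ deriv φ x := by
      rw [hode' x hx]
      nlinarith
    have t1 : Real.sqrt 2 * (-(Real.sqrt 3 / 3)) ≤ (x / 2) * φ x := by
      have h1 : (x / 2) * (-(Real.sqrt 3 / 3)) ≤ (x / 2) * φ x :=
        mul_le_mul_of_nonneg_left hlo (by linarith [hx.1.le])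
      have h2 : Real.sqrt 2 * (-(Real.sqrt 3 / 3)) ≤ (x / 2) * (-(Real.sqrt 3 / 3)) := by
        apply mul_le_mul_of_nonpos_right
        · rw [hAdef] at hx; linarith [hx.2]
        · have := Real.sqrt_nonneg 3; linarith
      linarith
    have t2 : 0 ≤ -((1 / x) * φ x) := by
      have : (1 / x) * φ x ≤ 0 :=
        mul_nonpos_of_nonneg_of_nonpos (one_div_pos.mpr hx.1).le (hφle0 x hx)
      linarith
    have t3 : -(1 / 4) ≤ -(γ x / 2) := by
      have := hγleb x hxIcc; linarith
    have hBlo : Real.sqrt 2 * (-(Real.sqrt 3 / 3)) - 1 / 4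
        ≤ (x / 2 - 1 / x) * φ x - γ x / 2 := by
      have hexp : (x / 2 - 1 / x) * φ x - γ x / 2
          = (x / 2) * φ x + (-((1 / x) * φ x)) + (-(γ x / 2)) := by ring
      rw [hexp]
      linarith
    have hnum : -2 ≤ (4 / 3) * (Real.sqrt 2 * (-(Real.sqrt 3 / 3)) - 1 / 4) := by
      have h6 : (Real.sqrt 2 * Real.sqrt 3) ^ 2 = 6 := by
        rw [mul_pow, hs2, hs3]; norm_num
      nlinarith [Real.sqrt_nonneg 2, Real.sqrt_nonneg 3,
        sq_nonneg (Real.sqrt 2 * Real.sqrt 3 - 5 / 2)]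
    calc (-2 : ℝ) ≤ (4 / 3) * (Real.sqrt 2 * (-(Real.sqrt 3 / 3)) - 1 / 4) := hnum
      _ ≤ (4 / 3) * ((x / 2 - 1 / x) * φ x - γ x / 2) := by
          apply mul_le_mul_of_nonneg_left hBlo (by norm_num)
      _ ≤ deriv φ x := hstep1
  -- continuity of φ on the closed interval
  have hφcontIcc : ContinuousOn φ (Icc 0 A) := by
    intro x hx
    rcases eq_or_lt_of_le hx.1 with h | h
    · rw [← h]
      rw [← Set.Ioc_insert_left hA.le, continuousWithinAt_insert_self]
      have : Tendsto φ (𝓝[Ioc 0 A] 0) (𝓝 (φ 0)) := by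
        rw [nhdsWithin_Ioc_eq_nhdsGT hA]
        have hφ0 : φ 0 = L := by rw [h0', hLeq]
        rw [hφ0]
        exact hTIoi
      exact this
    · exact (hφdiff x ⟨h, hx.2⟩).continuousAt.continuousWithinAt
  -- φ x ≥ -2x
  have hφge : ∀ x ∈ Icc 0 A, -(2 * x) ≤ φ x := by
    have hmono : MonotoneOn (fun x => φ x + 2 * x) (Icc 0 A) := by
      apply monotoneOn_of_deriv_nonneg (convex_Icc 0 A)
      · exact hφcontIcc.add (continuous_const.mul continuous_id).continuousOn
      · intro x hx
        rw [interior_Icc] at hx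
        exact ((hφdiff x ⟨hx.1, hx.2.le⟩).add
          (differentiableAt_id.const_mul 2)).differentiableWithinAt
      · intro x hx
        rw [interior_Icc] at hx
        have hxI : x ∈ Ioc 0 A := ⟨hx.1, hx.2.le⟩
        have hder : HasDerivAt (fun y => φ y + 2 * y) (deriv φ x + 2 * 1) x :=
          ((hφdiff x hxI).hasDerivAt).add ((hasDerivAt_id x).const_mul 2)
        rw [hder.deriv]
        linarith [hφ'ge x hxI]
    intro x hx
    have := hmono ⟨le_refl 0, hA.le⟩ hx hx.1
    simp only [h0', mul_zero, add_zero] at this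
    linarith [this]
  -- x + γ x * φ x ≥ 0
  have hkey : ∀ x ∈ Ioo 0 A, 0 ≤ x + γ x * φ x := by
    intro x hx
    have hxIcc : x ∈ Icc 0 A := ⟨hx.1.le, hx.2.le⟩
    rcases le_or_gt (γ x) 0 with h | h
    · have hφn := hφle0 x ⟨hx.1, hx.2.le⟩
      nlinarith [mul_nonneg (neg_nonneg.mpr h) (neg_nonneg.mpr hφn), hx.1.le]
    · have h1 := hφge x hxIcc
      have h2 := hγleb x hxIcc
      nlinarith [hx.1.le]
  -- derivative of the profile quantity
  have hFder : ∀ x ∈ Ioo 0 A,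
      HasDerivAt (fun y => (y * φ y - γ y) / Real.sqrt (1 + φ y ^ 2))
        (((1 * φ x + x * deriv φ x - φ x) * Real.sqrt (1 + φ x ^ 2)
          - (x * φ x - γ x) * ((0 + 2 * φ x ^ 1 * deriv φ x) / (2 * Real.sqrt (1 + φ x ^ 2))))
          / Real.sqrt (1 + φ x ^ 2) ^ 2) x := by
    intro x hx
    have hxI : x ∈ Ioc 0 A := ⟨hx.1, hx.2.le⟩
    have hγ' : HasDerivAt γ (φ x) x := (hγdiff x hx).hasDerivAt
    have hφ' : HasDerivAt φ (deriv φ x) x := (hφdiff x hxI).hasDerivAt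
    have hN : HasDerivAt (fun y => y * φ y - γ y) (1 * φ x + x * deriv φ x - φ x) x :=
      ((hasDerivAt_id x).mul hφ').sub hγ'
    have hD0 : HasDerivAt (fun y => 1 + φ y ^ 2) (0 + 2 * φ x ^ 1 * deriv φ x) x :=
      (hasDerivAt_const x 1).add (hφ'.pow 2)
    have hsne : (1 + φ x ^ 2) ≠ 0 := ne_of_gt (hpos x)
    have hD : HasDerivAt (fun y => Real.sqrt (1 + φ y ^ 2))
        ((0 + 2 * φ x ^ 1 * deriv φ x) / (2 * Real.sqrt (1 + φ x ^ 2))) x := hD0.sqrt hsne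
    have hsqne : Real.sqrt (1 + φ x ^ 2) ≠ 0 :=
      ne_of_gt (Real.sqrt_pos.mpr (hpos x))
    exact hN.div hD hsqne
  -- conclusion
  apply antitoneOn_of_deriv_nonpos (convex_Icc 0 A)
  · apply ContinuousOn.div
    · exact (continuous_id.continuousOn.mul hφcontIcc).sub hγcont
    · exact Real.continuous_sqrt.comp_continuousOn
        (continuousOn_const.add (hφcontIcc.pow 2))
    · intro x _
      exact ne_of_gt (Real.sqrt_pos.mpr (hpos x))
  · intro x hx
    rw [interior_Icc] at hx
    exact (hFder x hx).differentiableAt.differentiableWithinAt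
  · intro x hx
    rw [interior_Icc] at hx
    rw [(hFder x hx).deriv]
    set s : ℝ := Real.sqrt (1 + φ x ^ 2) with hsdef
    have hs : 0 < s := Real.sqrt_pos.mpr (hpos x)
    have hs2' : s ^ 2 = 1 + φ x ^ 2 := Real.sq_sqrt (hpos x).le
    apply div_nonpos_of_nonpos_of_nonneg _ (sq_nonneg s)
    -- numerator ≤ 0
    have hxI : x ∈ Ioc 0 A := ⟨hx.1, hx.2.le⟩
    have hφ'neg := hconc' x hxI
    have hk := hkey x hx
    have e : s * ((1 * φ x + x * deriv φ x - φ x) * s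
        - (x * φ x - γ x) * ((0 + 2 * φ x ^ 1 * deriv φ x) / (2 * s)))
        = deriv φ x * (x * s ^ 2 - (x * φ x - γ x) * φ x) := by
      field_simp
      ring
    have e2 : x * s ^ 2 - (x * φ x - γ x) * φ x = x + γ x * φ x := by
      rw [hs2']; ring
    have hmul : s * ((1 * φ x + x * deriv φ x - φ x) * s
        - (x * φ x - γ x) * ((0 + 2 * φ x ^ 1 * deriv φ x) / (2 * s))) ≤ s * 0 := by
      rw [e, e2, mul_zero]
      exact mul_nonpos_of_nonpos_of_nonneg hφ'neg.le hk
    exact le_of_mul_le_mul_left hmul hs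
end

section
/- Let γ solve γ''/(1+(γ')²) = (x/2 - 1/x)·γ' - γ/2 with γ'' < 0, blow-up point x₀ > 2√2, and suppose there exists x_c ∈ [2, 2√2] with γ(x_c) = 0. Then γ(x) > (8/x)·γ'(x) for all x ∈ [x_c, x₀). -/
open Set Real Filter

open Topology

set_option maxHeartbeats 1600000 in
theorem stmt_7 (γ : ℝ → ℝ) (x₀ x_c : ℝ) (hx₀ : 2 * Real.sqrt 2 < x₀)
    (hreg : ContDiffOn ℝ 2 γ (Ico 0 x₀))
    (hode : ∀ x ∈ Ioo 0 x₀,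
      deriv (deriv γ) x / (1 + (deriv γ x) ^ 2) = (x / 2 - 1 / x) * deriv γ x - γ x / 2)
    (hdec : ∀ x ∈ Ioo 0 x₀, deriv γ x < 0)
    (hconc : ∀ x ∈ Ioo 0 x₀, deriv (deriv γ) x < 0)
    (hx_c : x_c ∈ Icc 2 (2 * Real.sqrt 2)) (hzero : γ x_c = 0) :
    ∀ x ∈ Ico x_c x₀, (8 / x) * deriv γ x < γ x := by
  have hsqrt2 : Real.sqrt 2 < 2 := by
    nlinarith [Real.sq_sqrt (by norm_num : (0:ℝ) ≤ 2), Real.sqrt_nonneg 2]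
  have hxc2 : (2:ℝ) ≤ x_c := hx_c.1
  have hxc4 : x_c < 4 := lt_of_le_of_lt hx_c.2 (by nlinarith)
  have hxcx₀ : x_c < x₀ := lt_of_le_of_lt hx_c.2 hx₀
  have hxcpos : (0:ℝ) < x_c := by linarith
  have hO : IsOpen (Ioo (0:ℝ) x₀) := isOpen_Ioo
  have hreg' : ContDiffOn ℝ 2 γ (Ioo 0 x₀) := hreg.mono Ioo_subset_Ico_self
  have hd1 : DifferentiableOn ℝ γ (Ioo 0 x₀) := hreg'.differentiableOn (by norm_num)
  have hcd' : ContDiffOn ℝ 1 (deriv γ) (Ioo 0 x₀) :=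
    hreg'.deriv_of_isOpen hO (by norm_num)
  have hd2 : DifferentiableOn ℝ (deriv γ) (Ioo 0 x₀) := hcd'.differentiableOn (by norm_num)
  have hc1 : ContinuousOn (deriv γ) (Ioo 0 x₀) := hcd'.continuousOn
  have hγat : ∀ x ∈ Ioo 0 x₀, HasDerivAt γ (deriv γ x) x := fun x hx =>
    ((hd1 x hx).differentiableAt (hO.mem_nhds hx)).hasDerivAt
  have hγ'at : ∀ x ∈ Ioo 0 x₀, HasDerivAt (deriv γ) (deriv (deriv γ) x) x := fun x hx =>
    ((hd2 x hx).differentiableAt (hO.mem_nhds hx)).hasDerivAt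
  have hanti : StrictAntiOn (deriv γ) (Ioo 0 x₀) :=
    strictAntiOn_of_deriv_neg (convex_Ioo _ _) hc1
      (by rw [interior_Ioo]; exact hconc)
  -- MVT consequences
  have hmvt : ∀ x ∈ Ioo x_c x₀, γ x < 0 ∧ (x - x_c) * deriv γ x < γ x := by
    intro x hx
    have hIcc : Icc x_c x ⊆ Ioo 0 x₀ := fun y hy =>
      ⟨by linarith [hy.1], lt_of_le_of_lt hy.2 hx.2⟩
    obtain ⟨c, hc, hcder⟩ := exists_hasDerivAt_eq_slope γ (deriv γ) hx.1
      (hd1.continuousOn.mono hIcc)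
      (fun y hy => hγat y (hIcc (Ioo_subset_Icc_self hy)))
    have hcmem : c ∈ Ioo 0 x₀ := hIcc (Ioo_subset_Icc_self hc)
    have hcneg : deriv γ c < 0 := hdec c hcmem
    have hxc : x_c < x := hx.1
    have hne : x - x_c ≠ 0 := ne_of_gt (by linarith)
    have hγx : γ x = (x - x_c) * deriv γ c := by
      rw [hcder, hzero, sub_zero]
      field_simp [hne]
    constructor
    · rw [hγx]; exact mul_neg_of_pos_of_neg (by linarith) hcneg
    · rw [hγx]
      have : deriv γ x < deriv γ c := hanti hcmem (hIcc ⟨le_of_lt hxc, le_rfl⟩) hc.2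
      nlinarith
  -- claim A: Φ > 0 for x ≤ 4
  have hA : ∀ x ∈ Ico x_c x₀, x ≤ 4 → 0 < x * γ x / 8 - deriv γ x := by
    intro x hx h4
    have hxmem : x ∈ Ioo 0 x₀ := ⟨by linarith [hx.1], hx.2⟩
    rcases eq_or_lt_of_le hx.1 with heq | hlt
    · subst heq
      have := hdec x_c hxmem
      rw [hzero]; simp; linarith
    · obtain ⟨hneg, hlow⟩ := hmvt x ⟨hlt, hx.2⟩
      have hγ' : deriv γ x < 0 := hdec x hxmem
      have hcoef : x * (x - x_c) ≤ 8 := by nlinarith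
      nlinarith [mul_pos hxmem.1 (sub_pos.2 hlow), mul_nonneg (by linarith : (0:ℝ) ≤ 8 - x * (x - x_c)) (by linarith : (0:ℝ) ≤ -deriv γ x)]
  -- main claim
  have key : ∀ x ∈ Ico x_c x₀, 0 < x * γ x / 8 - deriv γ x := by
    by_contra h
    push_neg at h
    obtain ⟨t, ht, hΦt⟩ := h
    have ht4 : 4 < t := by
      by_contra h4
      push_neg at h4
      exact absurd (hA t ht h4) (not_lt.2 hΦt)
    set Φ : ℝ → ℝ := fun x => x * γ x / 8 - deriv γ x with hΦdef
    have hIccsub : Icc x_c t ⊆ Ioo 0 x₀ := fun y hy =>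
      ⟨by linarith [hy.1], lt_of_le_of_lt hy.2 ht.2⟩
    have hΦcont : ContinuousOn Φ (Ioo 0 x₀) :=
      ((continuousOn_id.mul hd1.continuousOn).div_const 8).sub hc1
    set S : Set ℝ := {x ∈ Icc x_c t | Φ x ≤ 0} with hSdef
    have htS : t ∈ S := ⟨⟨ht.1, le_rfl⟩, hΦt⟩
    have hSne : S.Nonempty := ⟨t, htS⟩
    have hSbdd : BddBelow S := ⟨x_c, fun y hy => hy.1.1⟩
    set xb := sInf S with hxbdef
    have hxb_mem_Icc : xb ∈ Icc x_c t :=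
      ⟨le_csInf hSne (fun y hy => hy.1.1), csInf_le hSbdd htS⟩
    have hxbIoo : xb ∈ Ioo 0 x₀ := hIccsub hxb_mem_Icc
    -- Φ xb ≤ 0 via sequence
    have hΦxb_le : Φ xb ≤ 0 := by
      obtain ⟨u, _, hu_tendsto, hu_mem⟩ := exists_seq_tendsto_sInf hSne hSbdd
      have hcontat : ContinuousAt Φ xb := hΦcont.continuousAt (hO.mem_nhds hxbIoo)
      have := hcontat.tendsto.comp hu_tendsto
      exact le_of_tendsto this (Filter.Eventually.of_forall fun n => (hu_mem n).2)
    -- Φ positive strictly before xb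
    have hΦpos_lt : ∀ y, x_c ≤ y → y < xb → 0 < Φ y := by
      intro y hy1 hy2
      by_contra hle
      push_neg at hle
      have : y ∈ S := ⟨⟨hy1, le_trans (le_of_lt hy2) hxb_mem_Icc.2⟩, hle⟩
      exact absurd (csInf_le hSbdd this) (not_le.2 hy2)
    -- Φ xb = 0
    have hΦxc : 0 < Φ x_c := hA x_c ⟨le_rfl, hxcx₀⟩ (le_of_lt hxc4)
    have hΦxb : Φ xb = 0 := by
      rcases lt_or_eq_of_le hΦxb_le with hlt | heq
      · exfalso
        have hxcxb : x_c < xb := by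
          rcases eq_or_lt_of_le hxb_mem_Icc.1 with h | h
          · exfalso; rw [← h] at hlt; linarith
          · exact h
        have hconn : ContinuousOn Φ (Icc x_c xb) :=
          hΦcont.mono (fun y hy => hIccsub ⟨hy.1, le_trans hy.2 hxb_mem_Icc.2⟩)
        have h0mem : (0:ℝ) ∈ Icc (Φ xb) (Φ x_c) := ⟨le_of_lt hlt, le_of_lt hΦxc⟩
        obtain ⟨c, hc, hΦc⟩ := intermediate_value_Icc' (le_of_lt hxcxb) hconn h0mem
        have hcne : c ≠ xb := fun h => by rw [h] at hΦc; rw [hΦc] at hlt; exact lt_irrefl 0 hlt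
        have hclt : c < xb := lt_of_le_of_ne hc.2 hcne
        have : c ∈ S := ⟨⟨hc.1, le_trans hc.2 hxb_mem_Icc.2⟩, le_of_eq hΦc⟩
        exact absurd (csInf_le hSbdd this) (not_le.2 hclt)
      · exact heq
    have hxb4 : 4 < xb := by
      by_contra h4
      push_neg at h4
      have h' : 0 < Φ xb := hA xb ⟨hxb_mem_Icc.1, lt_of_le_of_lt hxb_mem_Icc.2 ht.2⟩ h4
      rw [hΦxb] at h'; exact lt_irrefl 0 h'
    -- derivative of Φ at xb
    have hΦder : HasDerivAt Φ ((1 * γ xb + xb * deriv γ xb) / 8 - deriv (deriv γ) xb) xb := by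
      exact (((hasDerivAt_id xb).mul (hγat xb hxbIoo)).div_const 8).sub (hγ'at xb hxbIoo)
    set D := (1 * γ xb + xb * deriv γ xb) / 8 - deriv (deriv γ) xb with hDdef
    -- D ≤ 0 from left slope
    have hD_le : D ≤ 0 := by
      have hslope : Tendsto (slope Φ xb) (𝓝[≠] xb) (𝓝 D) :=
        hasDerivAt_iff_tendsto_slope.1 hΦder
      have hslope' : Tendsto (slope Φ xb) (𝓝[<] xb) (𝓝 D) :=
        hslope.mono_left (nhdsWithin_mono xb (fun y hy => ne_of_lt hy))
      have hmem : Ioo x_c xb ∈ 𝓝[<] xb := Ioo_mem_nhdsLT_of_mem ⟨by linarith, le_rfl⟩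
      refine le_of_tendsto hslope' ?_
      filter_upwards [hmem] with y hy
      have hΦy : 0 < Φ y := hΦpos_lt y (le_of_lt hy.1) hy.2
      have : slope Φ xb y = Φ y / (y - xb) := by
        rw [slope_def_field, hΦxb, sub_zero]
      rw [this]
      exact le_of_lt (div_neg_of_pos_of_neg hΦy (by linarith [hy.2]))
    -- D > 0: contradiction
    have hγ'eq : deriv γ xb = xb * γ xb / 8 := by
      have h0 : xb * γ xb / 8 - deriv γ xb = 0 := hΦxb
      linarith
    have hγneg : γ xb < 0 := (hmvt xb ⟨by linarith, hxbIoo.2⟩).1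
    have hode' := hode xb hxbIoo
    have hγ''lt : deriv (deriv γ) xb < 0 := hconc xb hxbIoo
    have hxbpos : (0:ℝ) < xb := hxbIoo.1
    clear_value xb D
    have h1pos : (0:ℝ) < 1 + (deriv γ xb) ^ 2 := by positivity
    have hγ''eq : deriv (deriv γ) xb =
        ((xb / 2 - 1 / xb) * deriv γ xb - γ xb / 2) * (1 + (deriv γ xb) ^ 2) :=
      (div_eq_iff h1pos.ne').1 hode'
    have hRneg : (xb / 2 - 1 / xb) * deriv γ xb - γ xb / 2 < 0 := by
      nlinarith [sq_nonneg (deriv γ xb)]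
    have hγ''le : deriv (deriv γ) xb ≤ (xb / 2 - 1 / xb) * deriv γ xb - γ xb / 2 := by
      nlinarith [mul_nonneg (neg_nonneg.2 hRneg.le) (sq_nonneg (deriv γ xb))]
    have hterm : (xb / 2 - 1 / xb) * deriv γ xb = xb ^ 2 * γ xb / 16 - γ xb / 8 := by
      rw [hγ'eq]; field_simp; ring
    have hsle : deriv (deriv γ) xb ≤ xb ^ 2 * γ xb / 16 - γ xb / 8 - γ xb / 2 := by
      rw [hterm] at hγ''le; linarith
    have hxd : xb * deriv γ xb = xb ^ 2 * γ xb / 8 := by rw [hγ'eq]; ring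
    have h16 : (16:ℝ) < xb ^ 2 := by nlinarith
    have hDpos : 0 < D := by
      rw [hDdef]
      nlinarith [mul_pos (show (0:ℝ) < -γ xb by linarith) (show (0:ℝ) < xb ^ 2 - 16 by linarith)]
    linarith
  intro x hx
  have hk := key x hx
  have hxpos : 0 < x := by linarith [hx.1]
  rw [div_mul_eq_mul_div, div_lt_iff₀ hxpos]
  nlinarith
end

section
/- Let γ solve γ''/(1+(γ')²) = (x/2 - 1/x)·γ' - γ/2 with γ(0) = b > 0, γ'(0) = 0, γ'' < 0 on (0, x₀), and let x₁ ∈ (0, x₀) be the point with γ'(x₁) = -1. Then x₁ ≥ √(log(2/(πb²))). -/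
open Set Real Filter
open Topology

set_option maxHeartbeats 1000000 in
theorem stmt_8 (γ : ℝ → ℝ) (x₀ b x₁ : ℝ) (hb : 0 < b) (hx₀ : 0 < x₀)
    (hreg : ContDiffOn ℝ 2 γ (Ico 0 x₀))
    (hode : ∀ x ∈ Ioo 0 x₀,
      deriv (deriv γ) x / (1 + (deriv γ x) ^ 2) = (x / 2 - 1 / x) * deriv γ x - γ x / 2)
    (h0 : γ 0 = b) (h0' : deriv γ 0 = 0)
    (hconc : ∀ x ∈ Ioo 0 x₀, deriv (deriv γ) x < 0)
    (hx₁ : x₁ ∈ Ioo 0 x₀) (hval : deriv γ x₁ = -1) :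
    Real.sqrt (Real.log (2 / (π * b ^ 2))) ≤ x₁ := by
  obtain ⟨hx₁0, hx₁x₀⟩ := hx₁
  have hIcc_sub : Icc 0 x₁ ⊆ Ico 0 x₀ := fun x hx => ⟨hx.1, lt_of_le_of_lt hx.2 hx₁x₀⟩
  have hIoo_sub : Ioo 0 x₁ ⊆ Ioo 0 x₀ := Ioo_subset_Ioo le_rfl hx₁x₀.le
  have hγc : ContinuousOn γ (Ico 0 x₀) := hreg.continuousOn
  have hud : UniqueDiffOn ℝ (Ico 0 x₀) := uniqueDiffOn_Ico 0 x₀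
  set w : ℝ → ℝ := derivWithin γ (Ico 0 x₀) with hw_def
  have hwreg : ContDiffOn ℝ 1 w (Ico 0 x₀) := hreg.derivWithin hud (by norm_num)
  have hwc : ContinuousOn w (Ico 0 x₀) := hwreg.continuousOn
  have hmemnhds : ∀ x ∈ Ioo 0 x₀, Ico 0 x₀ ∈ 𝓝 x := fun x hx =>
    mem_of_superset (isOpen_Ioo.mem_nhds hx) Ioo_subset_Ico_self
  have hwv : ∀ x ∈ Ioo 0 x₀, w x = deriv γ x := fun x hx =>
    derivWithin_of_mem_nhds (hmemnhds x hx)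
  have hvd : ∀ x ∈ Ioo 0 x₀, DifferentiableAt ℝ (deriv γ) x := by
    intro x hx
    have h1 : DifferentiableAt ℝ w x :=
      ((hwreg.differentiableOn (by norm_num)) x (Ioo_subset_Ico_self hx)).differentiableAt
        (hmemnhds x hx)
    apply h1.congr_of_eventuallyEq
    filter_upwards [isOpen_Ioo.mem_nhds hx] with y hy
    exact (hwv y hy).symm
  have hvc : ContinuousOn (deriv γ) (Ioo 0 x₀) := fun x hx =>
    (hvd x hx).continuousAt.continuousWithinAt
  have hwanti : StrictAntiOn w (Icc 0 x₁) := by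
    apply strictAntiOn_of_deriv_neg (convex_Icc _ _) (hwc.mono hIcc_sub)
    intro x hx
    rw [interior_Icc] at hx
    have hx' : x ∈ Ioo 0 x₀ := hIoo_sub hx
    have heq : deriv w x = deriv (deriv γ) x := by
      apply Filter.EventuallyEq.deriv_eq
      filter_upwards [isOpen_Ioo.mem_nhds hx'] with y hy
      exact hwv y hy
    rw [heq]; exact hconc x hx'
  have hwx₁ : w x₁ = -1 := by rw [hwv x₁ ⟨hx₁0, hx₁x₀⟩, hval]
  have hvlt : ∀ x ∈ Ioc 0 x₁, deriv γ x < w 0 := by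
    intro x hx
    rw [← hwv x ⟨hx.1, lt_of_le_of_lt hx.2 hx₁x₀⟩]
    exact hwanti ⟨le_rfl, hx₁0.le⟩ ⟨hx.1.le, hx.2⟩ hx.1
  have hvgt : ∀ x ∈ Ioo 0 x₁, -1 < deriv γ x := by
    intro x hx
    rw [← hwv x (hIoo_sub hx), ← hwx₁]
    exact hwanti ⟨hx.1.le, hx.2.le⟩ ⟨hx₁0.le, le_rfl⟩ hx.2
  obtain ⟨M, hM⟩ : ∃ M, ∀ x ∈ Icc 0 x₁, |γ x| ≤ M := by
    obtain ⟨C, hC⟩ := isCompact_Icc.exists_bound_of_continuousOn (hγc.mono hIcc_sub)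
    exact ⟨C, fun x hx => by simpa using hC x hx⟩
  have hM0 : 0 ≤ M := le_trans (abs_nonneg _) (hM 0 ⟨le_rfl, hx₁0.le⟩)
  have hode' : ∀ x ∈ Ioo 0 x₀, deriv (deriv γ) x
      = ((x / 2 - 1 / x) * deriv γ x - γ x / 2) * (1 + (deriv γ x) ^ 2) := by
    intro x hx
    have hpos : (0:ℝ) < 1 + (deriv γ x) ^ 2 := by positivity
    have h := hode x hx
    rw [div_eq_iff hpos.ne'] at h
    exact h
  -- the right-limit of deriv γ at 0 is w 0 =: d
  -- rule out d < 0
  have hdge : 0 ≤ w 0 := by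
    by_contra hcon
    push_neg at hcon
    set d := w 0 with hd_def
    set x₂ : ℝ := min (x₁ / 2) (min 1 (-d / (2 * M + 2))) with hx₂_def
    have hx₂0 : 0 < x₂ := by
      apply lt_min (by linarith)
      apply lt_min one_pos
      apply div_pos (by linarith) (by linarith)
    have hx₂1 : x₂ ≤ 1 := le_trans (min_le_right _ _) (min_le_left _ _)
    have hx₂x₁ : x₂ < x₁ := lt_of_le_of_lt (min_le_left _ _) (by linarith)
    have hx₂d : x₂ ≤ -d / (2 * M + 2) := le_trans (min_le_right _ _) (min_le_right _ _)
    have hx₂mem : x₂ ∈ Ioo 0 x₀ := ⟨hx₂0, lt_trans hx₂x₁ hx₁x₀⟩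
    have hvx₂ : deriv γ x₂ < d := hvlt x₂ ⟨hx₂0, hx₂x₁.le⟩
    have hγx₂ : |γ x₂| ≤ M := hM x₂ ⟨hx₂0.le, hx₂x₁.le⟩
    set v := deriv γ x₂ with hv_def
    have hcoef : x₂ / 2 - 1 / x₂ ≤ -(1 / (2 * x₂)) := by
      rw [div_sub_div _ _ (two_ne_zero) hx₂0.ne', neg_div', div_le_div_iff₀ (by positivity) (by positivity)]
      nlinarith
    have hB : (x₂ / 2 - 1 / x₂) * v - γ x₂ / 2 > 0 := by
      have h1 : (x₂ / 2 - 1 / x₂) * v ≥ -(1 / (2 * x₂)) * v := by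
        apply mul_le_mul_of_nonpos_right hcoef (by linarith)
      have h2 : -(1 / (2 * x₂)) * v = -v / (2 * x₂) := by ring
      have h3 : -d / (2 * x₂) ≤ -v / (2 * x₂) := by
        gcongr
      have h4 : -d / (2 * x₂) ≥ M + 1 := by
        rw [ge_iff_le, le_div_iff₀ (by positivity)]
        calc (M + 1) * (2 * x₂) ≤ (M+1) * (2 * (-d / (2*M+2))) := by
              apply mul_le_mul_of_nonneg_left (by linarith) (by linarith)
          _ = -d := by field_simp
      have h5 : γ x₂ / 2 ≤ M / 2 := by
        have := (abs_le.mp hγx₂).2; linarith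
      linarith
    have hd2 := hode' x₂ hx₂mem
    have : deriv (deriv γ) x₂ > 0 := by
      rw [hd2]
      have : (0:ℝ) < 1 + v ^ 2 := by positivity
      exact mul_pos hB this
    exact absurd (hconc x₂ hx₂mem) (by linarith)
  have hdle : w 0 ≤ 0 := by
    by_contra hcon
    push_neg at hcon
    set d := w 0 with hd_def
    have hwct : ContinuousWithinAt w (Ico 0 x₀) 0 := hwc 0 ⟨le_rfl, hx₀⟩
    have hev : ∀ᶠ x in 𝓝[Ico 0 x₀] (0:ℝ), d / 2 < w x :=
      hwct.eventually (eventually_gt_nhds (by linarith))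
    obtain ⟨ε₀, hε₀pos, hball⟩ := Metric.mem_nhdsWithin_iff.mp hev
    set ε : ℝ := min (min (ε₀ / 2) (x₁ / 2)) (min 1 (d / (4 * M + 1))) with hε_def
    have hε0 : 0 < ε := by
      apply lt_min (lt_min (by linarith) (by linarith))
      exact lt_min one_pos (div_pos hcon (by linarith))
    have hεε₀ : ε < ε₀ := lt_of_le_of_lt (le_trans (min_le_left _ _) (min_le_left _ _))
      (by linarith)
    have hεx₁ : ε < x₁ := lt_of_le_of_lt (le_trans (min_le_left _ _) (min_le_right _ _))
      (by linarith)
    have hε1 : ε ≤ 1 := le_trans (min_le_right _ _) (min_le_left _ _)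
    have hεd : ε ≤ d / (4 * M + 1) := le_trans (min_le_right _ _) (min_le_right _ _)
    have hvlow : ∀ x ∈ Ioc 0 ε, d / 2 < deriv γ x := by
      intro x hx
      have hxI : x ∈ Ioo 0 x₀ := ⟨hx.1, by linarith [hx.2]⟩
      rw [← hwv x hxI]
      apply hball
      refine ⟨?_, ⟨hx.1.le, hxI.2⟩⟩
      rw [Metric.mem_ball, Real.dist_eq, sub_zero, abs_of_pos hx.1]
      linarith [hx.2]
    have hd8 : ∀ x ∈ Ioo 0 ε, deriv (deriv γ) x ≤ -(d / (8 * x)) := by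
      intro x hx
      have hx0 : 0 < x := hx.1
      have hxI : x ∈ Ioo 0 x₀ := ⟨hx0, by linarith [hx.2]⟩
      have hv2 : d / 2 < deriv γ x := hvlow x ⟨hx.1, hx.2.le⟩
      have hγM : |γ x| ≤ M := hM x ⟨hx0.le, by linarith [hx.2]⟩
      set v := deriv γ x with hv_def
      have hinvpos : 0 < 1 / (2 * x) := by positivity
      have hcoef : x / 2 - 1 / x ≤ -(1 / (2 * x)) := by
        rw [div_sub_div _ _ two_ne_zero hx0.ne', neg_div',
          div_le_div_iff₀ (by positivity) (by positivity)]
        nlinarith [hx.2]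
      have hcoefneg : x / 2 - 1 / x ≤ 0 := by linarith
      have h1 : (x / 2 - 1 / x) * v ≤ (x / 2 - 1 / x) * (d / 2) :=
        mul_le_mul_of_nonpos_left hv2.le hcoefneg
      have h1' : (x / 2 - 1 / x) * (d / 2) ≤ (-(1 / (2 * x))) * (d / 2) :=
        mul_le_mul_of_nonneg_right hcoef (by linarith)
      have h2 : (-(1 / (2 * x))) * (d / 2) = -(d / (4 * x)) := by ring
      have hxd : x ≤ d / (4 * M + 1) := le_trans hx.2.le hεd
      have h4 : 4 * M * x ≤ d := by
        have h4' : x * (4 * M + 1) ≤ d := (le_div_iff₀ (by linarith)).mp hxd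
        nlinarith
      have h5 : M / 2 ≤ d / (8 * x) := by
        rw [le_div_iff₀ (by positivity)]
        nlinarith
      have e48 : d / (8 * x) + d / (8 * x) = d / (4 * x) := by ring
      have hγ2 : -M ≤ γ x := (abs_le.mp hγM).1
      have hB : (x / 2 - 1 / x) * v - γ x / 2 ≤ -(d / (8 * x)) := by linarith
      rw [hode' x hxI]
      have hd8pos : 0 < d / (8 * x) := by positivity
      have hBle0 : (x / 2 - 1 / x) * v - γ x / 2 ≤ 0 := le_trans hB (by linarith)
      nlinarith [mul_nonpos_of_nonpos_of_nonneg hBle0 (sq_nonneg v)]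
    set φ : ℝ → ℝ := fun x => deriv γ x + d / 8 * Real.log x with hφ_def
    have hφanti : AntitoneOn φ (Ioc 0 ε) := by
      apply antitoneOn_of_deriv_nonpos (convex_Ioc _ _)
      · apply ContinuousOn.add
        · exact hvc.mono (fun y hy => ⟨hy.1, by linarith [hy.2]⟩)
        · exact continuousOn_const.mul (Real.continuousOn_log.mono (fun y hy => hy.1.ne'))
      · intro x hx
        rw [interior_Ioc] at hx
        have hxI : x ∈ Ioo 0 x₀ := ⟨hx.1, by linarith [hx.2]⟩
        exact ((hvd x hxI).hasDerivAt.add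
          ((Real.hasDerivAt_log hx.1.ne').const_mul (d / 8))).differentiableAt.differentiableWithinAt
      · intro x hx
        rw [interior_Ioc] at hx
        have hxI : x ∈ Ioo 0 x₀ := ⟨hx.1, by linarith [hx.2]⟩
        have hder := ((hvd x hxI).hasDerivAt.add
          ((Real.hasDerivAt_log hx.1.ne').const_mul (d / 8))).deriv
        rw [show deriv φ x = deriv (deriv γ + fun y => d / 8 * Real.log y) x from rfl, hder]
        have h8 := hd8 x hx
        have h9 : d / 8 * x⁻¹ = d / (8 * x) := by ring
        linarith
    set L : ℝ := 8 * (d + 2) / d with hL_def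
    have hLpos : 0 < L := div_pos (by linarith) hcon
    set y : ℝ := ε * Real.exp (-L) with hy_def
    have hy0 : 0 < y := mul_pos hε0 (Real.exp_pos _)
    have hyε : y < ε := by
      have h7 : Real.exp (-L) < 1 := by
        rw [show (1:ℝ) = Real.exp 0 by simp]
        exact Real.exp_lt_exp.mpr (by linarith)
      nlinarith
    have hmono : φ ε ≤ φ y := hφanti ⟨hy0, hyε.le⟩ ⟨hε0, le_rfl⟩ hyε.le
    have hlogy : Real.log y = Real.log ε - L := by
      rw [hy_def, Real.log_mul hε0.ne' (Real.exp_ne_zero _), Real.log_exp]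
      ring
    have hvε : -1 < deriv γ ε := hvgt ε ⟨hε0, hεx₁⟩
    have hvy : deriv γ y < d := hvlt y ⟨hy0, by linarith⟩
    have hdL : d / 8 * L = d + 2 := by
      rw [hL_def]
      field_simp
    simp only [hφ_def] at hmono
    rw [hlogy] at hmono
    nlinarith [hmono, hvε, hvy, hdL]
  have hd : w 0 = 0 := le_antisymm hdle hdge
  -- main case: the right-derivative limit at 0 vanishes
  have hvneg : ∀ x ∈ Ioc 0 x₁, deriv γ x < 0 := fun x hx => hd ▸ hvlt x hx
  have hγanti : AntitoneOn γ (Icc 0 x₁) := by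
    apply antitoneOn_of_deriv_nonpos (convex_Icc _ _) (hγc.mono hIcc_sub)
    · intro x hx
      rw [interior_Icc] at hx
      exact (((hreg.differentiableOn (by norm_num)) x (hIcc_sub ⟨hx.1.le, hx.2.le⟩)).differentiableAt
        (hmemnhds x (hIoo_sub hx))).differentiableWithinAt
    · intro x hx
      rw [interior_Icc] at hx
      exact (hvneg x ⟨hx.1, hx.2.le⟩).le
  have hγb : ∀ x ∈ Icc 0 x₁, γ x ≤ b := by
    intro x hx
    have h := hγanti ⟨le_rfl, hx₁0.le⟩ hx hx.1
    rwa [h0] at h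
  have hkey : ∀ x ∈ Ioo 0 x₁, 0 ≤ deriv (deriv γ) x - x * deriv γ x + b := by
    intro x hx
    have hx0 : 0 < x := hx.1
    have hxI : x ∈ Ioo 0 x₀ := hIoo_sub hx
    set v := deriv γ x with hv_def
    have hv0 : v ≤ 0 := (hvneg x ⟨hx.1, hx.2.le⟩).le
    have hv1 : -1 ≤ v := (hvgt x hx).le
    have hγx : γ x ≤ b := hγb x ⟨hx0.le, hx.2.le⟩
    rw [hode' x hxI]
    have hsum : ((x / 2 - 1 / x) * v - γ x / 2) * (1 + v ^ 2) - x * v + b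
        = x * (v * (v ^ 2 - 1)) / 2 + (-(v / x)) * (1 + v ^ 2) + (b - γ x * (1 + v ^ 2) / 2) := by
      field_simp
      ring
    have t1 : 0 ≤ x * (v * (v ^ 2 - 1)) / 2 := by
      have hvv : 0 ≤ v * (v ^ 2 - 1) := by nlinarith
      exact div_nonneg (mul_nonneg hx0.le hvv) (by norm_num)
    have t2 : 0 ≤ (-(v / x)) * (1 + v ^ 2) := by
      apply mul_nonneg _ (by positivity)
      rw [neg_nonneg]
      exact div_nonpos_of_nonpos_of_nonneg hv0 hx0.le
    have t3 : γ x * (1 + v ^ 2) / 2 ≤ b := by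
      rcases le_or_gt (γ x) 0 with h | h
      · nlinarith [sq_nonneg v]
      · have hv2 : v ^ 2 ≤ 1 := by nlinarith
        nlinarith
    linarith [hsum.ge, hsum.le]
  have hexpc : Continuous fun t : ℝ => Real.exp (-t ^ 2 / 2) :=
    Real.continuous_exp.comp (((continuous_pow 2).neg).div_const 2)
  set G : ℝ → ℝ := fun x => ∫ t in (0:ℝ)..x, Real.exp (-t ^ 2 / 2) with hG_def
  have hGderiv : ∀ x : ℝ, HasDerivAt G (Real.exp (-x ^ 2 / 2)) x := fun x =>
    (hexpc.integral_hasStrictDerivAt 0 x).hasDerivAt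
  have hGcont : Continuous G := by
    have hdG : Differentiable ℝ G := fun x => (hGderiv x).differentiableAt
    exact hdG.continuous
  set F : ℝ → ℝ := fun x => Real.exp (-x ^ 2 / 2) * deriv γ x + b * G x with hF_def
  have hFderiv : ∀ x ∈ Ioo 0 x₁, HasDerivAt F
      (Real.exp (-x ^ 2 / 2) * (deriv (deriv γ) x - x * deriv γ x + b)) x := by
    intro x hx
    have h1 : HasDerivAt (fun y : ℝ => -y ^ 2 / 2) (-x) x := by
      have h := ((hasDerivAt_pow 2 x).neg.div_const 2)
      refine h.congr_deriv ?_
      push_cast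
      ring
    have h2 := h1.exp
    have h3 : HasDerivAt (deriv γ) (deriv (deriv γ) x) x := (hvd x (hIoo_sub hx)).hasDerivAt
    have h4 := h2.mul h3
    have h5 := (hGderiv x).const_mul b
    have h6 := h4.add h5
    refine h6.congr_deriv ?_
    ring
  have hvcont' : ContinuousOn (deriv γ) (Icc 0 x₁) := by
    intro x hx
    rcases eq_or_lt_of_le hx.1 with h | h
    · rw [← h]
      have hsub2 : Icc 0 x₁ ⊆ insert 0 (Ioo 0 x₀) := by
        intro y hy
        rcases eq_or_lt_of_le hy.1 with h' | h'
        · exact mem_insert_iff.mpr (Or.inl h'.symm)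
        · exact mem_insert_iff.mpr (Or.inr ⟨h', lt_of_le_of_lt hy.2 hx₁x₀⟩)
      have htend : Tendsto (deriv γ) (𝓝[insert 0 (Ioo 0 x₀)] 0) (𝓝 0) := by
        rw [nhdsWithin_insert, tendsto_sup]
        constructor
        · simpa [h0'] using tendsto_pure_nhds (deriv γ) 0
        · have h1 : Tendsto w (𝓝[Ioo 0 x₀] 0) (𝓝 (w 0)) :=
            (hwc 0 ⟨le_rfl, hx₀⟩).mono_left (nhdsWithin_mono _ Ioo_subset_Ico_self)
          rw [hd] at h1
          apply h1.congr'
          filter_upwards [self_mem_nhdsWithin] with y hy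
          exact hwv y hy
      have hcw : Tendsto (deriv γ) (𝓝[Icc 0 x₁] 0) (𝓝 (deriv γ 0)) := by
        rw [h0']
        exact htend.mono_left (nhdsWithin_mono _ hsub2)
      exact hcw
    · exact (hvd x ⟨h, lt_of_le_of_lt hx.2 hx₁x₀⟩).continuousAt.continuousWithinAt
  have hFmono : MonotoneOn F (Icc 0 x₁) := by
    apply monotoneOn_of_deriv_nonneg (convex_Icc _ _)
    · exact ((hexpc.continuousOn).mul hvcont').add ((continuous_const.mul hGcont).continuousOn)
    · intro x hx
      rw [interior_Icc] at hx
      exact (hFderiv x hx).differentiableAt.differentiableWithinAt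
    · intro x hx
      rw [interior_Icc] at hx
      rw [(hFderiv x hx).deriv]
      exact mul_nonneg (Real.exp_pos _).le (hkey x hx)
  have hF0 : F 0 = 0 := by
    simp [hF_def, hG_def, h0', intervalIntegral.integral_same]
  have hFle : F 0 ≤ F x₁ := hFmono ⟨le_rfl, hx₁0.le⟩ ⟨hx₁0.le, le_rfl⟩ hx₁0.le
  have hmain : Real.exp (-x₁ ^ 2 / 2) ≤ b * G x₁ := by
    have hFx₁ : F x₁ = Real.exp (-x₁ ^ 2 / 2) * (-1) + b * G x₁ := by
      rw [hF_def]
      simp [hval]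
    rw [hF0, hFx₁] at hFle
    linarith
  have hGle : G x₁ ≤ Real.sqrt (2 * π) / 2 := by
    rw [hG_def]
    simp only
    rw [intervalIntegral.integral_of_le hx₁0.le]
    simp only [show ∀ t : ℝ, -t ^ 2 / 2 = -(1/2 : ℝ) * t ^ 2 from fun t => by ring]
    have h2 : (∫ t in Ioc (0:ℝ) x₁, Real.exp (-(1/2:ℝ) * t ^ 2))
        ≤ ∫ t in Ioi (0:ℝ), Real.exp (-(1/2:ℝ) * t ^ 2) := by
      apply MeasureTheory.setIntegral_mono_set
      · exact (integrable_exp_neg_mul_sq (by norm_num : (0:ℝ) < 1/2)).integrableOn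
      · filter_upwards with t using (Real.exp_pos _).le
      · exact HasSubset.Subset.eventuallyLE Ioc_subset_Ioi_self
    have h3 : (∫ t in Ioi (0:ℝ), Real.exp (-(1/2:ℝ) * t ^ 2)) = Real.sqrt (2 * π) / 2 := by
      rw [integral_gaussian_Ioi, show π / (1/2 : ℝ) = 2 * π by ring]
    rw [h3] at h2
    exact h2
  have hsq : Real.exp (-x₁ ^ 2) ≤ π * b ^ 2 / 2 := by
    have h1 : Real.exp (-x₁ ^ 2 / 2) * Real.exp (-x₁ ^ 2 / 2) = Real.exp (-x₁ ^ 2) := by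
      rw [← Real.exp_add]
      ring_nf
    have hs := Real.sq_sqrt (le_of_lt (by positivity : (0:ℝ) < 2 * π))
    have h4 : Real.exp (-x₁ ^ 2 / 2) ≤ b * (Real.sqrt (2 * π) / 2) :=
      le_trans hmain (mul_le_mul_of_nonneg_left hGle hb.le)
    nlinarith [Real.exp_pos (-x₁ ^ 2 / 2), Real.sqrt_nonneg (2 * π)]
  have hlog : Real.log (2 / (π * b ^ 2)) ≤ x₁ ^ 2 := by
    rw [Real.log_le_iff_le_exp (by positivity)]
    rw [div_le_iff₀ (by positivity : (0:ℝ) < π * b ^ 2)]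
    have h4 : Real.exp (-x₁ ^ 2) * Real.exp (x₁ ^ 2) = 1 := by
      rw [← Real.exp_add]
      simp
    nlinarith [Real.exp_pos (x₁ ^ 2), hsq]
  calc Real.sqrt (Real.log (2 / (π * b ^ 2))) ≤ Real.sqrt (x₁ ^ 2) := Real.sqrt_le_sqrt hlog
    _ = x₁ := Real.sqrt_sq hx₁0.le
end

section
/- Let β solve β''/(1+(β')²) = (x/2 - 1/x)·β' - β/2 on an interval (a, x₀) with lim_{x→x₀} β'(x) = +∞. Then β' vanishes at most once in (a, x₀), and if β'(x_m) = 0 for some x_m ∈ (a, x₀), then β''(x) > 0 for all x ∈ (a, x₀) and β(x_m) < 0. -/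
open Set Real Filter Topology
set_option maxHeartbeats 1000000

private lemma slope_left_nonneg {f : ℝ → ℝ} {d u w : ℝ} (hd : HasDerivAt f d w)
    (hu : u < w) (h : ∀ x ∈ Ico u w, f x < f w) : 0 ≤ d := by
  have hs : Tendsto (slope f w) (𝓝[<] w) (𝓝 d) :=
    (hasDerivAt_iff_tendsto_slope.mp hd).mono_left
      (nhdsWithin_mono _ fun x hx => ne_of_lt hx)
  refine ge_of_tendsto hs ?_
  filter_upwards [Ioo_mem_nhdsLT hu] with x hx
  have h1 := h x ⟨hx.1.le, hx.2⟩
  have hx2 : x < w := hx.2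
  have : slope f w x = (f x - f w) / (x - w) := slope_def_field f w x
  rw [this]
  exact (div_pos_of_neg_of_neg (by linarith) (by linarith)).le

private lemma slope_left_nonpos {f : ℝ → ℝ} {d u w : ℝ} (hd : HasDerivAt f d w)
    (hu : u < w) (h : ∀ x ∈ Ico u w, f w < f x) : d ≤ 0 := by
  have := slope_left_nonneg hd.neg hu (fun x hx => by simpa using h x hx)
  linarith

private lemma slope_right_nonneg {f : ℝ → ℝ} {d u w : ℝ} (hd : HasDerivAt f d w)
    (hu : w < u) (h : ∀ x ∈ Ioc w u, f w < f x) : 0 ≤ d := by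
  have hs : Tendsto (slope f w) (𝓝[>] w) (𝓝 d) :=
    (hasDerivAt_iff_tendsto_slope.mp hd).mono_left
      (nhdsWithin_mono _ fun x hx => ne_of_gt hx)
  refine ge_of_tendsto hs ?_
  filter_upwards [Ioo_mem_nhdsGT hu] with x hx
  have h1 := h x ⟨hx.1, hx.2.le⟩
  have hx1 : w < x := hx.1
  have : slope f w x = (f x - f w) / (x - w) := slope_def_field f w x
  rw [this]
  exact (div_pos (by linarith) (by linarith)).le

private lemma beta_facts {β : ℝ → ℝ} {a x₀ : ℝ} (hreg : ContDiffOn ℝ 3 β (Ioo a x₀)) :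
    (∀ x ∈ Ioo a x₀, HasDerivAt β (deriv β x) x) ∧
    (∀ x ∈ Ioo a x₀, HasDerivAt (deriv β) (deriv (deriv β) x) x) ∧
    ContinuousOn (deriv β) (Ioo a x₀) ∧ ContinuousOn β (Ioo a x₀) := by
  have h1 : ContDiffOn ℝ 2 (deriv β) (Ioo a x₀) :=
    hreg.deriv_of_isOpen isOpen_Ioo (by norm_num)
  have hb : ∀ x ∈ Ioo a x₀, HasDerivAt β (deriv β x) x := fun x hx =>
    ((hreg.contDiffAt (isOpen_Ioo.mem_nhds hx)).differentiableAt (by norm_num)).hasDerivAt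
  have hb' : ∀ x ∈ Ioo a x₀, HasDerivAt (deriv β) (deriv (deriv β) x) x := fun x hx =>
    ((h1.contDiffAt (isOpen_Ioo.mem_nhds hx)).differentiableAt (by norm_num)).hasDerivAt
  exact ⟨hb, hb', fun x hx => ((hb' x hx).differentiableAt.continuousAt).continuousWithinAt,
    fun x hx => ((hb x hx).differentiableAt.continuousAt).continuousWithinAt⟩

private lemma no_degenerate {β : ℝ → ℝ} {a x₀ : ℝ} (ha : 0 ≤ a) (hax : a < x₀)
    (hreg : ContDiffOn ℝ 3 β (Ioo a x₀))
    (hode : ∀ x ∈ Ioo a x₀,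
      deriv (deriv β) x / (1 + (deriv β x) ^ 2) = (x / 2 - 1 / x) * deriv β x - β x / 2)
    (hblow : Tendsto (deriv β) (𝓝[<] x₀) atTop)
    {p : ℝ} (hp : p ∈ Ioo a x₀) (h0 : β p = 0) (h1 : deriv β p = 0) : False := by
  obtain ⟨hβd, hβ'd, hβ'c, hβc⟩ := beta_facts hreg
  have hp0 : 0 < p := lt_of_le_of_lt ha hp.1
  have hx₀0 : 0 < x₀ := lt_of_le_of_lt ha hax
  obtain ⟨t, ht1, ht2⟩ : ∃ t, 1 ≤ deriv β t ∧ t ∈ Ioo p x₀ :=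
    ((hblow.eventually_ge_atTop 1).and
      (eventually_of_mem (Ioo_mem_nhdsLT hp.2) fun x hx => hx)).exists
  have hpt : p < t := ht2.1
  have hsub : Icc p t ⊆ Ioo a x₀ := fun x hx =>
    ⟨lt_of_lt_of_le hp.1 hx.1, lt_of_le_of_lt hx.2 ht2.2⟩
  obtain ⟨M, hM⟩ := (isCompact_Icc.exists_bound_of_continuousOn (hβ'c.mono hsub))
  obtain ⟨K, hK, hKx⟩ : ∃ K : ℝ, 0 < K ∧ K = x₀ / 2 + 1 / p :=
    ⟨x₀ / 2 + 1 / p, by positivity, rfl⟩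
  obtain ⟨C, hCx⟩ : ∃ C : ℝ, C = 1 + 2 * (1 + M ^ 2) * (K + 1) := ⟨_, rfl⟩
  have h1M : (0:ℝ) < 1 + M ^ 2 := by positivity
  have hC : 0 < C := by rw [hCx]; positivity
  set E : ℝ → ℝ := fun x => β x ^ 2 + (deriv β x) ^ 2 with hEdef
  set g : ℝ → ℝ := fun x => E x * Real.exp (-C * x) with hgdef
  have key : ∀ x ∈ Ioo p t, HasDerivAt g
      ((2 * β x * deriv β x + 2 * deriv β x * deriv (deriv β) x) * Real.exp (-C * x)
        + E x * (Real.exp (-C * x) * (-C))) x := by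
    intro x hx
    have hxI : x ∈ Ioo a x₀ := hsub ⟨hx.1.le, hx.2.le⟩
    have hE : HasDerivAt E (2 * β x * deriv β x + 2 * deriv β x * deriv (deriv β) x) x := by
      have h := ((hβd x hxI).pow 2).add ((hβ'd x hxI).pow 2)
      rw [hEdef]
      have h : HasDerivAt (fun y => β y ^ 2 + deriv β y ^ 2) _ x := h
      convert h using 1
      push_cast
      norm_num
    have hexp : HasDerivAt (fun y => Real.exp (-C * y)) (Real.exp (-C * x) * (-C)) x := by
      have h := (((hasDerivAt_id x).const_mul (-C)).exp)
      simpa using h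
    exact hE.mul hexp
  have hder_nonpos : ∀ x ∈ Ioo p t,
      (2 * β x * deriv β x + 2 * deriv β x * deriv (deriv β) x) * Real.exp (-C * x)
        + E x * (Real.exp (-C * x) * (-C)) ≤ 0 := by
    intro x hx
    have hxI : x ∈ Ioo a x₀ := hsub ⟨hx.1.le, hx.2.le⟩
    have hx0 : 0 < x := lt_of_le_of_lt ha hxI.1
    have hq2 : (0:ℝ) < 1 + (deriv β x) ^ 2 := by positivity
    have hBeq : deriv (deriv β) x
        = ((x / 2 - 1 / x) * deriv β x - β x / 2) * (1 + (deriv β x) ^ 2) :=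
      (div_eq_iff (ne_of_gt hq2)).mp (hode x hxI)
    have hqM : |deriv β x| ≤ M := by
      have := hM x ⟨hx.1.le, hx.2.le⟩
      simpa using this
    obtain ⟨b, hbq⟩ : ∃ b, b = β x := ⟨_, rfl⟩
    obtain ⟨q, hqq⟩ : ∃ q, q = deriv β x := ⟨_, rfl⟩
    obtain ⟨L, hLq⟩ : ∃ L : ℝ, L = x / 2 - 1 / x := ⟨_, rfl⟩
    have hqM2 : q ^ 2 ≤ M ^ 2 := by
      rw [hqq]
      have h2 := abs_le.mp hqM
      nlinarith [h2.1, h2.2]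
    have hLK : L ≤ K := by
      have h1x : 1 / x ≤ 1 / p := one_div_le_one_div_of_le hp0 hx.1.le
      have h1xp : 0 < 1 / x := one_div_pos.mpr hx0
      have hxx : x / 2 ≤ x₀ / 2 := by linarith [hxI.2]
      rw [hLq, hKx]; linarith
    have hKL : -K ≤ L := by
      have h1x : 1 / x ≤ 1 / p := one_div_le_one_div_of_le hp0 hx.1.le
      rw [hLq, hKx]; linarith
    have hmain : 2 * b * q + 2 * q * ((1 + q ^ 2) * (L * q - b / 2)) ≤ C * (b ^ 2 + q ^ 2) := by
      have e1 : 2 * b * q ≤ b ^ 2 + q ^ 2 := by nlinarith [sq_nonneg (b - q)]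
      have h5 : 2 * L * q ^ 2 - q * b ≤ 2 * K * q ^ 2 + (b ^ 2 + q ^ 2) / 2 := by
        nlinarith [mul_le_mul_of_nonneg_right hLK (sq_nonneg q), sq_nonneg (b + q)]
      have h6 : (0:ℝ) ≤ 2 * K * q ^ 2 + (b ^ 2 + q ^ 2) / 2 := by positivity
      have h7 : (1 + q ^ 2) * (2 * L * q ^ 2 - q * b)
          ≤ (1 + M ^ 2) * (2 * K * q ^ 2 + (b ^ 2 + q ^ 2) / 2) := by
        calc (1 + q ^ 2) * (2 * L * q ^ 2 - q * b)
            ≤ (1 + q ^ 2) * (2 * K * q ^ 2 + (b ^ 2 + q ^ 2) / 2) := by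
              apply mul_le_mul_of_nonneg_left h5; positivity
          _ ≤ (1 + M ^ 2) * (2 * K * q ^ 2 + (b ^ 2 + q ^ 2) / 2) := by
              apply mul_le_mul_of_nonneg_right _ h6; linarith
      have h8 : (1 + M ^ 2) * (2 * K * q ^ 2 + (b ^ 2 + q ^ 2) / 2)
          ≤ 2 * (1 + M ^ 2) * (K + 1) * (b ^ 2 + q ^ 2) := by
        have h9 : (0:ℝ) ≤ 2 * K * b ^ 2 + (3/2) * (b ^ 2 + q ^ 2) := by positivity
        nlinarith [mul_nonneg h1M.le h9]
      have hexpand : 2 * q * ((1 + q ^ 2) * (L * q - b / 2))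
          = (1 + q ^ 2) * (2 * L * q ^ 2 - q * b) := by ring
      rw [hCx, hexpand]
      linarith
    have hexp_pos : 0 < Real.exp (-C * x) := Real.exp_pos _
    have heq : (2 * β x * deriv β x + 2 * deriv β x * deriv (deriv β) x) * Real.exp (-C * x)
        + E x * (Real.exp (-C * x) * (-C))
        = ((2 * b * q + 2 * q * ((1 + q ^ 2) * (L * q - b / 2))) - C * (b ^ 2 + q ^ 2))
            * Real.exp (-C * x) := by
      rw [hEdef, hBeq, hbq, hqq, hLq]; ring
    rw [heq]
    exact mul_nonpos_of_nonpos_of_nonneg (by linarith) hexp_pos.le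
  -- g is antitone on Icc p t
  have hgc : ContinuousOn g (Icc p t) := by
    apply ContinuousOn.mul
    · exact ((hβc.mono hsub).pow 2).add ((hβ'c.mono hsub).pow 2)
    · exact (Real.continuous_exp.comp (continuous_const.mul continuous_id)).continuousOn
  have hanti : AntitoneOn g (Icc p t) := by
    apply antitoneOn_of_deriv_nonpos (convex_Icc p t) hgc
    · intro x hx
      rw [interior_Icc] at hx
      exact (key x hx).differentiableAt.differentiableWithinAt
    · intro x hx
      rw [interior_Icc] at hx
      rw [(key x hx).deriv]
      exact hder_nonpos x hx
  have hgp : g p = 0 := by simp [hgdef, hEdef, h0, h1]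
  have hgt0 : g t ≤ 0 := hgp ▸ hanti ⟨le_rfl, hpt.le⟩ ⟨hpt.le, le_rfl⟩ hpt.le
  have hEt : 0 < E t := by
    have : (1:ℝ) ≤ (deriv β t) ^ 2 := by nlinarith
    have hb2 : (0:ℝ) ≤ β t ^ 2 := sq_nonneg _
    simp only [hEdef]; linarith
  have : 0 < g t := mul_pos hEt (Real.exp_pos _)
  linarith

private lemma Rpos {β : ℝ → ℝ} {a x₀ : ℝ} (ha : 0 ≤ a) (hax : a < x₀)
    (hreg : ContDiffOn ℝ 3 β (Ioo a x₀))
    (hode : ∀ x ∈ Ioo a x₀,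
      deriv (deriv β) x / (1 + (deriv β x) ^ 2) = (x / 2 - 1 / x) * deriv β x - β x / 2)
    {xm : ℝ} (hxm : xm ∈ Ioo a x₀) (hq : deriv β xm = 0) (hb : β xm < 0) :
    ∀ x ∈ Ioo a x₀, 0 < deriv (deriv β) x := by
  obtain ⟨hβd, hβ'd, hβ'c, hβc⟩ := beta_facts hreg
  set R : ℝ → ℝ := fun x => (x / 2 - 1 / x) * deriv β x - β x / 2 with hRdef
  have hBR : ∀ x ∈ Ioo a x₀, deriv (deriv β) x = R x * (1 + (deriv β x) ^ 2) := fun x hx =>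
    (div_eq_iff (by positivity)).mp (hode x hx)
  have hRcont : ContinuousOn R (Ioo a x₀) := by
    apply ContinuousOn.sub
    · apply ContinuousOn.mul
      · exact (continuousOn_id.div_const 2).sub
          (continuousOn_const.div continuousOn_id
            (fun x hx => ne_of_gt (lt_of_le_of_lt ha hx.1)))
      · exact hβ'c
    · exact hβc.div_const 2
  have hRderiv : ∀ x ∈ Ioo a x₀, HasDerivAt R
      ((1/2 + 1/x^2) * deriv β x + (x/2 - 1/x) * deriv (deriv β) x - deriv β x / 2) x := by
    intro x hx
    have hx0 : 0 < x := lt_of_le_of_lt ha hx.1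
    have hL : HasDerivAt (fun y : ℝ => y / 2 - 1 / y) (1/2 + 1/x^2) x := by
      have h1 : HasDerivAt (fun y : ℝ => y / 2) (1/2) x := by
        simpa using (hasDerivAt_id x).div_const 2
      have h2 : HasDerivAt (fun y : ℝ => 1 / y) (-(1/x^2)) x := by
        simpa [one_div] using hasDerivAt_inv (ne_of_gt hx0)
      have h3 : HasDerivAt (fun y : ℝ => y / 2 - 1 / y) _ x := h1.sub h2
      convert h3 using 1; ring
    exact (hL.mul (hβ'd x hx)).sub ((hβd x hx).div_const 2)
  suffices hRall : ∀ z ∈ Ioo a x₀, 0 < R z by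
    intro x hx
    rw [hBR x hx]
    exact mul_pos (hRall x hx) (by positivity)
  intro z hz
  by_contra hcon
  push_neg at hcon
  have hRxm : 0 < R xm := by
    simp only [hRdef, hq, mul_zero, zero_sub]
    linarith
  have hzne : z ≠ xm := fun h => by rw [h] at hcon; linarith
  rcases lt_or_gt_of_ne hzne with hlt | hgt
  · -- z < xm : last zero of R before xm
    set S : Set ℝ := Icc z xm ∩ R ⁻¹' (Iic 0) with hSdef
    have hsub2 : Icc z xm ⊆ Ioo a x₀ := fun x hx =>
      ⟨lt_of_lt_of_le hz.1 hx.1, lt_of_le_of_lt hx.2 hxm.2⟩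
    have hSclosed : IsClosed S :=
      (hRcont.mono hsub2).preimage_isClosed_of_isClosed isClosed_Icc isClosed_Iic
    have hScomp : IsCompact S :=
      isCompact_Icc.of_isClosed_subset hSclosed Set.inter_subset_left
    have hSne : S.Nonempty := ⟨z, ⟨le_rfl, hlt.le⟩, hcon⟩
    set w := sSup S with hwdef
    have hwS : w ∈ S := hScomp.sSup_mem hSne
    have hRw_le : R w ≤ 0 := hwS.2
    have hwxm : w < xm := lt_of_le_of_ne hwS.1.2 (fun h => by rw [h] at hRw_le; linarith)
    have hwI : w ∈ Ioo a x₀ := hsub2 hwS.1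
    have hw0 : 0 < w := lt_of_le_of_lt ha hwI.1
    have hposr : ∀ x ∈ Ioc w xm, 0 < R x := by
      intro x hx
      by_contra hcx
      push_neg at hcx
      have hxS : x ∈ S := ⟨⟨le_trans hwS.1.1 hx.1.le, hx.2⟩, hcx⟩
      exact absurd (le_csSup hScomp.bddAbove hxS) (not_le.mpr hx.1)
    have hRw0 : R w = 0 := by
      refine le_antisymm hRw_le ?_
      have htd : Tendsto R (𝓝[>] w) (𝓝 (R w)) :=
        ((hRcont.continuousAt (isOpen_Ioo.mem_nhds hwI)).tendsto).mono_left nhdsWithin_le_nhds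
      exact ge_of_tendsto htd (eventually_of_mem (Ioo_mem_nhdsGT hwxm)
        fun x hx => (hposr x ⟨hx.1, hx.2.le⟩).le)
    have hBpos : ∀ x ∈ Ioo w xm, 0 < deriv (deriv β) x := by
      intro x hx
      have hxI : x ∈ Ioo a x₀ := ⟨lt_trans hwI.1 hx.1, lt_trans hx.2 hxm.2⟩
      rw [hBR x hxI]
      exact mul_pos (hposr x ⟨hx.1, hx.2.le⟩) (by positivity)
    have hmono : StrictMonoOn (deriv β) (Icc w xm) := by
      apply strictMonoOn_of_deriv_pos (convex_Icc w xm)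
      · exact hβ'c.mono (fun x hx => ⟨lt_of_lt_of_le hwI.1 hx.1, lt_of_le_of_lt hx.2 hxm.2⟩)
      · intro x hx
        rw [interior_Icc] at hx
        exact hBpos x hx
    have hqw : deriv β w < 0 := by
      have := hmono ⟨le_rfl, hwxm.le⟩ ⟨hwxm.le, le_rfl⟩ hwxm
      rw [hq] at this
      linarith
    have hBw : deriv (deriv β) w = 0 := by rw [hBR w hwI, hRw0]; ring
    have hval : (1/2 + 1/w^2) * deriv β w + (w/2 - 1/w) * deriv (deriv β) w - deriv β w / 2
        = deriv β w / w^2 := by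
      rw [hBw]
      field_simp
      ring
    have hRd : HasDerivAt R (deriv β w / w^2) w := hval ▸ hRderiv w hwI
    have h0le : 0 ≤ deriv β w / w^2 :=
      slope_right_nonneg hRd hwxm (fun x hx => by rw [hRw0]; exact hposr x hx)
    have : deriv β w / w^2 < 0 := div_neg_of_neg_of_pos hqw (by positivity)
    linarith
  · -- xm < z : first zero of R after xm
    set S : Set ℝ := Icc xm z ∩ R ⁻¹' (Iic 0) with hSdef
    have hsub2 : Icc xm z ⊆ Ioo a x₀ := fun x hx =>
      ⟨lt_of_lt_of_le hxm.1 hx.1, lt_of_le_of_lt hx.2 hz.2⟩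
    have hSclosed : IsClosed S :=
      (hRcont.mono hsub2).preimage_isClosed_of_isClosed isClosed_Icc isClosed_Iic
    have hScomp : IsCompact S :=
      isCompact_Icc.of_isClosed_subset hSclosed Set.inter_subset_left
    have hSne : S.Nonempty := ⟨z, ⟨hgt.le, le_rfl⟩, hcon⟩
    set w := sInf S with hwdef
    have hwS : w ∈ S := hScomp.sInf_mem hSne
    have hRw_le : R w ≤ 0 := hwS.2
    have hwxm : xm < w := lt_of_le_of_ne hwS.1.1 (fun h => by rw [← h] at hRw_le; linarith)
    have hwI : w ∈ Ioo a x₀ := hsub2 hwS.1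
    have hw0 : 0 < w := lt_of_le_of_lt ha hwI.1
    have hposl : ∀ x ∈ Ico xm w, 0 < R x := by
      intro x hx
      by_contra hcx
      push_neg at hcx
      have hxS : x ∈ S := ⟨⟨hx.1, le_trans hx.2.le hwS.1.2⟩, hcx⟩
      exact absurd (csInf_le hScomp.bddBelow hxS) (not_le.mpr hx.2)
    have hRw0 : R w = 0 := by
      refine le_antisymm hRw_le ?_
      have htd : Tendsto R (𝓝[<] w) (𝓝 (R w)) :=
        ((hRcont.continuousAt (isOpen_Ioo.mem_nhds hwI)).tendsto).mono_left nhdsWithin_le_nhds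
      exact ge_of_tendsto htd (eventually_of_mem (Ioo_mem_nhdsLT hwxm)
        fun x hx => (hposl x ⟨hx.1.le, hx.2⟩).le)
    have hBpos : ∀ x ∈ Ioo xm w, 0 < deriv (deriv β) x := by
      intro x hx
      have hxI : x ∈ Ioo a x₀ := ⟨lt_trans hxm.1 hx.1, lt_trans hx.2 hwI.2⟩
      rw [hBR x hxI]
      exact mul_pos (hposl x ⟨hx.1.le, hx.2⟩) (by positivity)
    have hmono : StrictMonoOn (deriv β) (Icc xm w) := by
      apply strictMonoOn_of_deriv_pos (convex_Icc xm w)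
      · exact hβ'c.mono (fun x hx => ⟨lt_of_lt_of_le hxm.1 hx.1, lt_of_le_of_lt hx.2 hwI.2⟩)
      · intro x hx
        rw [interior_Icc] at hx
        exact hBpos x hx
    have hqw : 0 < deriv β w := by
      have := hmono ⟨le_rfl, hwxm.le⟩ ⟨hwxm.le, le_rfl⟩ hwxm
      rw [hq] at this
      linarith
    have hBw : deriv (deriv β) w = 0 := by rw [hBR w hwI, hRw0]; ring
    have hval : (1/2 + 1/w^2) * deriv β w + (w/2 - 1/w) * deriv (deriv β) w - deriv β w / 2
        = deriv β w / w^2 := by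
      rw [hBw]
      field_simp
      ring
    have hRd : HasDerivAt R (deriv β w / w^2) w := hval ▸ hRderiv w hwI
    have hle0 : deriv β w / w^2 ≤ 0 :=
      slope_left_nonpos hRd hwxm (fun x hx => by rw [hRw0]; exact hposl x hx)
    have : 0 < deriv β w / w^2 := div_pos hqw (by positivity)
    linarith

private lemma crit_neg {β : ℝ → ℝ} {a x₀ : ℝ} (ha : 0 ≤ a) (hax : a < x₀)
    (hreg : ContDiffOn ℝ 3 β (Ioo a x₀))
    (hode : ∀ x ∈ Ioo a x₀,
      deriv (deriv β) x / (1 + (deriv β x) ^ 2) = (x / 2 - 1 / x) * deriv β x - β x / 2)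
    (hblow : Tendsto (deriv β) (𝓝[<] x₀) atTop)
    {xm : ℝ} (hxm : xm ∈ Ioo a x₀) (hq : deriv β xm = 0) : β xm < 0 := by
  obtain ⟨hβd, hβ'd, hβ'c, hβc⟩ := beta_facts hreg
  by_contra hcon
  push_neg at hcon
  rcases eq_or_lt_of_le hcon with heq | hpos
  · exact no_degenerate ha hax hreg hode hblow hxm heq.symm hq
  -- β xm > 0, so β''(xm) < 0
  have hxm0 : 0 < xm := lt_of_le_of_lt ha hxm.1
  have hB : deriv (deriv β) xm = -(β xm / 2) := by
    have h := hode xm hxm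
    rw [hq] at h
    simpa using (div_eq_iff (by positivity : (1:ℝ) + (0:ℝ)^2 ≠ 0)).mp (by simpa [hq] using h)
  have hBneg : deriv (deriv β) xm < 0 := by rw [hB]; linarith
  -- find s > xm with deriv β s < 0
  have hslope : Tendsto (slope (deriv β) xm) (𝓝[>] xm) (𝓝 (deriv (deriv β) xm)) :=
    (hasDerivAt_iff_tendsto_slope.mp (hβ'd xm hxm)).mono_left
      (nhdsWithin_mono _ fun x hx => ne_of_gt hx)
  have hev : ∀ᶠ x in 𝓝[>] xm, slope (deriv β) xm x < 0 :=
    hslope.eventually (Filter.Tendsto.eventually_lt_const hBneg tendsto_id)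
  obtain ⟨s, hs1, hs2⟩ : ∃ s, slope (deriv β) xm s < 0 ∧ s ∈ Ioo xm x₀ :=
    (hev.and (eventually_of_mem (Ioo_mem_nhdsGT hxm.2) fun x hx => hx)).exists
  have hqs : deriv β s < 0 := by
    have h := hs1
    rw [slope_def_field, hq, sub_zero] at h
    have hsx : 0 < s - xm := by have := hs2.1; linarith
    by_contra hge
    push_neg at hge
    exact absurd (div_nonneg hge hsx.le) (not_le.mpr h)
  have hsI : s ∈ Ioo a x₀ := ⟨lt_trans hxm.1 hs2.1, hs2.2⟩
  -- find t > s with deriv β t ≥ 1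
  obtain ⟨t, ht1, ht2⟩ : ∃ t, 1 ≤ deriv β t ∧ t ∈ Ioo s x₀ :=
    ((hblow.eventually_ge_atTop 1).and
      (eventually_of_mem (Ioo_mem_nhdsLT hs2.2) fun x hx => hx)).exists
  have hst : s < t := ht2.1
  have hsubst : Icc s t ⊆ Ioo a x₀ := fun x hx =>
    ⟨lt_of_lt_of_le hsI.1 hx.1, lt_of_le_of_lt hx.2 ht2.2⟩
  have hcst : ContinuousOn (deriv β) (Icc s t) := hβ'c.mono hsubst
  -- first zero x₁ of deriv β in [s, t]
  set S : Set ℝ := Icc s t ∩ (deriv β) ⁻¹' {0} with hSdef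
  have hSclosed : IsClosed S :=
    hcst.preimage_isClosed_of_isClosed isClosed_Icc isClosed_singleton
  have hScomp : IsCompact S :=
    isCompact_Icc.of_isClosed_subset hSclosed Set.inter_subset_left
  have hSne : S.Nonempty := by
    obtain ⟨c, hc1, hc2⟩ := intermediate_value_Icc hst.le hcst
      (show (0:ℝ) ∈ Icc (deriv β s) (deriv β t) from ⟨hqs.le, by linarith⟩)
    exact ⟨c, hc1, hc2⟩
  set x₁ := sInf S with hx₁def
  have hx₁S : x₁ ∈ S := hScomp.sInf_mem hSne
  have hqx₁ : deriv β x₁ = 0 := hx₁S.2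
  have hsx₁ : s < x₁ := lt_of_le_of_ne hx₁S.1.1 (fun h => by rw [← h] at hqx₁; linarith)
  have hx₁I : x₁ ∈ Ioo a x₀ := hsubst hx₁S.1
  -- deriv β < 0 on [s, x₁)
  have hneg : ∀ x ∈ Ico s x₁, deriv β x < 0 := by
    intro x hx
    by_contra hge
    push_neg at hge
    rcases eq_or_lt_of_le hge with heq0 | hpos0
    · have hxS : x ∈ S := ⟨⟨hx.1, le_trans hx.2.le hx₁S.1.2⟩, heq0.symm⟩
      exact absurd (csInf_le hScomp.bddBelow hxS) (not_le.mpr hx.2)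
    · obtain ⟨c, hc1, hc2⟩ := intermediate_value_Icc hx.1
        (hcst.mono (Icc_subset_Icc le_rfl (le_trans hx.2.le hx₁S.1.2)))
        (show (0:ℝ) ∈ Icc (deriv β s) (deriv β x) from ⟨hqs.le, hpos0.le⟩)
      have hcS : c ∈ S := ⟨⟨hc1.1, le_trans hc1.2 (le_trans hx.2.le hx₁S.1.2)⟩, hc2⟩
      have := csInf_le hScomp.bddBelow hcS
      have : x₁ ≤ x := le_trans this hc1.2
      exact absurd this (not_le.mpr hx.2)
  -- β''(x₁) ≥ 0
  have hBx₁ : 0 ≤ deriv (deriv β) x₁ :=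
    slope_left_nonneg (hβ'd x₁ hx₁I) hsx₁
      (fun x hx => by rw [hqx₁]; exact hneg x hx)
  -- hence β x₁ ≤ 0
  have hbx₁ : β x₁ ≤ 0 := by
    have h := hode x₁ hx₁I
    rw [hqx₁] at h
    have : deriv (deriv β) x₁ = -(β x₁ / 2) := by
      simpa using (div_eq_iff (by positivity : (1:ℝ) + (0:ℝ)^2 ≠ 0)).mp (by simpa using h)
    linarith [this ▸ hBx₁]
  rcases eq_or_lt_of_le hbx₁ with heq0 | hneg0
  · exact no_degenerate ha hax hreg hode hblow hx₁I heq0 hqx₁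
  · have hall := Rpos ha hax hreg hode hx₁I hqx₁ hneg0
    have hmono : StrictMonoOn (deriv β) (Ioo a x₀) := by
      apply strictMonoOn_of_deriv_pos (convex_Ioo a x₀) hβ'c
      intro x hx
      rw [interior_Ioo] at hx
      exact hall x hx
    have := hmono hxm hx₁I (lt_trans hs2.1 hsx₁)
    rw [hq, hqx₁] at this
    linarith

theorem stmt_11 (β : ℝ → ℝ) (a x₀ : ℝ) (ha : 0 ≤ a) (hax : a < x₀)
    (hreg : ContDiffOn ℝ 3 β (Ioo a x₀))
    (hode : ∀ x ∈ Ioo a x₀,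
      deriv (deriv β) x / (1 + (deriv β x) ^ 2) = (x / 2 - 1 / x) * deriv β x - β x / 2)
    (hblow : Tendsto (deriv β) (nhdsWithin x₀ (Iio x₀)) atTop) :
    (∀ x ∈ Ioo a x₀, ∀ y ∈ Ioo a x₀, deriv β x = 0 → deriv β y = 0 → x = y) ∧
      ∀ x_m ∈ Ioo a x₀, deriv β x_m = 0 →
        (∀ x ∈ Ioo a x₀, 0 < deriv (deriv β) x) ∧ β x_m < 0 := by
  obtain ⟨hβd, hβ'd, hβ'c, hβc⟩ := beta_facts hreg
  constructor
  · intro x hx y hy hqx hqy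
    have hbx := crit_neg ha hax hreg hode hblow hx hqx
    have hall := Rpos ha hax hreg hode hx hqx hbx
    have hmono : StrictMonoOn (deriv β) (Ioo a x₀) := by
      apply strictMonoOn_of_deriv_pos (convex_Ioo a x₀) hβ'c
      intro u hu
      rw [interior_Ioo] at hu
      exact hall u hu
    exact hmono.injOn hx hy (by rw [hqx, hqy])
  · intro xm hxm hq
    have hb := crit_neg ha hax hreg hode hblow hxm hq
    exact ⟨Rpos ha hax hreg hode hxm hq hb, hb⟩
end

section
/- Let β solve β''/(1+(β')²) = (x/2 - 1/x)·β' - β/2 on (x₁, x₂) with β' < 0, β'' > 0, β(x₂) = 0, β'(x₂) = -m < 0, and suppose (1/2)x - 1/x ≤ -1/M on (x₁, x₂) for some M > 0. Then lim_{x→x₁} β(x) ≤ 2·(m·√(x₂ - x₁) + √(3M))·√(x₂ - x₁) < ∞. -/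
open Set Real Filter

private lemma cube_contra (m k F : ℝ) (hm : 0 < m) (hk : 0 < k)
    (hc : (m + k)^3 < F^3) (he : -(k^3) + 2*F^3 ≤ 2*m^3) : False := by
  nlinarith [mul_pos (mul_pos hm hm) hk, mul_pos hm (mul_pos hk hk),
    mul_pos hk (mul_pos hk hk)]

set_option maxHeartbeats 1000000 in
theorem stmt_13 (β : ℝ → ℝ) (x₁ x₂ m M : ℝ) (hx : x₁ < x₂) (hm : 0 < m) (hM : 0 < M)
    (hreg : ContDiffOn ℝ 3 β (Ioc x₁ x₂))
    (hode : ∀ x ∈ Ioo x₁ x₂,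
      deriv (deriv β) x / (1 + (deriv β x) ^ 2) = (x / 2 - 1 / x) * deriv β x - β x / 2)
    (hdec : ∀ x ∈ Ioo x₁ x₂, deriv β x < 0)
    (hconv : ∀ x ∈ Ioo x₁ x₂, 0 < deriv (deriv β) x)
    (hend : β x₂ = 0) (hend' : deriv β x₂ = -m)
    (hcoef : ∀ x ∈ Ioo x₁ x₂, x / 2 - 1 / x ≤ -1 / M) :
    ∀ x ∈ Ioo x₁ x₂,
      β x ≤ 2 * (m * Real.sqrt (x₂ - x₁) + Real.sqrt (3 * M)) * Real.sqrt (x₂ - x₁) := by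
  have hIoo : Ioo x₁ x₂ ⊆ Ioc x₁ x₂ := Ioo_subset_Ioc_self
  have hC3 : ContDiffOn ℝ 3 β (Ioo x₁ x₂) := hreg.mono hIoo
  have hD1C2 : ContDiffOn ℝ 2 (deriv β) (Ioo x₁ x₂) :=
    hC3.deriv_of_isOpen isOpen_Ioo (by norm_num)
  have hD2C1 : ContDiffOn ℝ 1 (deriv (deriv β)) (Ioo x₁ x₂) :=
    hD1C2.deriv_of_isOpen isOpen_Ioo (by norm_num)
  have hβd : ∀ x ∈ Ioo x₁ x₂, HasDerivAt β (deriv β x) x := fun x hxm =>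
    ((hC3.differentiableOn (by norm_num)).differentiableAt (isOpen_Ioo.mem_nhds hxm)).hasDerivAt
  have hD1d : ∀ x ∈ Ioo x₁ x₂, HasDerivAt (deriv β) (deriv (deriv β) x) x := fun x hxm =>
    ((hD1C2.differentiableOn (by norm_num)).differentiableAt (isOpen_Ioo.mem_nhds hxm)).hasDerivAt
  have hD2d : ∀ x ∈ Ioo x₁ x₂, HasDerivAt (deriv (deriv β)) (deriv (deriv (deriv β)) x) x :=
    fun x hxm =>
    ((hD2C1.differentiableOn (by norm_num)).differentiableAt (isOpen_Ioo.mem_nhds hxm)).hasDerivAt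
  have hxne : ∀ x ∈ Ioo x₁ x₂, x ≠ 0 := by
    intro x hxm hx0
    have h := hcoef x hxm
    rw [hx0] at h
    norm_num at h
    have h3 : (0:ℝ) < 1 / M := by positivity
    have h2 : (-1:ℝ) / M = -(1/M) := by ring
    rw [h2] at h
    linarith
  have hode' : ∀ x ∈ Ioo x₁ x₂, deriv (deriv β) x
      = (1 + (deriv β x)^2) * ((x/2 - 1/x) * deriv β x - β x / 2) := by
    intro x hxm
    have h := hode x hxm
    have hpos : (0:ℝ) < 1 + (deriv β x)^2 := by positivity
    rw [div_eq_iff (ne_of_gt hpos)] at h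
    rw [h]; ring
  -- the third derivative bound
  have hD3 : ∀ x ∈ Ioo x₁ x₂,
      deriv (deriv (deriv β)) x ≤ -((deriv β x)^2 * deriv (deriv β) x) / M := by
    intro x hxm
    obtain ⟨hx1, hx2⟩ := hxm
    have hx0 : x ≠ 0 := hxne x ⟨hx1, hx2⟩
    have hxsq : (0:ℝ) < x^2 := by positivity
    have hβx := hβd x ⟨hx1, hx2⟩
    have hD1x := hD1d x ⟨hx1, hx2⟩
    have hev : (deriv (deriv β)) =ᶠ[nhds x]
        (fun t => (1 + (deriv β t)^2) * ((t/2 - 1/t) * deriv β t - β t / 2)) := by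
      filter_upwards [isOpen_Ioo.mem_nhds (⟨hx1, hx2⟩ : x ∈ Ioo x₁ x₂)] with t ht
      exact hode' t ht
    have h1t : HasDerivAt (fun t:ℝ => 1/t) (-(x^2)⁻¹) x := by
      simpa [one_div] using hasDerivAt_inv hx0
    have hc1 : HasDerivAt (fun t:ℝ => t/2 - 1/t) (1/2 - -(x^2)⁻¹) x :=
      ((hasDerivAt_id x).div_const 2).sub h1t
    have hsqd : HasDerivAt (fun t => 1 + (deriv β t)^2)
        (2 * deriv β x * deriv (deriv β) x) x := by
      have h := (hD1x.fun_pow 2).const_add 1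
      simpa using h
    have hG : HasDerivAt (fun t => (t/2 - 1/t) * deriv β t - β t / 2)
        ((1/2 - -(x^2)⁻¹) * deriv β x + (x/2 - 1/x) * deriv (deriv β) x - deriv β x / 2) x :=
      (hc1.mul hD1x).sub (hβx.div_const 2)
    have hdF : HasDerivAt (fun t => (1 + (deriv β t)^2) * ((t/2 - 1/t) * deriv β t - β t / 2))
        (2 * deriv β x * deriv (deriv β) x * ((x/2 - 1/x) * deriv β x - β x / 2)
          + (1 + (deriv β x)^2) *
            ((1/2 - -(x^2)⁻¹) * deriv β x + (x/2 - 1/x) * deriv (deriv β) x - deriv β x / 2)) x :=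
      hsqd.mul hG
    have hD3eq : deriv (deriv (deriv β)) x
        = 2 * deriv β x * deriv (deriv β) x * ((x/2 - 1/x) * deriv β x - β x / 2)
          + (1 + (deriv β x)^2) *
            ((1/2 - -(x^2)⁻¹) * deriv β x + (x/2 - 1/x) * deriv (deriv β) x - deriv β x / 2) := by
      rw [hev.deriv_eq]
      exact hdF.deriv
    rw [hD3eq]
    -- now the inequality
    have hb0 : deriv β x < 0 := hdec x ⟨hx1, hx2⟩
    have hc0 : 0 < deriv (deriv β) x := hconv x ⟨hx1, hx2⟩
    have hcf : x/2 - 1/x ≤ -1/M := hcoef x ⟨hx1, hx2⟩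
    have hG0 : 0 ≤ (x/2 - 1/x) * deriv β x - β x / 2 := by
      have h := hode' x ⟨hx1, hx2⟩
      nlinarith [sq_nonneg (deriv β x)]
    have e1 : 2 * deriv β x * deriv (deriv β) x * ((x/2 - 1/x) * deriv β x - β x / 2) ≤ 0 :=
      mul_nonpos_of_nonpos_of_nonneg (by nlinarith) hG0
    have e2 : (1/2 - -(x^2)⁻¹) * deriv β x + (x/2 - 1/x) * deriv (deriv β) x - deriv β x / 2
        ≤ -1/M * deriv (deriv β) x := by
      have h1 : (1/2 - -(x^2)⁻¹) * deriv β x - deriv β x / 2 = deriv β x * (x^2)⁻¹ := by ring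
      have h2 : deriv β x * (x^2)⁻¹ ≤ 0 :=
        mul_nonpos_of_nonpos_of_nonneg hb0.le (by positivity)
      have h3 : (x/2 - 1/x) * deriv (deriv β) x ≤ -1/M * deriv (deriv β) x :=
        mul_le_mul_of_nonneg_right hcf hc0.le
      linarith
    have e3 : (1 + (deriv β x)^2) *
        ((1/2 - -(x^2)⁻¹) * deriv β x + (x/2 - 1/x) * deriv (deriv β) x - deriv β x / 2)
        ≤ (1 + (deriv β x)^2) * (-1/M * deriv (deriv β) x) :=
      mul_le_mul_of_nonneg_left e2 (by positivity)
    have e4 : (1 + (deriv β x)^2) * (-1/M * deriv (deriv β) x)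
        ≤ -((deriv β x)^2 * deriv (deriv β) x) / M := by
      have h1 : 0 < deriv (deriv β) x / M := by positivity
      have : (1 + (deriv β x)^2) * (-1/M * deriv (deriv β) x)
          = -((deriv β x)^2 * deriv (deriv β) x) / M - deriv (deriv β) x / M := by ring
      linarith
    linarith
  -- differentiability at x₂ and continuity of deriv β up to x₂
  have hdiffx₂ : DifferentiableAt ℝ β x₂ := by
    by_contra h
    rw [deriv_zero_of_not_differentiableAt h] at hend'
    linarith
  have hmemx₂ : x₂ ∈ Ioc x₁ x₂ := ⟨hx, le_rfl⟩
  have hcd1 : ContinuousOn (deriv β) (Ioc x₁ x₂) := by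
    have h1 : ContinuousOn (derivWithin β (Ioc x₁ x₂)) (Ioc x₁ x₂) :=
      hreg.continuousOn_derivWithin (uniqueDiffOn_Ioc x₁ x₂) (by norm_num)
    refine h1.congr ?_
    intro y hy
    rcases eq_or_lt_of_le hy.2 with heq | hlt
    · rw [heq]
      exact (hdiffx₂.derivWithin (uniqueDiffOn_Ioc x₁ x₂ x₂ hmemx₂)).symm
    · exact (derivWithin_of_mem_nhds (Ioc_mem_nhds hy.1 hlt)).symm
  have htend : Tendsto (deriv β) (nhdsWithin x₂ (Ioo x₁ x₂)) (nhds (-m)) := by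
    have h0 : ContinuousWithinAt (deriv β) (Ioc x₁ x₂) x₂ := hcd1 x₂ hmemx₂
    have h1 : Tendsto (deriv β) (nhdsWithin x₂ (Ioo x₁ x₂)) (nhds (deriv β x₂)) :=
      h0.mono_left (nhdsWithin_mono _ hIoo)
    rwa [hend'] at h1
  -- h := f' + f³/(3M) is monotone
  have hhd : ∀ y ∈ Ioo x₁ x₂, HasDerivAt
      (fun t => -(deriv (deriv β) t) + (-(deriv β t))^3 / (3*M))
      (-(deriv (deriv (deriv β)) y) + ((3:ℕ) * (-(deriv β y))^2 * -(deriv (deriv β) y)) / (3*M))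
      y := by
    intro y hy
    exact ((hD2d y hy).neg).add ((((hD1d y hy).neg).pow 3).div_const (3*M))
  have hmono : MonotoneOn (fun t => -(deriv (deriv β) t) + (-(deriv β t))^3 / (3*M))
      (Ioo x₁ x₂) := by
    apply monotoneOn_of_deriv_nonneg (convex_Ioo _ _)
    · intro y hy
      exact ((hhd y hy).continuousAt).continuousWithinAt
    · rw [interior_Ioo]
      intro y hy
      exact (hhd y hy).differentiableAt.differentiableWithinAt
    · rw [interior_Ioo]
      intro y hy
      rw [(hhd y hy).deriv]
      have h1 := hD3 y hy
      have h2 : ((3:ℕ) * (-(deriv β y))^2 * -(deriv (deriv β) y)) / (3*M)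
          = -((deriv β y)^2 * deriv (deriv β) y) / M := by
        field_simp
        ring
      rw [h2]
      linarith
  have hkey : ∀ x ∈ Ioo x₁ x₂,
      -(deriv (deriv β) x) + (-(deriv β x))^3 / (3*M) ≤ m^3 / (3*M) := by
    intro x hxm
    have hne : (nhdsWithin x₂ (Ioo x₁ x₂)).NeBot := by
      apply mem_closure_iff_nhdsWithin_neBot.mp
      rw [closure_Ioo (ne_of_lt hx)]
      exact ⟨le_of_lt hx, le_rfl⟩
    have hcont : Continuous fun z : ℝ => (-z)^3 / (3*M) := by continuity
    have hlim : Tendsto (fun y => (-(deriv β y))^3 / (3*M)) (nhdsWithin x₂ (Ioo x₁ x₂))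
        (nhds (m^3 / (3*M))) := by
      have := (hcont.tendsto (-m)).comp htend
      simpa [Function.comp_def] using this
    refine ge_of_tendsto hlim ?_
    filter_upwards [self_mem_nhdsWithin,
      mem_nhdsWithin_of_mem_nhds (isOpen_Ioi.mem_nhds hxm.2)] with y hy1 hy2
    have h1 := hmono hxm hy1 (le_of_lt hy2)
    have h2 := hconv y hy1
    simp only at h1 ⊢
    linarith
  -- barrier bound with shifted base point a
  set S := Real.sqrt (3*M) with hSdef
  have hS : 0 < S := Real.sqrt_pos.mpr (by positivity)
  have hS2 : S^2 = 3*M := Real.sq_sqrt (by positivity)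
  have hbar2 : ∀ t ∈ Ioo x₁ x₂, ∀ a ∈ Ioo x₁ t,
      -(deriv β t) ≤ m + S * (Real.sqrt (t - a))⁻¹ := by
    rintro t ⟨ht1, ht2⟩ a ⟨ha1, ha2⟩
    by_contra hcon
    push_neg at hcon
    have hf_cont : ContinuousOn (fun s => -(deriv β s)) (Icc a x₂) :=
      (hcd1.mono (fun s hs => ⟨lt_of_lt_of_le ha1 hs.1, hs.2⟩)).neg
    have hax₂ : a ≤ x₂ := le_of_lt (lt_trans ha2 ht2)
    obtain ⟨p, hpmem, hpmax⟩ := isCompact_Icc.exists_isMaxOn (nonempty_Icc.mpr hax₂) hf_cont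
    set K := -(deriv β p) with hK
    have hKm : m ≤ K := by
      have h := isMaxOn_iff.mp hpmax x₂ (mem_Icc.mpr ⟨hax₂, le_rfl⟩)
      rw [hend'] at h
      simpa using h
    have hKm1 : 0 < K - m + 1 := by linarith
    obtain ⟨δ, hδ1, hδ2, hδ3⟩ : ∃ δ : ℝ, 0 < δ ∧ δ ≤ (t - a)/2 ∧ δ ≤ 3*M/(K - m + 1)^2 :=
      ⟨min ((t - a)/2) (3*M/(K - m + 1)^2), lt_min (by linarith) (by positivity),
        min_le_left _ _, min_le_right _ _⟩
    set a' := a + δ with ha'def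
    have ha'a : a < a' := by rw [ha'def]; linarith
    have ha't : a' < t := by rw [ha'def]; linarith
    have hδeq : a' - a = δ := by rw [ha'def]; ring
    have hga' : K + 1 ≤ m + S * (Real.sqrt (a' - a))⁻¹ := by
      have h2 : Real.sqrt δ ≤ S / (K - m + 1) := by
        have hle : δ ≤ (S/(K - m + 1))^2 := by
          rw [div_pow, hS2]
          exact hδ3
        calc Real.sqrt δ ≤ Real.sqrt ((S/(K - m + 1))^2) := Real.sqrt_le_sqrt hle
          _ = S/(K - m + 1) := Real.sqrt_sq (by positivity)
      have h3 : 0 < Real.sqrt δ := Real.sqrt_pos.mpr hδ1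
      have h4 : (S/(K - m + 1))⁻¹ ≤ (Real.sqrt δ)⁻¹ := inv_anti₀ h3 h2
      have h5 : S * (S/(K - m + 1))⁻¹ = K - m + 1 := by field_simp
      have h6 : S * (S/(K - m + 1))⁻¹ ≤ S * (Real.sqrt δ)⁻¹ :=
        mul_le_mul_of_nonneg_left h4 hS.le
      rw [hδeq]
      linarith [h5 ▸ h6]
    have ha'x₂ : a' ≤ x₂ := le_of_lt (lt_of_lt_of_le ha't (le_of_lt ht2))
    have hg_cont : ContinuousOn (fun s => m + S * (Real.sqrt (s - a))⁻¹) (Icc a' x₂) := by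
      apply ContinuousOn.add continuousOn_const
      apply ContinuousOn.mul continuousOn_const
      apply ContinuousOn.inv₀
      · exact (Real.continuous_sqrt.comp (continuous_id.sub continuous_const)).continuousOn
      · intro s hs
        exact ne_of_gt (Real.sqrt_pos.mpr (by
          have := hs.1; linarith))
    have hw_cont : ContinuousOn
        (fun s => -(deriv β s) - (m + S * (Real.sqrt (s - a))⁻¹)) (Icc a' x₂) :=
      (hf_cont.mono (Icc_subset_Icc ha'a.le le_rfl)).sub hg_cont
    obtain ⟨q, hqmem, hqmax⟩ := isCompact_Icc.exists_isMaxOn (nonempty_Icc.mpr ha'x₂) hw_cont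
    have hwt : 0 < -(deriv β t) - (m + S * (Real.sqrt (t - a))⁻¹) := by linarith
    have hwq : 0 < -(deriv β q) - (m + S * (Real.sqrt (q - a))⁻¹) :=
      lt_of_lt_of_le hwt (isMaxOn_iff.mp hqmax t (mem_Icc.mpr ⟨ha't.le, ht2.le⟩))
    have hfa'K : -(deriv β a') ≤ K := isMaxOn_iff.mp hpmax a' (mem_Icc.mpr ⟨ha'a.le, ha'x₂⟩)
    have hq1 : a' < q := by
      rcases eq_or_lt_of_le hqmem.1 with h | h
      · exfalso
        rw [← h] at hwq
        linarith
      · exact h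
    have hq2 : q < x₂ := by
      rcases eq_or_lt_of_le hqmem.2 with h | h
      · exfalso
        rw [h] at hwq
        have hpos : 0 < S * (Real.sqrt (x₂ - a))⁻¹ := by
          apply mul_pos hS
          exact inv_pos.mpr (Real.sqrt_pos.mpr (by linarith))
        rw [hend'] at hwq
        linarith
      · exact h
    have hqIoo : q ∈ Ioo x₁ x₂ := ⟨lt_trans ha1 (lt_trans ha'a hq1), hq2⟩
    have hqa : 0 < q - a := by linarith
    have hrpos : 0 < Real.sqrt (q - a) := Real.sqrt_pos.mpr hqa
    -- derivative of the barrier at q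
    have h1 : HasDerivAt (fun s : ℝ => s - a) 1 q := (hasDerivAt_id q).sub_const a
    have h2 : HasDerivAt (fun s : ℝ => Real.sqrt (s - a)) (1 / (2 * Real.sqrt (q - a))) q := by
      have := h1.sqrt (ne_of_gt hqa)
      simpa using this
    have hgd : HasDerivAt (fun s => m + S * (Real.sqrt (s - a))⁻¹)
        (S * (-(1 / (2 * Real.sqrt (q - a))) / (Real.sqrt (q - a))^2)) q :=
      ((h2.inv (ne_of_gt hrpos)).const_mul S).const_add m
    have hfd : HasDerivAt (fun s => -(deriv β s)) (-(deriv (deriv β) q)) q :=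
      (hD1d q hqIoo).neg
    have hwd : HasDerivAt (fun s => -(deriv β s) - (m + S * (Real.sqrt (s - a))⁻¹))
        (-(deriv (deriv β) q) - S * (-(1 / (2 * Real.sqrt (q - a))) / (Real.sqrt (q - a))^2)) q :=
      hfd.sub hgd
    have hloc : IsLocalMax (fun s => -(deriv β s) - (m + S * (Real.sqrt (s - a))⁻¹)) q :=
      hqmax.isLocalMax (Icc_mem_nhds hq1 hq2)
    have hderiv0 := hloc.deriv_eq_zero
    rw [hwd.deriv] at hderiv0
    have hk := hkey q hqIoo
    set r := Real.sqrt (q - a) with hr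
    have hr0 : r ≠ 0 := ne_of_gt hrpos
    have hr2 : r^2 = q - a := Real.sq_sqrt hqa.le
    -- -(D2 q) equals -k³/(6M) where k = S/r
    have hG'eq : S * (-(1 / (2 * r)) / r^2) = -((S * r⁻¹)^3) / (6*M) := by
      rw [mul_pow, inv_pow]
      field_simp
      linear_combination 2 * hS2
    have hD2q : -(deriv (deriv β) q) = -((S * r⁻¹)^3) / (6*M) := by
      rw [← hG'eq]
      linarith
    set k := S * r⁻¹ with hkdef
    have hk0 : 0 < k := mul_pos hS (inv_pos.mpr hrpos)
    have hfq : m + k < -(deriv β q) := by linarith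
    have hcube : (m + k)^3 < (-(deriv β q))^3 :=
      pow_lt_pow_left₀ hfq (by positivity) (by norm_num)
    have e1 : -(k^3) / (6*M) + (-(deriv β q))^3 / (3*M) ≤ m^3 / (3*M) := by
      rw [← hD2q] at *
      linarith [hk]
    have h6 : (0:ℝ) < 6*M := by positivity
    have e2 : (-(k^3) + 2*(-(deriv β q))^3) / (6*M) ≤ (2*m^3) / (6*M) := by
      have ha : (-(k^3) + 2*(-(deriv β q))^3) / (6*M)
          = -(k^3) / (6*M) + (-(deriv β q))^3 / (3*M) := by
        field_simp; ring
      have hb : (2*m^3) / (6*M) = m^3 / (3*M) := by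
        field_simp; ring
      rw [ha, hb]
      exact e1
    have e3 : -(k^3) + 2*(-(deriv β q))^3 ≤ 2*m^3 := (div_le_div_iff_of_pos_right h6).mp e2
    exact (cube_contra m k (-(deriv β q)) hm hk0 hcube e3).elim
  -- let a → x₁
  have hbar : ∀ t ∈ Ioo x₁ x₂, -(deriv β t) ≤ m + S * (Real.sqrt (t - x₁))⁻¹ := by
    intro t htm
    have htx : 0 < t - x₁ := by linarith [htm.1]
    have hc : ContinuousAt (fun a => m + S * (Real.sqrt (t - a))⁻¹) x₁ := by
      apply ContinuousAt.add continuousAt_const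
      apply ContinuousAt.mul continuousAt_const
      apply ContinuousAt.inv₀
      · exact (Real.continuous_sqrt.continuousAt).comp
          ((continuous_const.sub continuous_id).continuousAt)
      · exact ne_of_gt (Real.sqrt_pos.mpr htx)
    have h1 : Tendsto (fun a => m + S * (Real.sqrt (t - a))⁻¹) (nhdsWithin x₁ (Ioi x₁))
        (nhds (m + S * (Real.sqrt (t - x₁))⁻¹)) := by
      have := hc.tendsto
      exact this.mono_left nhdsWithin_le_nhds
    refine ge_of_tendsto h1 ?_
    filter_upwards [Ioo_mem_nhdsGT htm.1] with a ha
    exact hbar2 t htm a ha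
  -- conclude via monotonicity of φ
  intro x hxm
  obtain ⟨hx1, hx2⟩ := hxm
  have hφd : ∀ y ∈ Ioo x₁ x₂, HasDerivAt (fun t => β t + m*t + 2*S*Real.sqrt (t - x₁))
      (deriv β y + m*1 + 2*S*(1/(2*Real.sqrt (y - x₁)))) y := by
    intro y hy
    have h1 : HasDerivAt (fun t : ℝ => t - x₁) 1 y := (hasDerivAt_id y).sub_const x₁
    have h2 : HasDerivAt (fun t : ℝ => Real.sqrt (t - x₁)) (1/(2*Real.sqrt (y - x₁))) y := by
      have := h1.sqrt (ne_of_gt (by linarith [hy.1] : (0:ℝ) < y - x₁))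
      simpa using this
    exact ((hβd y hy).add ((hasDerivAt_id y).const_mul m)).add (h2.const_mul (2*S))
  have hφ : MonotoneOn (fun t => β t + m*t + 2*S*Real.sqrt (t - x₁)) (Icc x x₂) := by
    apply monotoneOn_of_deriv_nonneg (convex_Icc _ _)
    · apply ContinuousOn.add
      apply ContinuousOn.add
      · exact hreg.continuousOn.mono (fun s hs => ⟨lt_of_lt_of_le hx1 hs.1, hs.2⟩)
      · exact (continuous_const.mul continuous_id).continuousOn
      · exact (continuous_const.mul
          (Real.continuous_sqrt.comp (continuous_id.sub continuous_const))).continuousOn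
    · rw [interior_Icc]
      intro y hy
      exact (hφd y ⟨lt_trans hx1 hy.1, hy.2⟩).differentiableAt.differentiableWithinAt
    · rw [interior_Icc]
      intro y hy
      have hyIoo : y ∈ Ioo x₁ x₂ := ⟨lt_trans hx1 hy.1, hy.2⟩
      rw [(hφd y hyIoo).deriv]
      have hb := hbar y hyIoo
      have hsqpos : 0 < Real.sqrt (y - x₁) := Real.sqrt_pos.mpr (by linarith [hyIoo.1])
      have h2 : 2*S*(1/(2*Real.sqrt (y - x₁))) = S * (Real.sqrt (y - x₁))⁻¹ := by
        field_simp
      rw [h2]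
      linarith
  have hmem1 : x ∈ Icc x x₂ := ⟨le_rfl, hx2.le⟩
  have hmem2 : x₂ ∈ Icc x x₂ := ⟨hx2.le, le_rfl⟩
  have hmain := hφ hmem1 hmem2 hx2.le
  simp only at hmain
  rw [hend] at hmain
  have hsq1 : Real.sqrt (x₂ - x₁) * Real.sqrt (x₂ - x₁) = x₂ - x₁ :=
    Real.mul_self_sqrt (by linarith)
  have hsq2 : 0 ≤ Real.sqrt (x - x₁) := Real.sqrt_nonneg _
  have hsq3 : 0 ≤ Real.sqrt (x₂ - x₁) := Real.sqrt_nonneg _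
  nlinarith [mul_nonneg hm.le hsq3, mul_pos hm (sub_pos.mpr hx)]
end

section
/- Let β solve β''/(1+(β')²) = (x/2 - 1/x)·β' - β/2 on (a, x₀) with β'' > 0, a critical point x_m ∈ (a, x₀) where β'(x_m) = 0, and β < M on (a, x₀). If lim_{x→a} β'(x) = -∞ (i.e., β blows up at a), then a > 0. -/
open Set Real Filter

theorem stmt_14 (β : ℝ → ℝ) (a x₀ x_m M : ℝ) (ha : 0 ≤ a) (hax : a < x₀)
    (hreg : ContDiffOn ℝ 2 β (Ioo a x₀))
    (hode : ∀ x ∈ Ioo a x₀,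
      deriv (deriv β) x / (1 + (deriv β x) ^ 2) = (x / 2 - 1 / x) * deriv β x - β x / 2)
    (hconv : ∀ x ∈ Ioo a x₀, 0 < deriv (deriv β) x)
    (hx_m : x_m ∈ Ioo a x₀) (hcrit : deriv β x_m = 0)
    (hbd : ∀ x ∈ Ioo a x₀, β x < M)
    (hblow : Tendsto (deriv β) (nhdsWithin a (Ioi a)) atBot) :
    0 < a := by
  rcases ha.lt_or_eq with h | h
  · exact h
  exfalso
  subst h
  set b := deriv β with hb
  have hbcd : ContDiffOn ℝ 1 b (Ioo 0 x₀) := by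
    have := hreg.deriv_of_isOpen isOpen_Ioo (m := 1) (by norm_num)
    simpa using this
  have hbcont : ContinuousOn b (Ioo 0 x₀) := hbcd.continuousOn
  have hbdiff : ∀ t ∈ Ioo (0:ℝ) x₀, HasDerivAt b (deriv b t) t := by
    intro t ht
    exact ((hbcd.differentiableOn one_ne_zero).differentiableAt
      (isOpen_Ioo.mem_nhds ht)).hasDerivAt
  have hmono : StrictMonoOn b (Ioo 0 x₀) := by
    apply strictMonoOn_of_deriv_pos (convex_Ioo _ _) hbcont
    intro t ht
    rw [interior_Ioo] at ht
    exact hconv t ht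
  obtain ⟨hxm0, hxmx⟩ := hx_m
  set c := x_m / 2 with hc
  have hc0 : 0 < c := by positivity
  have hccm : c < x_m := by
    simp only [hc]; linarith
  have hcmem : c ∈ Ioo (0:ℝ) x₀ := ⟨hc0, by linarith⟩
  have hbc : b c < 0 := by
    have := hmono hcmem ⟨hxm0, hxmx⟩ hccm
    rwa [hcrit] at this
  set u : ℝ → ℝ := fun t => -(b t) with hu
  have huc : 0 < u c := by simp only [hu]; linarith
  have hsub : Ioc (0:ℝ) c ⊆ Ioo 0 x₀ := fun t ht => ⟨ht.1, lt_of_le_of_lt ht.2 hcmem.2⟩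
  have hupos : ∀ t ∈ Ioc (0:ℝ) c, u c ≤ u t := by
    intro t ht
    have : b t ≤ b c := hmono.monotoneOn (hsub ht) hcmem ht.2
    simp only [hu]; linarith
  set C := max M 0 / (2 * u c) with hC
  have hC0 : 0 ≤ C := by positivity
  set φ : ℝ → ℝ := fun t => Real.log (u t) - (1/2) * Real.log (1 + (u t)^2) with hφ
  set ψ : ℝ → ℝ := fun t => φ t - t^2/4 - C*t + Real.log t with hψ
  have hderiv : ∀ t ∈ Ioo (0:ℝ) c, HasDerivAt ψ (β t / (2 * u t) - C) t := by
    intro t ht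
    have htm : t ∈ Ioo (0:ℝ) x₀ := hsub ⟨ht.1, ht.2.le⟩
    have ht0 : (0:ℝ) < t := ht.1
    have hut : 0 < u t := lt_of_lt_of_le huc (hupos t ⟨ht.1, ht.2.le⟩)
    have hb' : HasDerivAt b (deriv b t) t := hbdiff t htm
    have hu' : HasDerivAt u (-(deriv b t)) t := hb'.neg
    have h1 : HasDerivAt (fun s => Real.log (u s)) (-(deriv b t) / u t) t :=
      hu'.log (ne_of_gt hut)
    have h2 : HasDerivAt (fun s => 1 + (u s)^2)
        ((2:ℕ) * u t ^ 1 * -(deriv b t)) t := (hu'.pow 2).const_add 1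
    have h1p : (0:ℝ) < 1 + (u t)^2 := by positivity
    have h3 : HasDerivAt (fun s => Real.log (1 + (u s)^2))
        (((2:ℕ) * u t ^ 1 * -(deriv b t)) / (1 + (u t)^2)) t := h2.log (ne_of_gt h1p)
    have h4 : HasDerivAt φ (-(deriv b t) / u t
        - (1/2) * (((2:ℕ) * u t ^ 1 * -(deriv b t)) / (1 + (u t)^2))) t :=
      h1.sub (h3.const_mul (1/2))
    have h5 : HasDerivAt (fun s : ℝ => s^2/4) ((2:ℕ) * t ^ 1 / 4) t :=
      (hasDerivAt_pow 2 t).div_const 4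
    have h6 : HasDerivAt (fun s : ℝ => C * s) (C * 1) t := (hasDerivAt_id t).const_mul C
    have h7 : HasDerivAt Real.log (1 / t) t := by
      simpa [one_div] using Real.hasDerivAt_log (ne_of_gt ht0)
    have h8 := ((h4.sub h5).sub h6).add h7
    have hode' := hode t htm
    have hne : (1 + (b t)^2) ≠ 0 := by positivity
    rw [div_eq_iff hne] at hode'
    have hbtu : b t = -(u t) := by simp [hu]
    refine h8.congr_deriv ?_
    symm
    rw [hode', hbtu]
    field_simp
    ring
  have hucont : ContinuousOn u (Ioc 0 c) := (hbcont.mono hsub).neg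
  have hune : ∀ t ∈ Ioc (0:ℝ) c, u t ≠ 0 :=
    fun t ht => ne_of_gt (lt_of_lt_of_le huc (hupos t ht))
  have hψcont : ContinuousOn ψ (Ioc 0 c) := by
    apply ContinuousOn.add
    · apply ContinuousOn.sub
      apply ContinuousOn.sub
      · apply ContinuousOn.sub
        · exact hucont.log hune
        · exact continuousOn_const.mul
            ((continuousOn_const.add (hucont.pow 2)).log
              (fun t ht => ne_of_gt (add_pos_of_pos_of_nonneg one_pos (sq_nonneg _))))
      · exact (continuousOn_id.pow 2).div_const 4
      · exact continuousOn_const.mul continuousOn_id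
    · exact Real.continuousOn_log.mono (fun t ht => ne_of_gt ht.1)
  have hanti : StrictAntiOn ψ (Ioc 0 c) := by
    apply strictAntiOn_of_deriv_neg (convex_Ioc _ _) hψcont
    intro t ht
    rw [interior_Ioc] at ht
    rw [(hderiv t ht).deriv]
    have hut : 0 < u t := lt_of_lt_of_le huc (hupos t ⟨ht.1, ht.2.le⟩)
    have hβt : β t < M := hbd t (hsub ⟨ht.1, ht.2.le⟩)
    have hkey : β t / (2 * u t) < C := by
      rcases le_or_gt M 0 with hM | hM
      · have h1 : β t / (2*u t) < 0 := div_neg_of_neg_of_pos (by linarith) (by positivity)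
        exact lt_of_lt_of_le h1 hC0
      · have hmax : max M 0 = M := max_eq_left hM.le
        calc β t / (2*u t) < M / (2*u t) := by gcongr
          _ ≤ M / (2*u c) := by
              apply div_le_div_of_nonneg_left hM.le (by positivity)
              have := hupos t ⟨ht.1, ht.2.le⟩
              linarith
          _ = C := by rw [hC, hmax]
    linarith
  have hφneg : ∀ t ∈ Ioc (0:ℝ) c, φ t < 0 := by
    intro t ht
    have hut : 0 < u t := lt_of_lt_of_le huc (hupos t ht)
    have h1 : Real.log (u t) = (1/2) * Real.log ((u t)^2) := by
      rw [Real.log_pow]; push_cast; ring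
    have h2 : Real.log ((u t)^2) < Real.log (1 + (u t)^2) :=
      Real.log_lt_log (by positivity) (by linarith)
    simp only [hφ]
    rw [h1]
    linarith
  clear_value u C φ ψ
  set x := min (c/2) (Real.exp (ψ c - 1)) with hx
  have hxe : x ≤ Real.exp (ψ c - 1) := min_le_right _ _
  have hx0 : 0 < x := lt_min (half_pos hc0) (Real.exp_pos _)
  have hxc : x ≤ c/2 := min_le_left _ _
  clear_value x
  have hxmem : x ∈ Ioc (0:ℝ) c := ⟨hx0, by linarith⟩
  have hcmem' : c ∈ Ioc (0:ℝ) c := ⟨hc0, le_rfl⟩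
  have hlt : ψ c < ψ x := hanti hxmem hcmem' (by linarith)
  have h1 : ψ x ≤ Real.log x := by
    have hφx := hφneg x hxmem
    have hCx : 0 ≤ C * x := mul_nonneg hC0 hx0.le
    have hx2 : 0 ≤ x^2/4 := by positivity
    have : φ x - x^2/4 - C*x ≤ 0 := by linarith
    simp only [hψ]
    linarith
  have h2 : Real.log x ≤ ψ c - 1 := by
    have := Real.log_le_log hx0 hxe
    rwa [Real.log_exp] at this
  linarith
end
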